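/- arXiv:math/0107002 — 10 statements merged into one kernel-verified Lean document; each statement's English description precedes it below -/
import Mathlib

section
/- Every extreme point of the spectral scale lies on an isotrace slice of height k/n: if x = (x₀, z) ∈ ℝ × ℂ is an extreme point of the spectral scale B of c, then there exists an integer k with 0 ≤ k ≤ n such that x₀ = k/n. -/
open Matrix
open scoped ComplexOrder

/-- The spectral scale of `c`: points `(τ a, τ (c * a))` with `τ` the normalized trace
and `a` ranging over operators with `0 ≤ a ≤ 1` in the positive-semidefinite order. -/
noncomputable def specScale (n : ℕ) (c : Matrix (Fin n) (Fin n) ℂ) : Set (ℝ × ℂ) :=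
  {p | ∃ a : Matrix (Fin n) (Fin n) ℂ, a.PosSemidef ∧ (1 - a).PosSemidef ∧
    p = ((a.trace / n).re, (c * a).trace / n)}

namespace SpecScaleAux

variable {n : ℕ} (U : Matrix.unitaryGroup (Fin n) ℂ)

/-- Conjugate a real diagonal by a unitary. -/
noncomputable def D (f : Fin n → ℝ) : Matrix (Fin n) (Fin n) ℂ :=
  (U : Matrix (Fin n) (Fin n) ℂ) * Matrix.diagonal (fun i => (f i : ℂ)) *
    star (U : Matrix (Fin n) (Fin n) ℂ)

lemma U_mul_star : (U : Matrix (Fin n) (Fin n) ℂ) * star (U : Matrix (Fin n) (Fin n) ℂ) = 1 :=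
  Matrix.mem_unitaryGroup_iff.mp U.2

lemma star_mul_U : star (U : Matrix (Fin n) (Fin n) ℂ) * (U : Matrix (Fin n) (Fin n) ℂ) = 1 :=
  Matrix.mem_unitaryGroup_iff'.mp U.2

lemma star_D_U (f : Fin n → ℝ) :
    star (U : Matrix (Fin n) (Fin n) ℂ) * D U f * (U : Matrix (Fin n) (Fin n) ℂ) =
      Matrix.diagonal (fun i => (f i : ℂ)) := by
  have h : star (U : Matrix (Fin n) (Fin n) ℂ) * D U f * (U : Matrix (Fin n) (Fin n) ℂ) =
      (star (U : Matrix (Fin n) (Fin n) ℂ) * (U : Matrix (Fin n) (Fin n) ℂ)) *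
        Matrix.diagonal (fun i => (f i : ℂ)) *
      (star (U : Matrix (Fin n) (Fin n) ℂ) * (U : Matrix (Fin n) (Fin n) ℂ)) := by
    simp only [D]; noncomm_ring
  rw [h, star_mul_U, one_mul, mul_one]

lemma trace_D (f : Fin n → ℝ) : (D U f).trace = ((∑ i, f i : ℝ) : ℂ) := by
  rw [D, Matrix.trace_mul_cycle, star_mul_U, one_mul, Matrix.trace_diagonal]
  push_cast; ring

lemma re_trace_D (f : Fin n → ℝ) : ((D U f).trace / (n : ℂ)).re = (∑ i, f i) / n := by
  rw [trace_D, show (((∑ i, f i : ℝ) : ℂ)) / (n : ℂ) = (((∑ i, f i) / n : ℝ) : ℂ) by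
    push_cast; ring]
  exact Complex.ofReal_re _

lemma D_psd (f : Fin n → ℝ) (hf : ∀ i, 0 ≤ f i) : (D U f).PosSemidef := by
  have h : (Matrix.diagonal (fun i => (f i : ℂ))).PosSemidef :=
    Matrix.posSemidef_diagonal_iff.mpr fun i => Complex.zero_le_real.mpr (hf i)
  simpa [D, Matrix.star_eq_conjTranspose] using
    h.mul_mul_conjTranspose_same (U : Matrix (Fin n) (Fin n) ℂ)

lemma D_psd_rev (f : Fin n → ℝ) (hf : (D U f).PosSemidef) : ∀ i, 0 ≤ f i := by
  intro i
  have h := hf.conjTranspose_mul_mul_same (U : Matrix (Fin n) (Fin n) ℂ)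
  rw [← Matrix.star_eq_conjTranspose, star_D_U] at h
  exact Complex.zero_le_real.mp (Matrix.posSemidef_diagonal_iff.mp h i)

lemma D_add (f g : Fin n → ℝ) : D U f + D U g = D U (f + g) := by
  simp only [D]
  rw [← add_mul, ← Matrix.mul_add, Matrix.diagonal_add]
  have h : (fun i => (f i : ℂ) + (g i : ℂ)) = fun i => ((f + g) i : ℂ) := by
    funext i; simp only [Pi.add_apply, Complex.ofReal_add]
  rw [h]

lemma D_one : D U (fun _ => 1) = 1 := by
  simp only [D, Complex.ofReal_one]
  rw [Matrix.diagonal_one, mul_one, U_mul_star]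

lemma one_sub_D (f : Fin n → ℝ) : 1 - D U f = D U (fun i => 1 - f i) := by
  have h := D_add U (fun i => 1 - f i) f
  have h2 : ((fun i => 1 - f i) + f) = (fun _ : Fin n => (1 : ℝ)) := by funext i; simp
  rw [h2, D_one] at h
  rw [← h]; abel

end SpecScaleAux

open SpecScaleAux in
/-- Every extreme point of the spectral scale lies on an isotrace slice of height `k/n`. -/
theorem extremePoint_isotrace (n : ℕ) (hn : 0 < n) (c : Matrix (Fin n) (Fin n) ℂ)
    (x : ℝ × ℂ) (hx : x ∈ Set.extremePoints ℝ (specScale n c)) :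
    ∃ k : ℕ, k ≤ n ∧ x.1 = (k : ℝ) / n := by
  obtain ⟨hxB, hext⟩ := hx
  obtain ⟨a, ha, h1a, hxeq⟩ := hxB
  have hH : a.IsHermitian := ha.1
  set U := hH.eigenvectorUnitary with hU
  set μ := hH.eigenvalues with hμ
  have haD : a = D U μ := by
    exact hH.spectral_theorem
  have hμ0 : ∀ i, 0 ≤ μ i := fun i => ha.eigenvalues_nonneg i
  have hμ1 : ∀ i, μ i ≤ 1 := by
    intro i
    have h1 : (1 : Matrix (Fin n) (Fin n) ℂ) - a = D U (fun j => 1 - μ j) := by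
      rw [haD, one_sub_D]
    have := D_psd_rev U _ (h1 ▸ h1a) i
    linarith
  have hx1 : x.1 = (∑ i, μ i) / n := by rw [hxeq]; exact haD ▸ re_trace_D U μ
  by_cases hall : ∀ i, μ i = 0 ∨ μ i = 1
  · refine ⟨(Finset.univ.filter (fun i => μ i = 1)).card, ?_, ?_⟩
    · exact (Finset.card_filter_le _ _).trans (by simp)
    · rw [hx1]
      congr 1
      rw [← Finset.sum_filter_add_sum_filter_not Finset.univ (fun i => μ i = 1)]
      rw [Finset.sum_congr rfl (fun i hi => (Finset.mem_filter.mp hi).2),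
        Finset.sum_congr rfl (fun i (hi : i ∈ _) => show μ i = 0 from
          (hall i).resolve_right (Finset.mem_filter.mp hi).2),
        Finset.sum_const, Finset.sum_const]
      simp
  · exfalso
    push_neg at hall
    obtain ⟨i, hi0, hi1⟩ := hall
    set ε := min (μ i) (1 - μ i) with hε
    have hεpos : 0 < ε := lt_min (lt_of_le_of_ne (hμ0 i) (Ne.symm hi0))
      (by have := lt_of_le_of_ne (hμ1 i) hi1; linarith)
    set δ : Fin n → ℝ := fun j => if j = i then ε else 0 with hδ
    have hδ0 : ∀ j, 0 ≤ δ j := by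
      intro j; by_cases h : j = i <;> simp [hδ, h, le_of_lt hεpos]
    have hδle : ∀ j, δ j ≤ min (μ j) (1 - μ j) := by
      intro j; by_cases h : j = i
      · subst h; simp [hδ]; exact ⟨min_le_left _ _, min_le_right _ _⟩
      · simp only [hδ, if_neg h]
        exact le_min (hμ0 j) (by linarith [hμ1 j])
    -- the perturbed points
    set y : ℝ × ℂ := (((D U (fun j => μ j + δ j)).trace / n).re,
      (c * D U (fun j => μ j + δ j)).trace / n) with hy_def
    set z : ℝ × ℂ := (((D U (fun j => μ j - δ j)).trace / n).re,
      (c * D U (fun j => μ j - δ j)).trace / n) with hz_def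
    have hy : y ∈ specScale n c := by
      refine ⟨D U (fun j => μ j + δ j), D_psd U _ (fun j => add_nonneg (hμ0 j) (hδ0 j)), ?_, rfl⟩
      rw [one_sub_D]
      exact D_psd U _ (fun j => by have := (hδle j).trans (min_le_right _ _); linarith)
    have hz : z ∈ specScale n c := by
      refine ⟨D U (fun j => μ j - δ j),
        D_psd U _ (fun j => by have := (hδle j).trans (min_le_left _ _); linarith), ?_, rfl⟩
      rw [one_sub_D]
      exact D_psd U _ (fun j => by have := hδ0 j; have := hμ1 j; linarith)
    have hDsum : D U (fun j => μ j + δ j) + D U (fun j => μ j - δ j) = D U μ + D U μ := by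
      rw [D_add, D_add]
      have h : ((fun j => μ j + δ j) + fun j => μ j - δ j) = μ + μ := by
        funext j; simp only [Pi.add_apply]; ring
      rw [h]
    have hmid : x ∈ openSegment ℝ y z := by
      refine ⟨1/2, 1/2, by norm_num, by norm_num, by norm_num, ?_⟩
      have htr : (c * D U (fun j => μ j + δ j)).trace + (c * D U (fun j => μ j - δ j)).trace
          = 2 * (c * a).trace := by
        rw [haD, ← Matrix.trace_add, ← Matrix.mul_add, hDsum, Matrix.mul_add, Matrix.trace_add]
        ring
      have hfst : (1/2 : ℝ) * y.1 + (1/2 : ℝ) * z.1 = x.1 := by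
        rw [hx1, hy_def, hz_def]
        simp only [re_trace_D]
        rw [Finset.sum_add_distrib, Finset.sum_sub_distrib]
        ring
      have hsnd : (1/2 : ℝ) • y.2 + (1/2 : ℝ) • z.2 = x.2 := by
        rw [hxeq]
        show (1/2 : ℝ) • ((c * D U (fun j => μ j + δ j)).trace / n)
          + (1/2 : ℝ) • ((c * D U (fun j => μ j - δ j)).trace / n) = (c * a).trace / n
        rw [Complex.real_smul, Complex.real_smul]
        push_cast
        linear_combination (1 / (2 * (n:ℂ))) * htr
      apply Prod.ext
      · simpa using hfst
      · simpa using hsnd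
    have hyx := hext hy hz hmid
    have h1 : y.1 = ((∑ j, μ j) + ε) / n := by
      rw [hy_def]
      simp only [re_trace_D]
      congr 1
      rw [Finset.sum_add_distrib]
      congr 1
      simp [hδ]
    have hne : (0:ℝ) < n := by exact_mod_cast hn
    have : ((∑ j, μ j) + ε) / n = (∑ j, μ j) / n := by
      rw [← h1, ← hx1]; exact congrArg Prod.fst hyx
    have : ε = 0 := by
      field_simp at this
      linarith
    linarith
end

section
/- For each integer k with 0 < k < n, the map π_k : ℂ → ℝ × ℂ given by π_k(λ) = (k/n, (k/n)·λ) is a bijection from the k-numerical range W_k(c) onto the isotrace slice I_{k/n} of the spectral scale; in particular I_{k/n} = {(k/n, (k/n)·λ) : λ ∈ W_k(c)}. -/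
open Matrix
open scoped ComplexOrder

/-- The `k`-numerical range of an `n x n` complex matrix `c`:
all averages `(1/k) * Sum <c x_i, x_i>` over orthonormal families. -/
noncomputable def kNumRange (n k : ℕ) (c : Matrix (Fin n) (Fin n) ℂ) : Set ℂ :=
  {w | ∃ x : Fin k → (Fin n → ℂ),
    (∀ i j, star (x i) ⬝ᵥ x j = if i = j then 1 else 0) ∧
    w = (1 / (k : ℂ)) * ∑ i, star (x i) ⬝ᵥ c.mulVec (x i)}

section Auxiliary

open Complex

variable {n : ℕ}

lemma exists_phase (p q : ℂ) : ∃ φ : ℝ, (Complex.exp (φ * I) * p + Complex.exp (-(φ * I)) * q).im = 0 := by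
  have him : ∀ φ : ℝ, (Complex.exp (φ * I) * p + Complex.exp (-(φ * I)) * q).im
      = (p.im + q.im) * Real.cos φ + (p.re - q.re) * Real.sin φ := by
    intro φ
    rw [show (-((φ:ℂ) * I)) = ((-φ:ℝ):ℂ) * I by push_cast; ring, Complex.exp_mul_I,
      Complex.exp_mul_I]
    push_cast
    simp [Complex.add_im, Complex.mul_im, Complex.mul_re, Complex.cos_ofReal_re, Complex.sin_ofReal_re, Real.cos_neg, Real.sin_neg]
    ring
  set A := p.im + q.im
  set B := p.re - q.re
  by_cases hB : B = 0
  · by_cases hA : A = 0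
    · exact ⟨0, by rw [him]; simp [hA, hB]⟩
    · exact ⟨Real.pi / 2, by rw [him]; simp [hB]⟩
  · refine ⟨Real.arctan (-A / B), ?_⟩
    rw [him, Real.sin_arctan, Real.cos_arctan]
    field_simp
    ring

lemma key2x2 (α β γ : ℂ) (s : ℝ) (hs : |s| ≤ 1) :
    ∃ a b : ℂ, (starRingEnd ℂ) a * a + (starRingEnd ℂ) b * b = 1 ∧
      ((starRingEnd ℂ) a * a - (starRingEnd ℂ) b * b) * α
        + ((starRingEnd ℂ) a * b) * β + ((starRingEnd ℂ) b * a) * γ = (s : ℂ) * α := by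
  by_cases hα : α = 0
  · exact ⟨1, 0, by simp, by simp [hα]⟩
  · obtain ⟨φ, hφ⟩ := exists_phase (β * (starRingEnd ℂ) α) (γ * (starRingEnd ℂ) α)
    set g : ℂ := Complex.exp (φ * I) * β + Complex.exp (-(φ * I)) * γ with hg
    have hgα : (g * (starRingEnd ℂ) α).im = 0 := by
      rw [hg, add_mul, mul_assoc, mul_assoc]; exact hφ
    set r : ℝ := (g * (starRingEnd ℂ) α).re with hr
    have hgr : g * (starRingEnd ℂ) α = (r : ℂ) := by
      apply Complex.ext <;> simp [hr, hgα]
    have hα2 : (starRingEnd ℂ) α * α = ((‖α‖ ^ 2 : ℝ) : ℂ) := by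
      rw [mul_comm, Complex.mul_conj]
      norm_cast
      rw [Complex.sq_norm]
    have habs : (0:ℝ) < ‖α‖ ^ 2 := by
      have := norm_pos_iff.mpr hα; positivity
    set K : ℝ := r / ‖α‖ ^ 2 with hK
    have hgeq : g = ((K : ℝ) : ℂ) * α := by
      have h2 : g * ((‖α‖ ^ 2 : ℝ) : ℂ) = (r : ℂ) * α := by
        rw [← hα2, ← mul_assoc, hgr]
      rw [hK]
      push_cast
      rw [div_mul_eq_mul_div, eq_div_iff (by exact_mod_cast habs.ne')]
      rw [mul_comm g _] at h2
      rw [← h2]; push_cast; ring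
    have hcont : ContinuousOn (fun θ : ℝ => Real.cos (2*θ) + Real.sin θ * Real.cos θ * K)
        (Set.Icc 0 (Real.pi/2)) := by fun_prop
    have h0 : (fun θ : ℝ => Real.cos (2*θ) + Real.sin θ * Real.cos θ * K) 0 = 1 := by simp
    have h1 : (fun θ : ℝ => Real.cos (2*θ) + Real.sin θ * Real.cos θ * K) (Real.pi/2) = -1 := by
      simp [mul_div_cancel₀, Real.cos_pi]
    have hmem : s ∈ Set.Icc ((fun θ : ℝ => Real.cos (2*θ) + Real.sin θ * Real.cos θ * K) (Real.pi/2))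
        ((fun θ : ℝ => Real.cos (2*θ) + Real.sin θ * Real.cos θ * K) 0) := by
      rw [h0, h1]
      exact Set.mem_Icc.mpr (abs_le.mp hs)
    obtain ⟨θ, _, hθ⟩ := intermediate_value_Icc' (by positivity : (0:ℝ) ≤ Real.pi/2) hcont hmem
    simp only at hθ
    have hθ' : (Real.cos θ ^ 2 - Real.sin θ ^ 2) + Real.sin θ * Real.cos θ * K = s := by
      rw [← Real.cos_two_mul']; exact hθ
    have hC : ((Real.cos θ : ℂ) ^ 2 - (Real.sin θ : ℂ) ^ 2)
        + (Real.sin θ : ℂ) * (Real.cos θ : ℂ) * (K : ℂ) = (s : ℂ) := by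
      exact_mod_cast congrArg Complex.ofReal hθ'
    have hconj : (starRingEnd ℂ) (Complex.exp (φ * I)) = Complex.exp (-(φ * I)) := by
      rw [← Complex.exp_conj]; congr 1; simp
    have hee : Complex.exp (-(↑φ * I)) * Complex.exp (↑φ * I) = 1 := by
      rw [← Complex.exp_add]; simp
    have hgeq2 : Complex.exp (↑φ * I) * β + Complex.exp (-(↑φ * I)) * γ = (K:ℂ) * α := by
      rw [← hg]; exact hgeq
    refine ⟨(Real.cos θ : ℂ), Complex.exp (φ * I) * (Real.sin θ : ℂ), ?_, ?_⟩
    · rw [_root_.map_mul, hconj, Complex.conj_ofReal, Complex.conj_ofReal]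
      have : (Real.cos θ:ℂ) * (Real.cos θ:ℂ)
          + Complex.exp (-(↑φ * I)) * ↑(Real.sin θ) * (Complex.exp (↑φ * I) * ↑(Real.sin θ)) = 1 := by
        have h4 : Complex.exp (-(↑φ * I)) * ↑(Real.sin θ) * (Complex.exp (↑φ * I) * ↑(Real.sin θ))
            = (Complex.exp (-(↑φ * I)) * Complex.exp (↑φ * I)) * (↑(Real.sin θ) * ↑(Real.sin θ)) := by ring
        rw [h4, hee, one_mul]
        norm_cast
        nlinarith [Real.sin_sq_add_cos_sq θ]
      exact this
    · rw [_root_.map_mul, hconj, Complex.conj_ofReal, Complex.conj_ofReal]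
      linear_combination α * hC + ((Real.sin θ:ℂ) * (Real.cos θ:ℂ)) * hgeq2
        - ((Real.sin θ:ℂ) * (Real.sin θ:ℂ) * α) * hee

lemma dot_expand_left (a b : ℂ) (v₁ v₂ x : Fin n → ℂ) :
    star (a • v₁ + b • v₂) ⬝ᵥ x
      = (starRingEnd ℂ) a * (star v₁ ⬝ᵥ x) + (starRingEnd ℂ) b * (star v₂ ⬝ᵥ x) := by
  rw [star_add, star_smul, star_smul, add_dotProduct, smul_dotProduct, smul_dotProduct,
    smul_eq_mul, smul_eq_mul, starRingEnd_apply, starRingEnd_apply]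

lemma dot_expand_right (a b : ℂ) (v₁ v₂ x : Fin n → ℂ) :
    star x ⬝ᵥ (a • v₁ + b • v₂)
      = a * (star x ⬝ᵥ v₁) + b * (star x ⬝ᵥ v₂) := by
  rw [dotProduct_add, dotProduct_smul, dotProduct_smul, smul_eq_mul, smul_eq_mul]

lemma w_expand (c : Matrix (Fin n) (Fin n) ℂ) (a b : ℂ) (v₁ v₂ : Fin n → ℂ) :
    star (a • v₁ + b • v₂) ⬝ᵥ c *ᵥ (a • v₁ + b • v₂)
      = (starRingEnd ℂ) a * a * (star v₁ ⬝ᵥ c *ᵥ v₁)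
        + (starRingEnd ℂ) a * b * (star v₁ ⬝ᵥ c *ᵥ v₂)
        + (starRingEnd ℂ) b * a * (star v₂ ⬝ᵥ c *ᵥ v₁)
        + (starRingEnd ℂ) b * b * (star v₂ ⬝ᵥ c *ᵥ v₂) := by
  rw [mulVec_add, mulVec_smul, mulVec_smul, dot_expand_right, dot_expand_left, dot_expand_left]
  ring

/-- Rotating an orthonormal family inside the span of two of its members. -/
lemma update_orthonormal {m : ℕ} (u : Fin m → Fin n → ℂ)
    (hu : ∀ i j, star (u i) ⬝ᵥ u j = if i = j then 1 else 0)
    (p q : Fin m) (hpq : p ≠ q) (a b : ℂ)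
    (hab : (starRingEnd ℂ) a * a + (starRingEnd ℂ) b * b = 1) :
    ∀ i j, star ((Function.update (Function.update u p (a • u p + b • u q)) q
          ((-(starRingEnd ℂ) b) • u p + ((starRingEnd ℂ) a) • u q)) i) ⬝ᵥ
        ((Function.update (Function.update u p (a • u p + b • u q)) q
          ((-(starRingEnd ℂ) b) • u p + ((starRingEnd ℂ) a) • u q)) j)
      = if i = j then 1 else 0 := by
  set y := a • u p + b • u q with hy
  set z := (-(starRingEnd ℂ) b) • u p + ((starRingEnd ℂ) a) • u q with hz
  have happ : ∀ i, (Function.update (Function.update u p y) q z) i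
      = if i = q then z else if i = p then y else u i := by
    intro i
    by_cases hiq : i = q
    · subst hiq; simp
    · by_cases hip : i = p
      · subst hip; simp [Function.update_of_ne hiq, hiq]
      · simp [Function.update_of_ne hiq, Function.update_of_ne hip, hiq, hip]
  -- basic inner products
  have hpp := hu p p; have hqq := hu q q; have hpq' := hu p q; have hqp := hu q p
  rw [if_pos rfl] at hpp hqq
  rw [if_neg hpq] at hpq'
  rw [if_neg (Ne.symm hpq)] at hqp
  have hyy : star y ⬝ᵥ y = 1 := by
    rw [hy, dot_expand_left, dot_expand_right, dot_expand_right, hpp, hqq, hpq', hqp]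
    linear_combination hab
  have hzz : star z ⬝ᵥ z = 1 := by
    rw [hz, dot_expand_left, dot_expand_right, dot_expand_right, hpp, hqq, hpq', hqp]
    simp only [map_neg, Complex.conj_conj]
    linear_combination hab
  have hyz : star y ⬝ᵥ z = 0 := by
    rw [hy, hz, dot_expand_left, dot_expand_right, dot_expand_right, hpp, hqq, hpq', hqp]
    ring
  have hzy : star z ⬝ᵥ y = 0 := by
    rw [hz, hy, dot_expand_left, dot_expand_right, dot_expand_right, hpp, hqq, hpq', hqp]
    simp only [map_neg, Complex.conj_conj]
    ring
  have hyr : ∀ r, r ≠ p → r ≠ q → star y ⬝ᵥ u r = 0 := by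
    intro r hrp hrq
    rw [hy, dot_expand_left, hu p r, hu q r, if_neg (fun h => hrp h.symm),
      if_neg (fun h => hrq h.symm)]
    ring
  have hry : ∀ r, r ≠ p → r ≠ q → star (u r) ⬝ᵥ y = 0 := by
    intro r hrp hrq
    rw [hy, dot_expand_right, hu r p, hu r q, if_neg hrp, if_neg hrq]
    ring
  have hzr : ∀ r, r ≠ p → r ≠ q → star z ⬝ᵥ u r = 0 := by
    intro r hrp hrq
    rw [hz, dot_expand_left, hu p r, hu q r, if_neg (fun h => hrp h.symm),
      if_neg (fun h => hrq h.symm)]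
    ring
  have hrz : ∀ r, r ≠ p → r ≠ q → star (u r) ⬝ᵥ z = 0 := by
    intro r hrp hrq
    rw [hz, dot_expand_right, hu r p, hu r q, if_neg hrp, if_neg hrq]
    ring
  intro i j
  rw [happ i, happ j]
  by_cases hiq : i = q <;> by_cases hjq : j = q
  · rw [if_pos hiq, if_pos hjq, hzz, if_pos (hiq.trans hjq.symm)]
  · rw [if_pos hiq, if_neg hjq, if_neg (fun h : i = j => hjq (h.symm.trans hiq))]
    by_cases hjp : j = p
    · rw [if_pos hjp, hzy]
    · rw [if_neg hjp, hzr j hjp hjq]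
  · rw [if_neg hiq, if_pos hjq, if_neg (fun h : i = j => hiq (h.trans hjq))]
    by_cases hip : i = p
    · rw [if_pos hip, hyz]
    · rw [if_neg hip, hrz i hip hiq]
  · rw [if_neg hiq, if_neg hjq]
    by_cases hip : i = p <;> by_cases hjp : j = p
    · rw [if_pos hip, if_pos hjp, hyy, if_pos (hip.trans hjp.symm)]
    · rw [if_pos hip, if_neg hjp, hyr j hjp hjq,
        if_neg (fun h : i = j => hjp (h.symm.trans hip))]
    · rw [if_neg hip, if_pos hjp, hry i hip hiq,
        if_neg (fun h : i = j => hip (h.trans hjp))]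
    · rw [if_neg hip, if_neg hjp, hu i j]

/-- The local 2-dimensional move: replace weights `(μ₁, μ₂)` (both strictly fractional)
on a pair of vectors by weights `(ν₁, ν₂)` with `ν₂ ∈ {0,1}`, on a rotated pair,
preserving the weighted sum of quadratic-form values. -/
lemma local_move (c : Matrix (Fin n) (Fin n) ℂ) (v₁ v₂ : Fin n → ℂ) (μ₁ μ₂ : ℝ)
    (h10 : 0 < μ₁) (h11 : μ₁ < 1) (h20 : 0 < μ₂) (h21 : μ₂ < 1) :
    ∃ (a b : ℂ) (ν₁ ν₂ : ℝ),
      (starRingEnd ℂ) a * a + (starRingEnd ℂ) b * b = 1 ∧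
      0 ≤ ν₁ ∧ ν₁ ≤ 1 ∧ (ν₂ = 0 ∨ ν₂ = 1) ∧ ν₁ + ν₂ = μ₁ + μ₂ ∧
      (ν₁ : ℂ) * (star (a • v₁ + b • v₂) ⬝ᵥ c *ᵥ (a • v₁ + b • v₂))
        + (ν₂ : ℂ) * (star ((-(starRingEnd ℂ) b) • v₁ + ((starRingEnd ℂ) a) • v₂) ⬝ᵥ
            c *ᵥ ((-(starRingEnd ℂ) b) • v₁ + ((starRingEnd ℂ) a) • v₂))
        = (μ₁ : ℂ) * (star v₁ ⬝ᵥ c *ᵥ v₁) + (μ₂ : ℂ) * (star v₂ ⬝ᵥ c *ᵥ v₂) := by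
  set w₁ := star v₁ ⬝ᵥ c *ᵥ v₁
  set w₂ := star v₂ ⬝ᵥ c *ᵥ v₂
  set β := star v₁ ⬝ᵥ c *ᵥ v₂
  set γ := star v₂ ⬝ᵥ c *ᵥ v₁
  -- choose the extreme weight ν₂
  obtain ⟨ν₂, hν₂01, hν₁0, hν₁1, hd'ne, hd'⟩ :
      ∃ ν₂ : ℝ, (ν₂ = 0 ∨ ν₂ = 1) ∧ 0 ≤ μ₁ + μ₂ - ν₂ ∧ μ₁ + μ₂ - ν₂ ≤ 1 ∧
        (μ₁ + μ₂ - 2*ν₂ ≠ 0) ∧ |μ₁ - μ₂| ≤ |μ₁ + μ₂ - 2*ν₂| := by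
    by_cases ht : μ₁ + μ₂ ≤ 1
    · refine ⟨0, Or.inl rfl, by linarith, by linarith, ne_of_gt (by linarith), ?_⟩
      rw [abs_of_pos (by linarith : (0:ℝ) < μ₁ + μ₂ - 2*0), abs_le]
      constructor <;> linarith
    · refine ⟨1, Or.inr rfl, by linarith, by linarith, ne_of_lt (by linarith), ?_⟩
      rw [abs_of_neg (by linarith : μ₁ + μ₂ - 2*1 < 0), abs_le]
      constructor <;> linarith
  set d' : ℝ := μ₁ + μ₂ - 2*ν₂ with hd'def
  set s : ℝ := (μ₁ - μ₂) / d' with hsdef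
  have hs : |s| ≤ 1 := by
    rw [hsdef, abs_div, div_le_one (abs_pos.mpr hd'ne)]
    exact hd'
  obtain ⟨a, b, hab, heq⟩ := key2x2 ((w₁ - w₂)/2) β γ s hs
  refine ⟨a, b, μ₁ + μ₂ - ν₂, ν₂, hab, hν₁0, hν₁1, hν₂01, by ring, ?_⟩
  have hd'0 : ((d' : ℝ) : ℂ) ≠ 0 := by exact_mod_cast hd'ne
  have hsd : (s : ℂ) * ((μ₁:ℂ) + (μ₂:ℂ) - 2*(ν₂:ℂ)) = (μ₁ : ℂ) - (μ₂ : ℂ) := by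
    have : ((d' : ℝ) : ℂ) = (μ₁:ℂ) + (μ₂:ℂ) - 2*(ν₂:ℂ) := by rw [hd'def]; push_cast; ring
    rw [← this, hsdef]
    push_cast
    rw [div_mul_cancel₀]
    rw [hd'def] at hd'0
    push_cast at hd'0 ⊢
    convert hd'0 using 2
  rw [w_expand, w_expand]
  simp only [map_neg, Complex.conj_conj]
  push_cast
  linear_combination ((μ₁:ℂ) + (μ₂:ℂ) - 2*(ν₂:ℂ)) * heq
    + (((μ₁:ℂ)+(μ₂:ℂ))/2 * (w₁ + w₂)) * hab + ((w₁ - w₂)/2) * hsd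

/-- If all weights but one are 0/1 and the total is an integer, the last is 0/1 too. -/
lemma last_weight_dichotomy {m k : ℕ} (μ : Fin m → ℝ) (i₀ : Fin m)
    (h01 : ∀ i, i ≠ i₀ → μ i = 0 ∨ μ i = 1)
    (h0 : ∀ i, 0 ≤ μ i) (h1 : ∀ i, μ i ≤ 1) (hsum : ∑ i, μ i = k) :
    μ i₀ = 0 ∨ μ i₀ = 1 := by
  classical
  set S : Finset (Fin m) := (Finset.univ.erase i₀).filter (fun i => μ i = 1) with hS
  have hsplit : ∑ i ∈ Finset.univ.erase i₀, μ i = S.card := by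
    rw [← Finset.sum_filter_add_sum_filter_not (Finset.univ.erase i₀) (fun i => μ i = 1)]
    have h1' : ∑ i ∈ S, μ i = (S.card : ℝ) := by
      rw [Finset.sum_congr rfl (fun i hi => (Finset.mem_filter.mp hi).2)]
      simp
      rfl
    have h2' : ∑ i ∈ (Finset.univ.erase i₀).filter (fun i => ¬ μ i = 1), μ i = 0 := by
      apply Finset.sum_eq_zero
      intro i hi
      rcases Finset.mem_filter.mp hi with ⟨hi', hne⟩
      rcases h01 i (Finset.ne_of_mem_erase hi') with h | h
      · exact h
      · exact absurd h hne
    rw [h1', h2', add_zero]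
  have htot : μ i₀ + (S.card : ℝ) = k := by
    rw [← hsplit, ← hsum, ← Finset.sum_erase_add _ _ (Finset.mem_univ i₀)]
    ring
  by_cases hc : k ≤ S.card
  · left
    have : μ i₀ ≤ 0 := by
      have : (k:ℝ) ≤ S.card := by exact_mod_cast hc
      linarith
    linarith [h0 i₀, this]
  · right
    have : (S.card : ℝ) + 1 ≤ k := by exact_mod_cast Nat.succ_le_of_lt (Nat.lt_of_not_le hc)
    linarith [h1 i₀]

/-- Main induction: any `[0,1]`-weighted combination (total weight `k`) of an orthonormal
basis's quadratic-form values is realized by an orthonormal `k`-family. -/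
lemma exists_orthonormal_family (n k : ℕ) (c : Matrix (Fin n) (Fin n) ℂ) :
    ∀ (F : ℕ) (u : Fin n → Fin n → ℂ),
      (∀ i j, star (u i) ⬝ᵥ u j = if i = j then 1 else 0) →
      ∀ μ : Fin n → ℝ, (∀ i, 0 ≤ μ i) → (∀ i, μ i ≤ 1) → (∑ i, μ i = k) →
      (Finset.univ.filter (fun i => μ i ≠ 0 ∧ μ i ≠ 1)).card ≤ F →
      ∃ x : Fin k → Fin n → ℂ,
        (∀ i j, star (x i) ⬝ᵥ x j = if i = j then 1 else 0) ∧
        ∑ j, star (x j) ⬝ᵥ c *ᵥ x j = ∑ i, (μ i : ℂ) * (star (u i) ⬝ᵥ c *ᵥ u i) := by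
  intro F
  induction F with
  | zero =>
    intro u hu μ h0 h1 hsum hcard
    have hdich : ∀ i, μ i = 0 ∨ μ i = 1 := by
      intro i
      by_contra h
      push_neg at h
      have : i ∈ Finset.univ.filter (fun i => μ i ≠ 0 ∧ μ i ≠ 1) := by
        simp [h.1, h.2]
      have := Finset.card_pos.mpr ⟨i, this⟩
      omega
    set S : Finset (Fin n) := Finset.univ.filter (fun i => μ i = 1) with hSdef
    have hScard : S.card = k := by
      have : ∑ i, μ i = (S.card : ℝ) := by
        rw [← Finset.sum_filter_add_sum_filter_not Finset.univ (fun i => μ i = 1)]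
        have h1' : ∑ i ∈ S, μ i = (S.card : ℝ) := by
          rw [Finset.sum_congr rfl (fun i hi => (Finset.mem_filter.mp hi).2)]
          simp
          rfl
        have h2' : ∑ i ∈ Finset.univ.filter (fun i => ¬ μ i = 1), μ i = 0 := by
          apply Finset.sum_eq_zero
          intro i hi
          rcases hdich i with h | h
          · exact h
          · exact absurd h (Finset.mem_filter.mp hi).2
        rw [h1', h2', add_zero]
      rw [hsum] at this
      exact_mod_cast this.symm
    set e : Fin k ≃o S := S.orderIsoOfFin hScard
    refine ⟨fun j => u (e j), ?_, ?_⟩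
    · intro i j
      rw [hu]
      congr 1
      simp only [eq_iff_iff]
      constructor
      · intro h
        exact e.injective (Subtype.ext h)
      · intro h; rw [h]
    · have hrhs : ∑ i, (μ i : ℂ) * (star (u i) ⬝ᵥ c *ᵥ u i)
          = ∑ i ∈ S, (star (u i) ⬝ᵥ c *ᵥ u i) := by
        rw [← Finset.sum_filter_add_sum_filter_not Finset.univ (fun i => μ i = 1)]
        have h2' : ∑ i ∈ Finset.univ.filter (fun i => ¬ μ i = 1),
            (μ i : ℂ) * (star (u i) ⬝ᵥ c *ᵥ u i) = 0 := by
          apply Finset.sum_eq_zero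
          intro i hi
          rcases hdich i with h | h
          · rw [h]; simp
          · exact absurd h (Finset.mem_filter.mp hi).2
        rw [h2', add_zero]
        apply Finset.sum_congr rfl
        intro i hi
        rw [(Finset.mem_filter.mp hi).2]
        simp
      rw [hrhs]
      rw [← Finset.sum_coe_sort S (fun i => star (u i) ⬝ᵥ c *ᵥ u i)]
      exact Equiv.sum_comp e.toEquiv (fun i : S => star (u i) ⬝ᵥ c *ᵥ u (i : Fin n))
  | succ F ih =>
    intro u hu μ h0 h1 hsum hcard
    by_cases hle : (Finset.univ.filter (fun i => μ i ≠ 0 ∧ μ i ≠ 1)).card ≤ F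
    · exact ih u hu μ h0 h1 hsum hle
    -- there are at least two fractional indices
    have hne : (Finset.univ.filter (fun i => μ i ≠ 0 ∧ μ i ≠ 1)).Nonempty := by
      rw [← Finset.card_pos]; omega
    obtain ⟨p, hp⟩ := hne
    have hpfrac := (Finset.mem_filter.mp hp).2
    obtain ⟨q, hqp, hqfrac⟩ : ∃ q, q ≠ p ∧ (μ q ≠ 0 ∧ μ q ≠ 1) := by
      by_contra h
      push_neg at h
      have : μ p = 0 ∨ μ p = 1 := by
        apply last_weight_dichotomy μ p _ h0 h1 hsum
        intro i hi
        by_contra hcon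
        push_neg at hcon
        exact absurd (h i hi hcon.1) hcon.2
      rcases this with h' | h'
      · exact hpfrac.1 h'
      · exact hpfrac.2 h'
    have hpq : p ≠ q := Ne.symm hqp
    obtain ⟨a, b, ν₁, ν₂, hab, hν₁0, hν₁1, hν₂01, hνsum, hval⟩ :=
      local_move c (u p) (u q) (μ p) (μ q)
        (lt_of_le_of_ne (h0 p) (Ne.symm hpfrac.1)) (lt_of_le_of_ne (h1 p) hpfrac.2)
        (lt_of_le_of_ne (h0 q) (Ne.symm hqfrac.1)) (lt_of_le_of_ne (h1 q) hqfrac.2)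
    set y := a • u p + b • u q with hy
    set z := (-(starRingEnd ℂ) b) • u p + ((starRingEnd ℂ) a) • u q with hz
    set u' := Function.update (Function.update u p y) q z with hu'def
    set μ' := Function.update (Function.update μ p ν₁) q ν₂ with hμ'def
    have hu' : ∀ i j, star (u' i) ⬝ᵥ u' j = if i = j then 1 else 0 :=
      update_orthonormal u hu p q hpq a b hab
    have hμ'q : μ' q = ν₂ := by rw [hμ'def]; simp
    have hμ'p : μ' p = ν₁ := by
      rw [hμ'def, Function.update_of_ne hpq, Function.update_self]
    have hμ'r : ∀ r, r ≠ p → r ≠ q → μ' r = μ r := by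
      intro r hrp hrq
      rw [hμ'def, Function.update_of_ne hrq, Function.update_of_ne hrp]
    have hu'q : u' q = z := by rw [hu'def]; simp
    have hu'p : u' p = y := by
      rw [hu'def, Function.update_of_ne hpq, Function.update_self]
    have hu'r : ∀ r, r ≠ p → r ≠ q → u' r = u r := by
      intro r hrp hrq
      rw [hu'def, Function.update_of_ne hrq, Function.update_of_ne hrp]
    -- sum splitting helper
    have hmemp : p ∈ Finset.univ.erase q := Finset.mem_erase.mpr ⟨hpq, Finset.mem_univ p⟩
    have hsplit : ∀ (g : Fin n → ℂ),
        ∑ i, g i = g p + g q + ∑ i ∈ (Finset.univ.erase q).erase p, g i := by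
      intro g
      rw [← Finset.sum_erase_add Finset.univ g (Finset.mem_univ q),
        ← Finset.sum_erase_add (Finset.univ.erase q) g hmemp]
      ring
    have hsplitR : ∀ (g : Fin n → ℝ),
        ∑ i, g i = g p + g q + ∑ i ∈ (Finset.univ.erase q).erase p, g i := by
      intro g
      rw [← Finset.sum_erase_add Finset.univ g (Finset.mem_univ q),
        ← Finset.sum_erase_add (Finset.univ.erase q) g hmemp]
      ring
    have h0' : ∀ i, 0 ≤ μ' i := by
      intro i
      by_cases hiq : i = q
      · rw [hiq, hμ'q]; rcases hν₂01 with h | h <;> rw [h] <;> norm_num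
      · by_cases hip : i = p
        · rw [hip, hμ'p]; exact hν₁0
        · rw [hμ'r i hip hiq]; exact h0 i
    have h1' : ∀ i, μ' i ≤ 1 := by
      intro i
      by_cases hiq : i = q
      · rw [hiq, hμ'q]; rcases hν₂01 with h | h <;> rw [h] <;> norm_num
      · by_cases hip : i = p
        · rw [hip, hμ'p]; exact hν₁1
        · rw [hμ'r i hip hiq]; exact h1 i
    have hsum' : ∑ i, μ' i = k := by
      rw [hsplitR μ'] at *
      rw [hsplitR μ] at hsum
      have heq : ∑ i ∈ (Finset.univ.erase q).erase p, μ' i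
          = ∑ i ∈ (Finset.univ.erase q).erase p, μ i := by
        apply Finset.sum_congr rfl
        intro i hi
        rcases Finset.mem_erase.mp hi with ⟨hip, hi'⟩
        exact hμ'r i hip (Finset.ne_of_mem_erase hi')
      rw [hμ'p, hμ'q, heq]
      linarith
    have hcard' : (Finset.univ.filter (fun i => μ' i ≠ 0 ∧ μ' i ≠ 1)).card ≤ F := by
      have hsub : Finset.univ.filter (fun i => μ' i ≠ 0 ∧ μ' i ≠ 1)
          ⊆ (Finset.univ.filter (fun i => μ i ≠ 0 ∧ μ i ≠ 1)).erase q := by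
        intro i hi
        have hifrac := (Finset.mem_filter.mp hi).2
        have hiq : i ≠ q := by
          intro h
          rw [h, hμ'q] at hifrac
          rcases hν₂01 with h' | h'
          · exact hifrac.1 h'
          · exact hifrac.2 h'
        apply Finset.mem_erase.mpr
        refine ⟨hiq, ?_⟩
        by_cases hip : i = p
        · rw [hip]; exact hp
        · rw [hμ'r i hip hiq] at hifrac
          simp [hifrac.1, hifrac.2]
      have := Finset.card_le_card hsub
      have hqmem : q ∈ Finset.univ.filter (fun i => μ i ≠ 0 ∧ μ i ≠ 1) := by
        simp [hqfrac.1, hqfrac.2]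
      rw [Finset.card_erase_of_mem hqmem] at this
      omega
    obtain ⟨x, hx, hxsum⟩ := ih u' hu' μ' h0' h1' hsum' hcard'
    refine ⟨x, hx, ?_⟩
    rw [hxsum]
    rw [hsplit (fun i => (μ' i : ℂ) * (star (u' i) ⬝ᵥ c *ᵥ u' i)),
      hsplit (fun i => (μ i : ℂ) * (star (u i) ⬝ᵥ c *ᵥ u i))]
    have heq : ∑ i ∈ (Finset.univ.erase q).erase p,
          (μ' i : ℂ) * (star (u' i) ⬝ᵥ c *ᵥ u' i)
        = ∑ i ∈ (Finset.univ.erase q).erase p,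
          (μ i : ℂ) * (star (u i) ⬝ᵥ c *ᵥ u i) := by
      apply Finset.sum_congr rfl
      intro i hi
      rcases Finset.mem_erase.mp hi with ⟨hip, hi'⟩
      rw [hμ'r i hip (Finset.ne_of_mem_erase hi'), hu'r i hip (Finset.ne_of_mem_erase hi')]
    rw [heq]
    congr 1
    simp only [hμ'p, hμ'q, hu'p, hu'q, hy, hz]
    exact hval

lemma spec_decomp (n : ℕ) (c a : Matrix (Fin n) (Fin n) ℂ)
    (hA : a.PosSemidef) (h1A : (1 - a).PosSemidef) :
    ∃ (u : Fin n → Fin n → ℂ) (μ : Fin n → ℝ),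
      (∀ i j, star (u i) ⬝ᵥ u j = if i = j then 1 else 0) ∧
      (∀ i, 0 ≤ μ i) ∧ (∀ i, μ i ≤ 1) ∧
      a.trace = ((∑ i, μ i : ℝ) : ℂ) ∧
      (c * a).trace = ∑ i, (μ i : ℂ) * (star (u i) ⬝ᵥ c *ᵥ u i) := by
  have hH : a.IsHermitian := hA.1
  set u : Fin n → Fin n → ℂ := fun i => ⇑(hH.eigenvectorBasis i) with hu_def
  set μ : Fin n → ℝ := hH.eigenvalues with hμ_def
  have horth : ∀ i j, star (u i) ⬝ᵥ u j = if i = j then 1 else 0 := by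
    intro i j
    have := orthonormal_iff_ite.mp hH.eigenvectorBasis.orthonormal i j
    rw [EuclideanSpace.inner_eq_star_dotProduct] at this
    rw [dotProduct_comm] at this
    exact this
  have hmv : ∀ i, a *ᵥ u i = (μ i : ℂ) • u i := by
    intro i
    have := hH.mulVec_eigenvectorBasis i
    rw [this]
    ext p
    simp only [Pi.smul_apply, Complex.real_smul]
    norm_num
    rfl
  have huu : ∀ i, star (u i) ⬝ᵥ u i = 1 := by
    intro i; rw [horth i i, if_pos rfl]
  refine ⟨u, μ, horth, fun i => hA.eigenvalues_nonneg i, ?_, ?_, ?_⟩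
  · intro i
    have hpos := h1A.dotProduct_mulVec_nonneg (u i)
    rw [sub_mulVec, one_mulVec, dotProduct_sub, hmv i, dotProduct_smul, huu i] at hpos
    have : (0:ℂ) ≤ ((1 - μ i : ℝ) : ℂ) := by
      convert hpos using 1
      push_cast
      simp [smul_eq_mul]
    rw [Complex.zero_le_real] at this
    linarith
  · -- trace
    conv_lhs => rw [hH.spectral_theorem, Unitary.conjStarAlgAut_apply]
    rw [trace_mul_cycle]
    rw [show (star (hH.eigenvectorUnitary : Matrix (Fin n) (Fin n) ℂ))
        * (hH.eigenvectorUnitary : Matrix (Fin n) (Fin n) ℂ) = 1 from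
      Unitary.coe_star_mul_self _]
    rw [one_mul, trace_diagonal]
    push_cast
    rfl
  · conv_lhs => rw [hH.spectral_theorem, Unitary.conjStarAlgAut_apply]
    rw [show c * ((hH.eigenvectorUnitary : Matrix (Fin n) (Fin n) ℂ)
          * diagonal (RCLike.ofReal ∘ hH.eigenvalues)
          * (star (hH.eigenvectorUnitary : Matrix (Fin n) (Fin n) ℂ)))
        = (c * (hH.eigenvectorUnitary : Matrix (Fin n) (Fin n) ℂ)
          * diagonal (RCLike.ofReal ∘ hH.eigenvalues))
          * (star (hH.eigenvectorUnitary : Matrix (Fin n) (Fin n) ℂ)) by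
      rw [Matrix.mul_assoc, Matrix.mul_assoc, Matrix.mul_assoc]]
    rw [trace_mul_cycle]
    simp only [Matrix.trace, Matrix.diag]
    apply Finset.sum_congr rfl
    intro i _
    rw [Matrix.mul_apply]
    have key : ∀ j, (star (hH.eigenvectorUnitary : Matrix (Fin n) (Fin n) ℂ)
        * (c * (hH.eigenvectorUnitary : Matrix (Fin n) (Fin n) ℂ))) i j
        * diagonal (RCLike.ofReal ∘ hH.eigenvalues) j i
        = if j = i then (μ i : ℂ) * (star (u i) ⬝ᵥ c *ᵥ u i) else 0 := by
      intro j
      rw [diagonal_apply]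
      by_cases hji : j = i
      · subst hji
        rw [if_pos rfl, if_pos rfl]
        have hdiag : (star (hH.eigenvectorUnitary : Matrix (Fin n) (Fin n) ℂ)
            * (c * (hH.eigenvectorUnitary : Matrix (Fin n) (Fin n) ℂ))) j j
            = star (u j) ⬝ᵥ c *ᵥ u j := by
          simp only [Matrix.mul_apply, Matrix.star_eq_conjTranspose,
            Matrix.conjTranspose_apply, IsHermitian.eigenvectorUnitary_apply, dotProduct,
            Matrix.mulVec, Pi.star_apply, RCLike.star_def, Finset.sum_mul, Finset.mul_sum]
          rfl
        rw [hdiag]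
        simp only [Function.comp_apply, RCLike.ofReal_real_eq_id, id_eq]
        ring_nf
        rfl
      · rw [if_neg hji, if_neg hji, mul_zero]
    rw [Finset.sum_congr rfl (fun j _ => key j), Finset.sum_ite_eq' Finset.univ i
      (fun _ => (μ i : ℂ) * (star (u i) ⬝ᵥ c *ᵥ u i))]
    rw [if_pos (Finset.mem_univ i)]

lemma proj_of_family (n k : ℕ) (c : Matrix (Fin n) (Fin n) ℂ) (x : Fin k → Fin n → ℂ)
    (hx : ∀ i j, star (x i) ⬝ᵥ x j = if i = j then 1 else 0) :
    ∃ a : Matrix (Fin n) (Fin n) ℂ, a.PosSemidef ∧ (1 - a).PosSemidef ∧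
      a.trace = (k : ℂ) ∧ (c * a).trace = ∑ i, star (x i) ⬝ᵥ c *ᵥ x i := by
  set B : Matrix (Fin k) (Fin n) ℂ := Matrix.of (fun i p => star (x i p)) with hB
  set a : Matrix (Fin n) (Fin n) ℂ := Bᴴ * B with ha
  have hBB : B * Bᴴ = 1 := by
    ext i j
    rw [Matrix.mul_apply, Matrix.one_apply]
    have := hx i j
    rw [show star (x i) ⬝ᵥ x j = ∑ p, B i p * Bᴴ p j from ?_] at this
    · exact this
    · apply Finset.sum_congr rfl
      intro p _
      rw [Matrix.conjTranspose_apply, hB]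
      simp only [Matrix.of_apply, Pi.star_apply, star_star]
      try ring
  have haa : a * a = a := by
    rw [ha, Matrix.mul_assoc, ← Matrix.mul_assoc B, hBB, Matrix.one_mul]
  have hpsd : a.PosSemidef := posSemidef_conjTranspose_mul_self B
  have hherm : aᴴ = a := hpsd.1
  have h1psd : (1 - a).PosSemidef := by
    have h1 : (1 - a)ᴴ * (1 - a) = 1 - a := by
      rw [conjTranspose_sub, conjTranspose_one, hherm, Matrix.sub_mul, Matrix.mul_sub,
        Matrix.mul_sub, Matrix.one_mul, Matrix.one_mul, Matrix.mul_one, haa]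
      abel
    rw [← h1]
    exact posSemidef_conjTranspose_mul_self (1 - a)
  refine ⟨a, hpsd, h1psd, ?_, ?_⟩
  · rw [ha, Matrix.trace_mul_comm, hBB, Matrix.trace_one]
    simp
  · rw [ha, show c * (Bᴴ * B) = c * Bᴴ * B by rw [Matrix.mul_assoc],
      Matrix.trace_mul_cycle]
    simp only [Matrix.trace, Matrix.diag]
    apply Finset.sum_congr rfl
    intro i _
    simp only [Matrix.mul_apply, Matrix.conjTranspose_apply, hB, Matrix.of_apply,
      Pi.star_apply, star_star, dotProduct, Matrix.mulVec, Finset.sum_mul, Finset.mul_sum]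
    rw [Finset.sum_comm]
    refine Finset.sum_congr rfl fun p _ => Finset.sum_congr rfl fun q _ => ?_
    ring

end Auxiliary

/-- For `0 < k < n`, the map `π_k(λ) = (k/n, (k/n)·λ)` is a bijection from the
`k`-numerical range onto the isotrace slice `I_{k/n}` of the spectral scale; in
particular the slice is the image of the `k`-numerical range. -/
theorem kNumRange_bijOn_isotrace (n k : ℕ) (c : Matrix (Fin n) (Fin n) ℂ)
    (hk0 : 0 < k) (hkn : k < n) :
    Set.BijOn (fun z : ℂ => (((k : ℝ) / n, ((k : ℂ) / n) * z) : ℝ × ℂ))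
        (kNumRange n k c) {x ∈ specScale n c | x.1 = (k : ℝ) / n} ∧
      {x ∈ specScale n c | x.1 = (k : ℝ) / n} =
        (fun z : ℂ => (((k : ℝ) / n, ((k : ℂ) / n) * z) : ℝ × ℂ)) '' kNumRange n k c := by
  have hn0 : (n:ℂ) ≠ 0 := Nat.cast_ne_zero.mpr (by omega)
  have hk0' : (k:ℂ) ≠ 0 := Nat.cast_ne_zero.mpr (by omega)
  have hnR : (n:ℝ) ≠ 0 := Nat.cast_ne_zero.mpr (by omega)
  have hmaps : Set.MapsTo (fun z : ℂ => (((k : ℝ) / n, ((k : ℂ) / n) * z) : ℝ × ℂ))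
      (kNumRange n k c) {x ∈ specScale n c | x.1 = (k : ℝ) / n} := by
    rintro z ⟨x, hx, rfl⟩
    obtain ⟨a, hpsd, h1psd, htr, htrc⟩ := proj_of_family n k c x hx
    refine ⟨⟨a, hpsd, h1psd, ?_⟩, rfl⟩
    rw [Prod.mk.injEq]
    constructor
    · rw [htr, show ((k:ℂ)/(n:ℂ)) = (((k:ℝ)/(n:ℝ) : ℝ) : ℂ) by push_cast; ring,
        Complex.ofReal_re]
    · rw [htrc]
      field_simp
  have hinj : Set.InjOn (fun z : ℂ => (((k : ℝ) / n, ((k : ℂ) / n) * z) : ℝ × ℂ))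
      (kNumRange n k c) := by
    intro z _ z' _ h
    have h2 := congrArg Prod.snd h
    simp only at h2
    exact mul_left_cancel₀ (div_ne_zero hk0' hn0) h2
  have hsurj : Set.SurjOn (fun z : ℂ => (((k : ℝ) / n, ((k : ℂ) / n) * z) : ℝ × ℂ))
      (kNumRange n k c) {x ∈ specScale n c | x.1 = (k : ℝ) / n} := by
    rintro p ⟨⟨a, hpsd, h1psd, hpeq⟩, hp1⟩
    obtain ⟨u, μ, horth, h0, h1, htr, htrc⟩ := spec_decomp n c a hpsd h1psd
    have hsum : ∑ i, μ i = (k:ℝ) := by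
      have h3 : (a.trace / n).re = (k:ℝ)/n := by
        rw [← hp1, hpeq]
      rw [htr, show (((∑ i, μ i :ℝ)):ℂ)/(n:ℂ) = ((((∑ i, μ i)/(n:ℝ)) : ℝ):ℂ) by
        push_cast; ring, Complex.ofReal_re] at h3
      field_simp at h3
      linarith
    obtain ⟨x, hx, hxsum⟩ := exists_orthonormal_family n k c n u horth μ h0 h1 hsum
      (le_trans (Finset.card_filter_le _ _) (by simp))
    refine ⟨(1/(k:ℂ)) * ∑ j, star (x j) ⬝ᵥ c *ᵥ x j, ⟨x, hx, rfl⟩, ?_⟩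
    simp only
    rw [hpeq]
    rw [Prod.mk.injEq]
    constructor
    · rw [← hp1, hpeq]
    · rw [hxsum, ← htrc]
      field_simp
  have hbij : Set.BijOn (fun z : ℂ => (((k : ℝ) / n, ((k : ℂ) / n) * z) : ℝ × ℂ))
      (kNumRange n k c) {x ∈ specScale n c | x.1 = (k : ℝ) / n} := ⟨hmaps, hinj, hsurj⟩
  exact ⟨hbij, hbij.image_eq.symm⟩
end

section
/- If a is a self-adjoint operator on H with eigenvalues α₁ ≥ α₂ ≥ … ≥ α_n listed in decreasing order with multiplicity, then for each integer k with 1 ≤ k ≤ n the k-numerical range W_k(a) is a subset of ℝ equal to the closed interval [(α_{n−k+1} + ⋯ + α_n)/k, (α₁ + ⋯ + α_k)/k]. -/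
open Matrix
open scoped ComplexOrder
open Finset

private lemma kNR_sum_bound_upper (n k : ℕ) (hk1 : 1 ≤ k) (hkn : k ≤ n) (α t : Fin n → ℝ)
    (hmono : Antitone α) (h0 : ∀ j, 0 ≤ t j) (h1 : ∀ j, t j ≤ 1)
    (hsum : ∑ j, t j = k)
    (hcard : (univ.filter (fun i : Fin n => (i : ℕ) < k)).card = k) :
    ∑ j, α j * t j ≤ ∑ i ∈ univ.filter (fun i : Fin n => (i : ℕ) < k), α i := by
  set F := univ.filter (fun i : Fin n => (i : ℕ) < k) with hF
  have hkn' : k - 1 < n := by omega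
  set c := α ⟨k - 1, hkn'⟩ with hc
  have key : ∑ j, (α j - c) * t j ≤ ∑ j ∈ F, (α j - c) := by
    rw [← Finset.sum_filter_add_sum_filter_not univ (fun i : Fin n => (i : ℕ) < k)
      (fun j => (α j - c) * t j)]
    have h1' : ∑ j ∈ F, (α j - c) * t j ≤ ∑ j ∈ F, (α j - c) := by
      apply Finset.sum_le_sum
      intro j hj
      simp only [hF, mem_filter] at hj
      have hαc : c ≤ α j := hmono (by simp [Fin.le_def]; omega)
      nlinarith [h0 j, h1 j]
    have h2' : ∑ j ∈ univ.filter (fun i : Fin n => ¬ ((i : ℕ) < k)), (α j - c) * t j ≤ 0 := by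
      apply Finset.sum_nonpos
      intro j hj
      simp only [mem_filter] at hj
      have hαc : α j ≤ c := hmono (by simp [Fin.le_def]; omega)
      nlinarith [h0 j]
    linarith
  have expand : ∑ j, α j * t j = ∑ j, (α j - c) * t j + c * k := by
    rw [← hsum, Finset.mul_sum, ← Finset.sum_add_distrib]
    congr 1; ext j; ring
  have expand2 : ∑ j ∈ F, (α j - c) = ∑ j ∈ F, α j - c * k := by
    rw [Finset.sum_sub_distrib, Finset.sum_const, hcard]
    ring
  linarith

private lemma kNR_sum_bound_lower (n k : ℕ) (hk1 : 1 ≤ k) (hkn : k ≤ n) (α t : Fin n → ℝ)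
    (hmono : Antitone α) (h0 : ∀ j, 0 ≤ t j) (h1 : ∀ j, t j ≤ 1)
    (hsum : ∑ j, t j = k)
    (hcard : (univ.filter (fun i : Fin n => n - k ≤ (i : ℕ))).card = k) :
    ∑ i ∈ univ.filter (fun i : Fin n => n - k ≤ (i : ℕ)), α i ≤ ∑ j, α j * t j := by
  set F := univ.filter (fun i : Fin n => n - k ≤ (i : ℕ)) with hF
  have hkn' : n - k < n := by omega
  set c := α ⟨n - k, hkn'⟩ with hc
  have key : ∑ j ∈ F, (α j - c) ≤ ∑ j, (α j - c) * t j := by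
    rw [← Finset.sum_filter_add_sum_filter_not univ (fun i : Fin n => n - k ≤ (i : ℕ))
      (fun j => (α j - c) * t j)]
    have h1' : ∑ j ∈ F, (α j - c) ≤ ∑ j ∈ F, (α j - c) * t j := by
      apply Finset.sum_le_sum
      intro j hj
      simp only [hF, mem_filter] at hj
      have hαc : α j ≤ c := hmono (by simp [Fin.le_def]; omega)
      nlinarith [h0 j, h1 j]
    have h2' : (0:ℝ) ≤ ∑ j ∈ univ.filter (fun i : Fin n => ¬ (n - k ≤ (i : ℕ))), (α j - c) * t j := by
      apply Finset.sum_nonneg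
      intro j hj
      simp only [mem_filter] at hj
      have hαc : c ≤ α j := hmono (by simp [Fin.le_def]; omega)
      nlinarith [h0 j]
    linarith
  have expand : ∑ j, α j * t j = ∑ j, (α j - c) * t j + c * k := by
    rw [← hsum, Finset.mul_sum, ← Finset.sum_add_distrib]
    congr 1; ext j; ring
  have expand2 : ∑ j ∈ F, (α j - c) = ∑ j ∈ F, α j - c * k := by
    rw [Finset.sum_sub_distrib, Finset.sum_const, hcard]
    ring
  linarith


private lemma kNR_filter_lt_eq_map (n k : ℕ) (hkn : k ≤ n) :
    univ.filter (fun i : Fin n => (i : ℕ) < k) =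
      Finset.map ⟨fun j : Fin k => (⟨j, lt_of_lt_of_le j.2 hkn⟩ : Fin n),
        id (fun a b hab => by simpa [Fin.ext_iff] using hab)⟩ univ := by
  ext j
  simp only [mem_filter, mem_univ, true_and, Finset.mem_map, Function.Embedding.coeFn_mk]
  constructor
  · intro h; exact ⟨⟨j, h⟩, by simp⟩
  · rintro ⟨i, rfl⟩; exact i.2

private lemma kNR_filter_ge_eq_map (n k : ℕ) (hk1 : 1 ≤ k) (hkn : k ≤ n) :
    univ.filter (fun i : Fin n => n - k ≤ (i : ℕ)) =
      Finset.map ⟨fun j : Fin k =>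
          if h : max k (n - k) + (j : ℕ) < n then (⟨max k (n - k) + j, h⟩ : Fin n)
          else ⟨j, lt_of_lt_of_le j.2 hkn⟩,
        id (by
          intro a b hab
          by_cases h1 : max k (n - k) + (a : ℕ) < n <;>
            by_cases h2 : max k (n - k) + (b : ℕ) < n <;>
              simp only [h1, h2, dif_pos, dif_neg, Fin.ext_iff, not_false_iff] at hab ⊢ <;>
                omega)⟩ univ := by
  ext j
  simp only [mem_filter, mem_univ, true_and, Finset.mem_map, Function.Embedding.coeFn_mk]
  constructor
  · intro h
    by_cases hq : max k (n - k) ≤ (j : ℕ)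
    · refine ⟨⟨(j : ℕ) - max k (n - k), by omega⟩, ?_⟩
      rw [dif_pos (by simp; omega)]
      simp [Fin.ext_iff]; omega
    · refine ⟨⟨(j : ℕ), by omega⟩, ?_⟩
      rw [dif_neg (by simp; omega)]
  · rintro ⟨i, rfl⟩
    by_cases h1 : max k (n - k) + (i : ℕ) < n <;>
      simp only [h1, dif_pos, dif_neg, not_false_iff] <;> omega

/-- For a self-adjoint operator `a` with eigenvalues `α` listed in decreasing order with
multiplicity, `W_k(a)` is the real interval
`[(α_{n−k+1} + ⋯ + α_n)/k, (α₁ + ⋯ + α_k)/k]`. -/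
theorem kNumRange_selfAdjoint (n k : ℕ) (hn : 0 < n) (hk1 : 1 ≤ k) (hkn : k ≤ n)
    (a : Matrix (Fin n) (Fin n) ℂ) (ha : a.IsHermitian)
    (α : Fin n → ℝ) (hmono : Antitone α)
    (hperm : ∃ σ : Equiv.Perm (Fin n), α = ha.eigenvalues ∘ σ) :
    kNumRange n k a =
      (fun r : ℝ => (r : ℂ)) ''
        Set.Icc ((∑ i ∈ Finset.univ.filter (fun i : Fin n => n - k ≤ (i : ℕ)), α i) / k)
          ((∑ i ∈ Finset.univ.filter (fun i : Fin n => (i : ℕ) < k), α i) / k) := by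
  classical
  obtain ⟨σ, hσ⟩ := hperm
  have hmapU := kNR_filter_lt_eq_map n k hkn
  have hmapL := kNR_filter_ge_eq_map n k hk1 hkn
  have hcardU : (univ.filter (fun i : Fin n => (i : ℕ) < k)).card = k := by
    rw [hmapU]; simp
  have hcardL : (univ.filter (fun i : Fin n => n - k ≤ (i : ℕ))).card = k := by
    rw [hmapL]; simp
  have bupper := fun t h0 h1 hs => kNR_sum_bound_upper n k hk1 hkn α t hmono h0 h1 hs hcardU
  have blower := fun t h0 h1 hs => kNR_sum_bound_lower n k hk1 hkn α t hmono h0 h1 hs hcardL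
  apply Set.Subset.antisymm
  · -- forward inclusion
    classical
    set b := ha.eigenvectorBasis.reindex σ.symm with hb
    have hu : ∀ j, a *ᵥ ⇑(b j) = (α j : ℂ) • ⇑(b j) := by
      intro j
      rw [hb, OrthonormalBasis.reindex_apply, ha.mulVec_eigenvectorBasis]
      ext i
      simp [hσ, Complex.real_smul]
    have horth : ∀ i j, star ⇑(b i) ⬝ᵥ ⇑(b j) = if i = j then 1 else 0 := by
      have := b.orthonormal
      rw [orthonormal_iff_ite] at this
      exact fun i j => (dotProduct_comm _ _).trans (this i j)
    -- key dot-product expansion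
    have hval : ∀ v : Fin n → ℂ, star v ⬝ᵥ a *ᵥ v =
        ∑ j, (starRingEnd ℂ) (star ⇑(b j) ⬝ᵥ v) * ((α j : ℂ) * (star ⇑(b j) ⬝ᵥ v)) := by
      intro v
      have key := b.sum_inner_mul_inner ((WithLp.equiv 2 _).symm v)
        ((WithLp.equiv 2 _).symm (a *ᵥ v))
      have h1 : ∀ j, (inner ℂ ((WithLp.equiv 2 (Fin n → ℂ)).symm v) (b j) : ℂ)
          = (starRingEnd ℂ) (star ⇑(b j) ⬝ᵥ v) := by
        intro j
        rw [← inner_conj_symm, EuclideanSpace.inner_eq_star_dotProduct, dotProduct_comm]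
        rfl
      have h2 : ∀ j, (inner ℂ (b j) ((WithLp.equiv 2 (Fin n → ℂ)).symm (a *ᵥ v)) : ℂ)
          = (α j : ℂ) * (star ⇑(b j) ⬝ᵥ v) := by
        intro j
        rw [EuclideanSpace.inner_eq_star_dotProduct, dotProduct_comm]
        show star ⇑(b j) ⬝ᵥ (a *ᵥ v) = _
        rw [dotProduct_mulVec]
        have : star ⇑(b j) ᵥ* a = (α j : ℂ) • star ⇑(b j) := by
          conv_lhs => rw [← ha.eq]
          rw [← star_mulVec, hu j, star_smul]
          simp
        rw [this, smul_dotProduct, smul_eq_mul]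
      have h3 : (inner ℂ ((WithLp.equiv 2 (Fin n → ℂ)).symm v)
          ((WithLp.equiv 2 (Fin n → ℂ)).symm (a *ᵥ v)) : ℂ) = star v ⬝ᵥ a *ᵥ v := by
        rw [EuclideanSpace.inner_eq_star_dotProduct, dotProduct_comm]; rfl
      rw [← h3, ← key]
      exact Finset.sum_congr rfl fun j _ => by rw [h1, h2]
    rintro w ⟨x, hx, hw⟩
    set c : Fin k → Fin n → ℂ := fun i j => star ⇑(b j) ⬝ᵥ x i with hcdef
    set t : Fin n → ℝ := fun j => ∑ i, Complex.normSq (c i j) with htdef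
    have hconjmul : ∀ z : ℂ, (starRingEnd ℂ) z * z = (Complex.normSq z : ℂ) := fun z => by
      rw [mul_comm, Complex.mul_conj]
    -- orthonormality of the family in EuclideanSpace
    have hxon : Orthonormal ℂ (fun i => (WithLp.equiv 2 (Fin n → ℂ)).symm (x i)) := by
      rw [orthonormal_iff_ite]
      intro i j
      exact (dotProduct_comm (x j) (star (x i))).trans (hx i j)
    have ht0 : ∀ j, 0 ≤ t j := fun j =>
      Finset.sum_nonneg fun i _ => Complex.normSq_nonneg _
    have ht1 : ∀ j, t j ≤ 1 := by
      intro j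
      have hb1 : ‖b j‖ = 1 := b.orthonormal.1 j
      have := hxon.sum_inner_products_le (s := univ) (b j)
      rw [hb1] at this
      have heq : ∀ i : Fin k,
          ‖(inner ℂ ((WithLp.equiv 2 (Fin n → ℂ)).symm (x i)) (b j) : ℂ)‖ ^ 2
            = Complex.normSq (c i j) := by
        intro i
        rw [← norm_inner_symm, Complex.normSq_eq_norm_sq, EuclideanSpace.inner_eq_star_dotProduct,
          dotProduct_comm]
        rfl
      rw [htdef]
      simp only [← heq]
      simpa using this
    have hparseval : ∀ i : Fin k, ∑ j, Complex.normSq (c i j) = 1 := by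
      intro i
      have key := b.sum_inner_mul_inner ((WithLp.equiv 2 (Fin n → ℂ)).symm (x i))
        ((WithLp.equiv 2 (Fin n → ℂ)).symm (x i))
      have h1 : ∀ j, (inner ℂ ((WithLp.equiv 2 (Fin n → ℂ)).symm (x i)) (b j) : ℂ)
          * (inner ℂ (b j) ((WithLp.equiv 2 (Fin n → ℂ)).symm (x i)) : ℂ)
          = (Complex.normSq (c i j) : ℂ) := by
        intro j
        rw [← inner_conj_symm ((WithLp.equiv 2 (Fin n → ℂ)).symm (x i)) (b j),
          EuclideanSpace.inner_eq_star_dotProduct, dotProduct_comm]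
        exact hconjmul _
      rw [Finset.sum_congr rfl fun j _ => h1 j] at key
      have h2 : (inner ℂ ((WithLp.equiv 2 (Fin n → ℂ)).symm (x i))
          ((WithLp.equiv 2 (Fin n → ℂ)).symm (x i)) : ℂ) = 1 := by
        have := hx i i
        exact ((dotProduct_comm (x i) (star (x i))).trans this).trans (if_pos rfl)
      rw [h2] at key
      exact_mod_cast key
    have htsum : ∑ j, t j = k := by
      rw [htdef]
      rw [Finset.sum_comm]
      simp [hparseval]
    -- the total value
    have htotal : ∑ i, star (x i) ⬝ᵥ a *ᵥ x i = ((∑ j, α j * t j : ℝ) : ℂ) := by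
      have h1 : ∀ i : Fin k, star (x i) ⬝ᵥ a *ᵥ x i
          = ∑ j, (α j : ℂ) * (Complex.normSq (c i j) : ℂ) := by
        intro i
        rw [hval (x i)]
        refine Finset.sum_congr rfl fun j _ => ?_
        rw [show (starRingEnd ℂ) (star ⇑(b j) ⬝ᵥ x i) * ((α j : ℂ) * (star ⇑(b j) ⬝ᵥ x i))
          = (α j : ℂ) * ((starRingEnd ℂ) (c i j) * (c i j)) by ring, hconjmul]
      rw [Finset.sum_congr rfl fun i _ => h1 i, Finset.sum_comm]
      rw [show ((∑ j, α j * t j : ℝ) : ℂ) = ∑ j, (α j : ℂ) * ((t j : ℝ) : ℂ) by push_cast; rfl]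
      refine Finset.sum_congr rfl fun j _ => ?_
      rw [← Finset.mul_sum, htdef]
      push_cast
      rfl
    have hk0 : (0:ℝ) < (k:ℝ) := by exact_mod_cast hk1
    refine ⟨(∑ j, α j * t j) / k, ⟨?_, ?_⟩, ?_⟩
    · gcongr
      exact blower t ht0 ht1 htsum
    · gcongr
      exact bupper t ht0 ht1 htsum
    · show (((∑ j, α j * t j) / k : ℝ) : ℂ) = w
      rw [hw, htotal]
      push_cast
      ring
  · -- reverse inclusion
    classical
    set b := ha.eigenvectorBasis.reindex σ.symm with hb
    have hu : ∀ j, a *ᵥ ⇑(b j) = (α j : ℂ) • ⇑(b j) := by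
      intro j
      rw [hb, OrthonormalBasis.reindex_apply, ha.mulVec_eigenvectorBasis]
      ext i
      simp [hσ, Complex.real_smul]
    have horth : ∀ i j, star ⇑(b i) ⬝ᵥ ⇑(b j) = if i = j then 1 else 0 := by
      have := b.orthonormal
      rw [orthonormal_iff_ite] at this
      exact fun i j => (dotProduct_comm _ _).trans (this i j)
    set m := ∑ i ∈ Finset.univ.filter (fun i : Fin n => n - k ≤ (i : ℕ)), α i with hm
    set M := ∑ i ∈ Finset.univ.filter (fun i : Fin n => (i : ℕ) < k), α i with hM
    have hk0 : (0:ℝ) < (k:ℝ) := by exact_mod_cast hk1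
    rintro w ⟨r, ⟨hr1, hr2⟩, rfl⟩
    have hmkr : m ≤ k * r := by
      rw [div_le_iff₀ hk0] at hr1; linarith
    have hkrM : k * r ≤ M := by
      rw [le_div_iff₀ hk0] at hr2; linarith
    set lam : ℝ := if M = m then 0 else (k * r - m) / (M - m) with hlam
    have hlam0 : 0 ≤ lam := by
      rw [hlam]; split_ifs with h
      · exact le_refl 0
      · have hlt : m < M := lt_of_le_of_ne (le_trans hmkr hkrM) (Ne.symm h)
        apply div_nonneg <;> linarith
    have hlam1 : lam ≤ 1 := by
      rw [hlam]; split_ifs with h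
      · norm_num
      · have hlt : m < M := lt_of_le_of_ne (le_trans hmkr hkrM) (Ne.symm h)
        rw [div_le_one (by linarith)]
        linarith
    have hlamval : lam * M + (1 - lam) * m = k * r := by
      rw [hlam]; split_ifs with h
      · rw [h]; ring_nf; linarith
      · have hlt : m < M := lt_of_le_of_ne (le_trans hmkr hkrM) (Ne.symm h)
        have h2 : (k*r - m)/(M-m) * (M - m) = k*r - m := div_mul_cancel₀ _ (by linarith)
        linear_combination h2
    set q := max k (n - k) with hq
    have hqk : k ≤ q := le_max_left _ _
    have hqp : n - k ≤ q := le_max_right _ _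
    have hqn : q + k ≥ n := by omega
    set c1 : ℂ := ((Real.sqrt lam : ℝ) : ℂ) with hc1
    set c2 : ℂ := ((Real.sqrt (1 - lam) : ℝ) : ℂ) with hc2
    have hc1sq : c1 * c1 = ((lam : ℝ) : ℂ) := by
      rw [hc1]; norm_cast; exact Real.mul_self_sqrt hlam0
    have hc2sq : c2 * c2 = (((1 - lam : ℝ)) : ℂ) := by
      rw [hc2]; norm_cast; exact Real.mul_self_sqrt (by linarith)
    have hc1conj : (starRingEnd ℂ) c1 = c1 := Complex.conj_ofReal _
    have hc2conj : (starRingEnd ℂ) c2 = c2 := Complex.conj_ofReal _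
    have hdd : ∀ (i' j' : Fin n), star ⇑(b i') ⬝ᵥ ⇑(b j') = if (i' : ℕ) = (j' : ℕ) then 1 else 0 := by
      intro i' j'; rw [horth]; simp [Fin.ext_iff]
    set x : Fin k → (Fin n → ℂ) := fun j =>
      if h : q + (j : ℕ) < n then
        c1 • ⇑(b ⟨j, lt_of_lt_of_le j.2 hkn⟩) + c2 • ⇑(b ⟨q + j, h⟩)
      else ⇑(b ⟨j, lt_of_lt_of_le j.2 hkn⟩) with hx
    refine ⟨x, ?_, ?_⟩
    · intro i j
      by_cases hi : q + (i : ℕ) < n <;> by_cases hj : q + (j : ℕ) < n <;>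
          simp only [hx, hi, hj, dif_pos, dif_neg, not_false_iff] <;>
        simp only [star_add, star_smul, add_dotProduct, dotProduct_add, smul_dotProduct,
          dotProduct_smul, smul_eq_mul, Complex.star_def, hc1conj, hc2conj, hdd]
      · -- both branch1
        rw [if_neg (show ¬ ((⟨i, lt_of_lt_of_le i.2 hkn⟩ : Fin n) : ℕ) = ((⟨q + j, hj⟩ : Fin n) : ℕ) by simp; omega),
          if_neg (show ¬ ((⟨q + i, hi⟩ : Fin n) : ℕ) = ((⟨j, lt_of_lt_of_le j.2 hkn⟩ : Fin n) : ℕ) by simp; omega)]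
        by_cases hij : i = j
        · subst hij
          simp only [if_true, eq_self_iff_true]
          have hsum1 : c1 * c1 + c2 * c2 = 1 := by rw [hc1sq, hc2sq]; push_cast; ring
          linear_combination hsum1
        · rw [if_neg (show ¬ ((⟨i, lt_of_lt_of_le i.2 hkn⟩ : Fin n) : ℕ) = ((⟨j, lt_of_lt_of_le j.2 hkn⟩ : Fin n) : ℕ) by
            simp; intro hh; exact hij (Fin.ext hh)),
            if_neg (show ¬ ((⟨q + i, hi⟩ : Fin n) : ℕ) = ((⟨q + j, hj⟩ : Fin n) : ℕ) by
            simp; intro hh; exact hij (Fin.ext (by omega))), if_neg hij]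
          ring
      · -- i branch1, j branch2
        rw [if_neg (show ¬ ((⟨i, lt_of_lt_of_le i.2 hkn⟩ : Fin n) : ℕ) = ((⟨j, lt_of_lt_of_le j.2 hkn⟩ : Fin n) : ℕ) by simp; omega),
          if_neg (show ¬ ((⟨q + i, hi⟩ : Fin n) : ℕ) = ((⟨j, lt_of_lt_of_le j.2 hkn⟩ : Fin n) : ℕ) by simp; omega),
          if_neg (show ¬ i = j by intro hh; subst hh; exact hj hi)]
        ring
      · -- i branch2, j branch1
        rw [if_neg (show ¬ ((⟨i, lt_of_lt_of_le i.2 hkn⟩ : Fin n) : ℕ) = ((⟨j, lt_of_lt_of_le j.2 hkn⟩ : Fin n) : ℕ) by simp; omega),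
          if_neg (show ¬ ((⟨i, lt_of_lt_of_le i.2 hkn⟩ : Fin n) : ℕ) = ((⟨q + j, hj⟩ : Fin n) : ℕ) by simp; omega),
          if_neg (show ¬ i = j by intro hh; subst hh; exact hi hj)]
        ring
      · -- both branch2
        by_cases hij : i = j
        · subst hij; rw [if_pos rfl, if_pos rfl]
        · rw [if_neg (show ¬ ((⟨i, lt_of_lt_of_le i.2 hkn⟩ : Fin n) : ℕ) = ((⟨j, lt_of_lt_of_le j.2 hkn⟩ : Fin n) : ℕ) by
            simp; intro hh; exact hij (Fin.ext hh)), if_neg hij]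
    · -- the value equation
      have hvals : ∀ i : Fin k, star (x i) ⬝ᵥ a *ᵥ x i =
          (((if h : q + (i : ℕ) < n then
              lam * α ⟨i, lt_of_lt_of_le i.2 hkn⟩ + (1 - lam) * α ⟨q + i, h⟩
            else α ⟨i, lt_of_lt_of_le i.2 hkn⟩ : ℝ)) : ℂ) := by
        intro i
        by_cases hi : q + (i : ℕ) < n <;>
          simp only [hx, hi, dif_pos, dif_neg, not_false_iff]
        · rw [mulVec_add, mulVec_smul, mulVec_smul, hu, hu]
          simp only [star_add, star_smul, add_dotProduct, dotProduct_add, smul_dotProduct,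
            dotProduct_smul, smul_eq_mul, Complex.star_def, hc1conj, hc2conj, hdd]
          rw [if_neg (show ¬ ((⟨i, lt_of_lt_of_le i.2 hkn⟩ : Fin n) : ℕ) = ((⟨q + i, hi⟩ : Fin n) : ℕ) by simp; omega),
            if_neg (show ¬ ((⟨q + i, hi⟩ : Fin n) : ℕ) = ((⟨i, lt_of_lt_of_le i.2 hkn⟩ : Fin n) : ℕ) by simp; omega)]
          simp only [if_true, eq_self_iff_true]
          push_cast
          have h1 := hc1sq
          have h2 := hc2sq
          push_cast at h1 h2
          linear_combination ((α ⟨i, lt_of_lt_of_le i.2 hkn⟩ : ℂ)) * h1 +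
            ((α ⟨q + i, hi⟩ : ℂ)) * h2
        · rw [hu]
          simp only [dotProduct_smul, smul_eq_mul, hdd]
          simp only [if_true, eq_self_iff_true]
          ring
      rw [show (∑ i, star (x i) ⬝ᵥ a.mulVec (x i)) =
          ((∑ i : Fin k, (if h : q + (i : ℕ) < n then
              lam * α ⟨i, lt_of_lt_of_le i.2 hkn⟩ + (1 - lam) * α ⟨q + i, h⟩
            else α ⟨i, lt_of_lt_of_le i.2 hkn⟩ : ℝ) : ℝ) : ℂ) by
        push_cast
        exact Finset.sum_congr rfl fun i _ => hvals i]
      have hS1 : ∑ i : Fin k, α ⟨i, lt_of_lt_of_le i.2 hkn⟩ = M := by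
        rw [hM, hmapU, Finset.sum_map]
        rfl
      have hS2 : ∑ i : Fin k, (if h : q + (i : ℕ) < n then α ⟨q + i, h⟩
          else α ⟨i, lt_of_lt_of_le i.2 hkn⟩) = m := by
        rw [hm, hmapL, Finset.sum_map]
        refine Finset.sum_congr rfl fun i _ => ?_
        rw [Function.Embedding.coeFn_mk, apply_dite α]
      have hgsum : (∑ i : Fin k, (if h : q + (i : ℕ) < n then
              lam * α ⟨i, lt_of_lt_of_le i.2 hkn⟩ + (1 - lam) * α ⟨q + i, h⟩
            else α ⟨i, lt_of_lt_of_le i.2 hkn⟩ : ℝ)) = k * r := by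
        have step : ∀ i : Fin k, (if h : q + (i : ℕ) < n then
              lam * α ⟨i, lt_of_lt_of_le i.2 hkn⟩ + (1 - lam) * α ⟨q + i, h⟩
            else α ⟨i, lt_of_lt_of_le i.2 hkn⟩ : ℝ)
            = lam * α ⟨i, lt_of_lt_of_le i.2 hkn⟩
              + (1 - lam) * (if h : q + (i : ℕ) < n then α ⟨q + i, h⟩
                else α ⟨i, lt_of_lt_of_le i.2 hkn⟩) := by
          intro i
          by_cases hi : q + (i : ℕ) < n <;>
            simp only [hi, dif_pos, dif_neg, not_false_iff] <;> ring
        rw [Finset.sum_congr rfl fun i _ => step i, Finset.sum_add_distrib,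
          ← Finset.mul_sum, ← Finset.mul_sum, hS1, hS2]
        linarith [hlamval]
      rw [hgsum]
      have hkne : (k : ℂ) ≠ 0 := Nat.cast_ne_zero.mpr (by omega)
      push_cast
      field_simp
end

section
/- Let β_k⁺ denote the sum of the k largest eigenvalues (counted with multiplicity) of b₁ = (c + c*)/2. Then the vertical line {z : Re z = β_k⁺/k} is tangent to W_k(c): Re λ ≤ β_k⁺/k for every λ ∈ W_k(c), and there exists λ ∈ W_k(c) with Re λ = β_k⁺/k. -/
open Matrix
open scoped ComplexOrder

local notation "⟪" x ", " y "⟫" => @inner ℂ _ _ x y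

section Helpers

lemma Matrix.piLp_equiv_toEuclideanLin {n : ℕ} (A : Matrix (Fin n) (Fin n) ℂ)
    (x : EuclideanSpace ℂ (Fin n)) :
    WithLp.equiv 2 (Fin n → ℂ) (Matrix.toEuclideanLin A x)
      = Matrix.toLin' A (WithLp.equiv 2 (Fin n → ℂ) x) := rfl

lemma Matrix.toEuclideanLin_apply_piLp_equiv_symm {n : ℕ} (A : Matrix (Fin n) (Fin n) ℂ)
    (v : Fin n → ℂ) :
    Matrix.toEuclideanLin A ((WithLp.equiv 2 (Fin n → ℂ)).symm v)
      = (WithLp.equiv 2 (Fin n → ℂ)).symm (A *ᵥ v) := rfl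

lemma EuclideanSpace.inner_piLp_equiv_symm {n : ℕ} (x y : Fin n → ℂ) :
    ⟪(WithLp.equiv 2 (Fin n → ℂ)).symm x, (WithLp.equiv 2 (Fin n → ℂ)).symm y⟫
      = star x ⬝ᵥ y := by
  rw [WithLp.equiv_symm_apply, EuclideanSpace.inner_toLp_toLp, dotProduct_comm]

lemma qform_eq {n : ℕ} (T : EuclideanSpace ℂ (Fin n) →ₗ[ℂ] EuclideanSpace ℂ (Fin n))
    (e : OrthonormalBasis (Fin n) ℂ (EuclideanSpace ℂ (Fin n))) (lam : Fin n → ℝ)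
    (hT : ∀ j, T (e j) = (lam j : ℂ) • e j) (x : EuclideanSpace ℂ (Fin n)) :
    ⟪x, T x⟫ = ((∑ j, lam j * ‖⟪e j, x⟫‖ ^ 2 : ℝ) : ℂ) := by
  have hTx : T x = ∑ j, (⟪e j, x⟫ * (lam j : ℂ)) • e j := by
    conv_lhs => rw [← e.sum_repr' x]
    rw [map_sum]
    refine Finset.sum_congr rfl fun j _ => ?_
    rw [LinearMap.map_smul, hT, smul_smul]
  rw [hTx, inner_sum]
  push_cast
  refine Finset.sum_congr rfl fun j _ => ?_
  rw [inner_smul_right, ← inner_conj_symm x (e j)]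
  rw [show ⟪e j, x⟫ * (lam j : ℂ) * (starRingEnd ℂ) ⟪e j, x⟫
      = (lam j : ℂ) * (⟪e j, x⟫ * (starRingEnd ℂ) ⟪e j, x⟫) by ring,
    Complex.mul_conj']

lemma conj_form {n : ℕ} (c : Matrix (Fin n) (Fin n) ℂ) (y : Fin n → ℂ) :
    star y ⬝ᵥ cᴴ *ᵥ y = starRingEnd ℂ (star y ⬝ᵥ c *ᵥ y) := by
  simp only [dotProduct, mulVec, conjTranspose_apply, map_sum, Finset.mul_sum, Pi.star_apply,
    RingHom.map_mul, Complex.conj_conj, RCLike.star_def]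
  rw [Finset.sum_comm]
  refine Finset.sum_congr rfl fun i _ => Finset.sum_congr rfl fun j _ => ?_
  ring

lemma b1_form_re {n : ℕ} (c b₁ : Matrix (Fin n) (Fin n) ℂ)
    (hb₁ : b₁ = (1 / 2 : ℂ) • (c + cᴴ)) (y : Fin n → ℂ) :
    star y ⬝ᵥ b₁ *ᵥ y = (((star y ⬝ᵥ c *ᵥ y).re : ℝ) : ℂ) := by
  subst hb₁
  rw [smul_mulVec, dotProduct_smul, add_mulVec, dotProduct_add, conj_form]
  rw [smul_eq_mul, Complex.add_conj]
  push_cast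
  ring

lemma filter_eq_map {n k : ℕ} (hkn : k ≤ n) :
    Finset.univ.filter (fun j : Fin n => (j : ℕ) < k) =
      Finset.univ.map (Fin.castLEEmb hkn) := by
  ext j
  simp only [Finset.mem_filter, Finset.mem_univ, true_and, Finset.mem_map,
    Fin.castLEEmb_apply]
  constructor
  · intro h; exact ⟨⟨(j : ℕ), h⟩, by ext; rfl⟩
  · rintro ⟨i, rfl⟩; exact i.isLt

lemma sum_mul_le {n k : ℕ} (hk1 : 1 ≤ k) (hkn : k ≤ n) (μ s : Fin n → ℝ)
    (hmono : Antitone μ) (h0 : ∀ j, 0 ≤ s j) (h1 : ∀ j, s j ≤ 1)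
    (hsum : ∑ j, s j = (k : ℝ)) :
    ∑ j, μ j * s j ≤ ∑ j ∈ Finset.univ.filter (fun j : Fin n => (j : ℕ) < k), μ j := by
  classical
  set A := Finset.univ.filter (fun j : Fin n => (j : ℕ) < k) with hA
  have hm : k - 1 < n := by omega
  set m : Fin n := ⟨k - 1, hm⟩ with hmdef
  have hcardA : A.card = k := by
    rw [hA, filter_eq_map hkn, Finset.card_map, Finset.card_univ, Fintype.card_fin]
  have key : ∑ j, μ j * s j - ∑ j ∈ A, μ j ≤ 0 := by
    have hsplit : ∑ j, μ j * s j = ∑ j ∈ A, μ j * s j + ∑ j ∈ Aᶜ, μ j * s j :=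
      (Finset.sum_add_sum_compl A _).symm
    have hre : ∑ j, μ j * s j - ∑ j ∈ A, μ j
        = ∑ j ∈ A, (μ j * s j - μ j * 1) + ∑ j ∈ Aᶜ, μ j * s j := by
      rw [Finset.sum_sub_distrib, hsplit]; ring_nf
    rw [hre]
    have h₁ : ∀ j ∈ A, μ j * s j - μ j * 1 ≤ μ m * (s j - 1) := by
      intro j hj
      have hjk : (j : ℕ) < k := by simpa [hA] using hj
      have hjm : j ≤ m := by rw [Fin.le_def]; simp only [hmdef]; omega
      have := hmono hjm
      nlinarith [h1 j]
    have h₂ : ∀ j ∈ Aᶜ, μ j * s j ≤ μ m * s j := by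
      intro j hj
      have hjk : ¬ (j : ℕ) < k := by simpa [hA] using Finset.mem_compl.mp hj
      have hjm : m ≤ j := by rw [Fin.le_def]; simp only [hmdef]; omega
      have := hmono hjm
      nlinarith [h0 j]
    calc ∑ j ∈ A, (μ j * s j - μ j * 1) + ∑ j ∈ Aᶜ, μ j * s j
        ≤ ∑ j ∈ A, μ m * (s j - 1) + ∑ j ∈ Aᶜ, μ m * s j :=
          add_le_add (Finset.sum_le_sum h₁) (Finset.sum_le_sum h₂)
      _ = μ m * ((∑ j ∈ A, s j - A.card) + ∑ j ∈ Aᶜ, s j) := by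
          rw [← Finset.mul_sum, ← Finset.mul_sum, ← mul_add, Finset.sum_sub_distrib]
          simp
      _ = 0 := by
          have h := Finset.sum_add_sum_compl A s
          rw [hsum] at h
          have : (∑ j ∈ A, s j - A.card) + ∑ j ∈ Aᶜ, s j = 0 := by
            rw [hcardA]; linarith
          rw [this, mul_zero]
  linarith

end Helpers

/-- The vertical line `Re z = β_k⁺/k`, where `β_k⁺` is the sum of the `k` largest
eigenvalues of `b₁ = (c + c*)/2`, is tangent to `W_k(c)`. -/
theorem tangent_line_kNumRange (n k : ℕ) (hn : 0 < n) (hk1 : 1 ≤ k) (hkn : k ≤ n)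
    (c b₁ : Matrix (Fin n) (Fin n) ℂ) (hb₁ : b₁ = (1 / 2 : ℂ) • (c + cᴴ))
    (hherm : b₁.IsHermitian)
    (μ : Fin n → ℝ) (hmono : Antitone μ)
    (hperm : ∃ σ : Equiv.Perm (Fin n), μ = hherm.eigenvalues ∘ σ)
    (β : ℝ) (hβ : β = ∑ i ∈ Finset.univ.filter (fun i : Fin n => (i : ℕ) < k), μ i) :
    (∀ z ∈ kNumRange n k c, z.re ≤ β / k) ∧ ∃ z ∈ kNumRange n k c, z.re = β / k := by
  classical
  obtain ⟨σ, hσ⟩ := hperm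
  set e := hherm.eigenvectorBasis with he
  set lam := hherm.eigenvalues with hlam
  set T : EuclideanSpace ℂ (Fin n) →ₗ[ℂ] EuclideanSpace ℂ (Fin n) := Matrix.toEuclideanLin b₁
    with hTdef
  have hT : ∀ j, T (e j) = (lam j : ℂ) • e j := by
    intro j
    have h := hherm.mulVec_eigenvectorBasis j
    apply (WithLp.equiv 2 (Fin n → ℂ)).injective
    rw [hTdef, Matrix.piLp_equiv_toEuclideanLin]
    simp only [Matrix.toLin'_apply]
    rw [show (WithLp.equiv 2 (Fin n → ℂ)) (e j) = ⇑(e j) from rfl] at *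
    rw [h]
    rw [show (WithLp.equiv 2 (Fin n → ℂ)) ((lam j : ℂ) • e j) = (lam j : ℂ) • ⇑(e j) from rfl]
    ext i
    simp [Complex.real_smul]
    rfl
  have hq : ∀ y : Fin n → ℂ,
      ((star y ⬝ᵥ c *ᵥ y).re : ℝ)
        = ∑ j, lam j * ‖⟪e j, (WithLp.equiv 2 (Fin n → ℂ)).symm y⟫‖ ^ 2 := by
    intro y
    have h1 := b1_form_re c b₁ hb₁ y
    have h2 := qform_eq T e lam hT ((WithLp.equiv 2 (Fin n → ℂ)).symm y)
    have h3 : ⟪(WithLp.equiv 2 (Fin n → ℂ)).symm y, T ((WithLp.equiv 2 (Fin n → ℂ)).symm y)⟫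
        = star y ⬝ᵥ b₁ *ᵥ y := by
      rw [hTdef, Matrix.toEuclideanLin_apply_piLp_equiv_symm]
      exact EuclideanSpace.inner_piLp_equiv_symm _ _
    rw [h3, h1] at h2
    exact_mod_cast h2
  constructor
  · rintro z ⟨x, hortho, rfl⟩
    set X : Fin k → EuclideanSpace ℂ (Fin n) := fun i => (WithLp.equiv 2 (Fin n → ℂ)).symm (x i)
      with hX
    have hXon : Orthonormal ℂ X := by
      rw [orthonormal_iff_ite]
      intro i j
      rw [hX]
      rw [EuclideanSpace.inner_piLp_equiv_symm]
      rw [hortho i j]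
    set r : Fin k → Fin n → ℝ := fun i j => ‖⟪e j, X i⟫‖ ^ 2 with hr
    set t : Fin n → ℝ := fun j => ∑ i, r i j with ht
    have hzre : ((1 / (k : ℂ)) * ∑ i, star (x i) ⬝ᵥ c.mulVec (x i)).re
        = (1 / (k : ℝ)) * ∑ j, lam j * t j := by
      rw [show (1 / (k : ℂ)) = (((1 / k : ℝ)) : ℂ) by push_cast; ring]
      rw [Complex.re_ofReal_mul, Complex.re_sum]
      congr 1
      calc ∑ i, (star (x i) ⬝ᵥ c *ᵥ x i).re = ∑ i, ∑ j, lam j * r i j :=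
            Finset.sum_congr rfl fun i _ => hq (x i)
        _ = ∑ j, ∑ i, lam j * r i j := Finset.sum_comm
        _ = ∑ j, lam j * t j := by
            refine Finset.sum_congr rfl fun j _ => ?_
            rw [ht, Finset.mul_sum]
    have ht0 : ∀ j, 0 ≤ t j := fun j => Finset.sum_nonneg fun i _ => by positivity
    have ht1 : ∀ j, t j ≤ 1 := by
      intro j
      have hb := hXon.sum_inner_products_le (e j) (s := Finset.univ)
      have hnorm : ‖e j‖ = 1 := e.orthonormal.1 j
      calc t j = ∑ i, ‖⟪X i, e j⟫‖ ^ 2 := by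
            refine Finset.sum_congr rfl fun i _ => ?_
            rw [hr, norm_inner_symm]
        _ ≤ ‖e j‖ ^ 2 := hb
        _ = 1 := by rw [hnorm]; norm_num
    have hx1 : ∀ i, ∑ j, r i j = 1 := by
      intro i
      have hp := e.sum_inner_mul_inner (X i) (X i)
      have hinner1 : ⟪X i, X i⟫ = 1 := by
        rw [hX, EuclideanSpace.inner_piLp_equiv_symm, hortho]
        simp
      rw [hinner1] at hp
      have hterm : ∀ j, ⟪X i, e j⟫ * ⟪e j, X i⟫ = ((‖⟪e j, X i⟫‖ ^ 2 : ℝ) : ℂ) := by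
        intro j
        calc ⟪X i, e j⟫ * ⟪e j, X i⟫
            = (starRingEnd ℂ) ⟪e j, X i⟫ * ⟪e j, X i⟫ := by rw [inner_conj_symm]
          _ = ((‖⟪e j, X i⟫‖ ^ 2 : ℝ) : ℂ) := by
              rw [RCLike.conj_mul]
              norm_cast
      rw [Finset.sum_congr rfl fun j _ => hterm j] at hp
      exact_mod_cast hp
    have hsum_t : ∑ j, t j = (k : ℝ) := by
      rw [show ∑ j, t j = ∑ j, ∑ i, r i j from rfl, Finset.sum_comm]
      rw [Finset.sum_congr rfl fun i _ => hx1 i]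
      simp
    have hbound : ∑ j, lam j * t j ≤ β := by
      have h1 : ∑ j, μ j * t (σ j) = ∑ j, lam j * t j := by
        rw [hσ]
        exact Equiv.sum_comp σ fun j => lam j * t j
      have h2 : ∑ j, t (σ j) = (k : ℝ) := by
        rw [Equiv.sum_comp σ t]
        exact hsum_t
      have := sum_mul_le hk1 hkn μ (fun j => t (σ j)) hmono
        (fun j => ht0 _) (fun j => ht1 _) h2
      rw [hβ]
      calc ∑ j, lam j * t j = ∑ j, μ j * t (σ j) := h1.symm
        _ ≤ _ := this
    rw [hzre]
    have hkpos : (0 : ℝ) < (k : ℝ) := by exact_mod_cast hk1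
    have h1k : (0 : ℝ) ≤ 1 / (k : ℝ) := by positivity
    calc (1 / (k : ℝ)) * ∑ j, lam j * t j ≤ (1 / (k : ℝ)) * β :=
          mul_le_mul_of_nonneg_left hbound h1k
      _ = β / k := by ring
  · set y : Fin k → EuclideanSpace ℂ (Fin n) := fun i => e (σ (Fin.castLE hkn i)) with hy
    set x : Fin k → (Fin n → ℂ) := fun i => WithLp.equiv 2 (Fin n → ℂ) (y i) with hxdef
    have hinj : Function.Injective (fun i : Fin k => σ (Fin.castLE hkn i)) :=
      σ.injective.comp (Fin.castLE_injective hkn)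
    have hsymm : ∀ i, (WithLp.equiv 2 (Fin n → ℂ)).symm (x i) = y i := by
      intro i; rw [hxdef]; simp
    have horthox : ∀ i j, star (x i) ⬝ᵥ x j = if i = j then 1 else 0 := by
      intro i j
      have h : star (x i) ⬝ᵥ x j = ⟪y i, y j⟫ := by
        rw [← hsymm i, ← hsymm j, EuclideanSpace.inner_piLp_equiv_symm]
      rw [h, hy]
      rw [orthonormal_iff_ite.mp e.orthonormal]
      by_cases hij : i = j
      · simp [hij]
      · rw [if_neg fun hc => hij (hinj hc), if_neg hij]
    have hval : ∀ i, (star (x i) ⬝ᵥ c *ᵥ x i).re = μ (Fin.castLE hkn i) := by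
      intro i
      have h1 := b1_form_re c b₁ hb₁ (x i)
      have h3 : ⟪y i, T (y i)⟫ = star (x i) ⬝ᵥ b₁ *ᵥ x i := by
        rw [hTdef, ← hsymm i, Matrix.toEuclideanLin_apply_piLp_equiv_symm]
        exact EuclideanSpace.inner_piLp_equiv_symm _ _
      have hyy : ⟪y i, y i⟫ = 1 := by
        rw [hy, orthonormal_iff_ite.mp e.orthonormal]
        simp
      have h2 : star (x i) ⬝ᵥ b₁ *ᵥ x i = ((lam (σ (Fin.castLE hkn i)) : ℝ) : ℂ) := by
        rw [← h3, hy, hT, inner_smul_right]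
        have h5 : ⟪e (σ (Fin.castLE hkn i)), e (σ (Fin.castLE hkn i))⟫ = 1 := by
          rw [orthonormal_iff_ite.mp e.orthonormal]; simp
        rw [h5, mul_one]
      rw [h2] at h1
      have h4 : (star (x i) ⬝ᵥ c *ᵥ x i).re = lam (σ (Fin.castLE hkn i)) := by
        exact_mod_cast h1.symm
      rw [h4, hσ]
      rfl
    refine ⟨(1 / (k : ℂ)) * ∑ i, star (x i) ⬝ᵥ c.mulVec (x i), ⟨x, horthox, rfl⟩, ?_⟩
    rw [show (1 / (k : ℂ)) = (((1 / k : ℝ)) : ℂ) by push_cast; ring]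
    rw [Complex.re_ofReal_mul, Complex.re_sum]
    have hsum : ∑ i, (star (x i) ⬝ᵥ c.mulVec (x i)).re = β := by
      rw [Finset.sum_congr rfl fun i _ => hval i, hβ, filter_eq_map hkn, Finset.sum_map]
      rfl
    rw [hsum]
    ring
end

section
/- If λ is a corner of the numerical range W(c) = W₁(c), then λ is a reducing eigenvalue of c: there exists a unit vector x ∈ H with c x = λ x and c* x = (conjugate of λ)·x. -/
open Matrix
open scoped ComplexOrder

/-- `l` is a corner of `C ⊆ ℂ`: `l ∈ C` and there are two ℝ-linearly independent
directions, each giving a supporting line of `C` at `l`. -/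
def CornerPt (C : Set ℂ) (l : ℂ) : Prop :=
  l ∈ C ∧ ∃ u₁ u₂ : ℂ, LinearIndependent ℝ ![u₁, u₂] ∧
    (∀ z ∈ C, ((starRingEnd ℂ) u₁ * (z - l)).re ≤ 0) ∧
    (∀ z ∈ C, ((starRingEnd ℂ) u₂ * (z - l)).re ≤ 0)

lemma aux_mem_kNumRange_one {n : ℕ} (c : Matrix (Fin n) (Fin n) ℂ) (y : Fin n → ℂ)
    (hy : star y ⬝ᵥ y = 1) : (star y ⬝ᵥ c.mulVec y) ∈ kNumRange n 1 c := by
  refine ⟨fun _ => y, fun i j => ?_, by simp⟩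
  simp [Subsingleton.elim i j, hy]

lemma aux_herm_dot {n : ℕ} (A : Matrix (Fin n) (Fin n) ℂ) (y : Fin n → ℂ) :
    star y ⬝ᵥ Aᴴ.mulVec y = star (star y ⬝ᵥ A.mulVec y) := by
  rw [dotProduct_mulVec, vecMul_conjTranspose, star_star, star_dotProduct]

lemma aux_dot_self {n : ℕ} (y : Fin n → ℂ) :
    star y ⬝ᵥ y = ((∑ i, Complex.normSq (y i) : ℝ) : ℂ) := by
  push_cast
  simp [dotProduct, Complex.normSq_eq_conj_mul_self]

/-- Key lemma: a supporting direction kills `(ū d + u dᴴ) x` at the corner vector. -/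
lemma aux_key {n : ℕ} (c : Matrix (Fin n) (Fin n) ℂ) (l u : ℂ)
    (hu : ∀ z ∈ kNumRange n 1 c, ((starRingEnd ℂ) u * (z - l)).re ≤ 0)
    (x : Fin n → ℂ) (hx : star x ⬝ᵥ x = 1) (hxl : star x ⬝ᵥ c.mulVec x = l) :
    ((starRingEnd ℂ) u • (c - l • (1 : Matrix (Fin n) (Fin n) ℂ))
      + u • (c - l • (1 : Matrix (Fin n) (Fin n) ℂ))ᴴ).mulVec x = 0 := by
  set d : Matrix (Fin n) (Fin n) ℂ := c - l • 1 with hd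
  set A : Matrix (Fin n) (Fin n) ℂ := (starRingEnd ℂ) u • d + u • dᴴ with hA
  have hdot : ∀ y : Fin n → ℂ, star y ⬝ᵥ A.mulVec y
      = (starRingEnd ℂ) u * (star y ⬝ᵥ d.mulVec y)
        + u * star (star y ⬝ᵥ d.mulVec y) := by
    intro y
    rw [hA, add_mulVec, dotProduct_add, smul_mulVec, smul_mulVec,
      dotProduct_smul, dotProduct_smul, aux_herm_dot, smul_eq_mul, smul_eq_mul]
  have hddot : ∀ y : Fin n → ℂ, star y ⬝ᵥ d.mulVec y
      = star y ⬝ᵥ c.mulVec y - l * (star y ⬝ᵥ y) := by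
    intro y
    rw [hd, sub_mulVec, dotProduct_sub, smul_mulVec, one_mulVec,
      dotProduct_smul, smul_eq_mul]
  -- nonpositivity of the quadratic form of A
  have hnonpos : ∀ y : Fin n → ℂ, star y ⬝ᵥ A.mulVec y ≤ 0 := by
    intro y
    by_cases h0 : y = 0
    · simp [h0]
    · set r : ℝ := ∑ i, Complex.normSq (y i) with hr
      have hrpos : 0 < r := by
        obtain ⟨i, hi⟩ := Function.ne_iff.mp h0
        exact Finset.sum_pos' (fun j _ => Complex.normSq_nonneg _)
          ⟨i, Finset.mem_univ i, by simpa using Complex.normSq_pos.mpr (by simpa using hi)⟩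
      have hyy : star y ⬝ᵥ y = (r : ℂ) := aux_dot_self y
      have hrne : (r : ℂ) ≠ 0 := by exact_mod_cast hrpos.ne'
      set t : ℝ := Real.sqrt r with ht
      have htpos : 0 < t := Real.sqrt_pos.mpr hrpos
      have ht2 : (t : ℂ) * (t : ℂ) = (r : ℂ) := by
        rw [← Complex.ofReal_mul, Real.mul_self_sqrt hrpos.le]
      have htne : (t : ℂ) ≠ 0 := by exact_mod_cast htpos.ne'
      set yh : Fin n → ℂ := ((t : ℂ))⁻¹ • y with hyh
      have h1 : star yh ⬝ᵥ yh = 1 := by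
        rw [hyh, star_smul, smul_dotProduct, dotProduct_smul, hyy,
          star_inv₀, RCLike.star_def, Complex.conj_ofReal, smul_eq_mul, smul_eq_mul]
        field_simp
        exact ht2.symm.trans (sq _).symm
      have hz : star yh ⬝ᵥ c.mulVec yh = (r : ℂ)⁻¹ * (star y ⬝ᵥ c.mulVec y) := by
        rw [hyh, star_smul, smul_dotProduct, mulVec_smul, dotProduct_smul,
          star_inv₀, RCLike.star_def, Complex.conj_ofReal, smul_eq_mul, smul_eq_mul,
          ← mul_assoc, ← mul_inv, ht2]
      have hmem := aux_mem_kNumRange_one c yh h1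
      rw [hz] at hmem
      have hle := hu _ hmem
      -- s = r * (z - l)
      have hs : star y ⬝ᵥ d.mulVec y
          = (r : ℂ) * ((r : ℂ)⁻¹ * (star y ⬝ᵥ c.mulVec y) - l) := by
        rw [hddot, hyy]
        field_simp
      rw [hdot]
      set w : ℂ := (starRingEnd ℂ) u * (star y ⬝ᵥ d.mulVec y) with hw
      have hwre : w.re ≤ 0 := by
        have hrw : w = (r : ℂ) * ((starRingEnd ℂ) u * ((r : ℂ)⁻¹ * (star y ⬝ᵥ c.mulVec y) - l)) := by
          rw [hw, hs]; ring
        rw [hrw, Complex.re_ofReal_mul]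
        exact mul_nonpos_of_nonneg_of_nonpos hrpos.le hle
      have : u * star (star y ⬝ᵥ d.mulVec y) = star w := by
        rw [hw]; simp [mul_comm]
      rw [this, RCLike.star_def, Complex.add_conj]
      have : (2 * w.re : ℝ) ≤ 0 := by linarith
      exact_mod_cast this
  have hherm : Aᴴ = A := by
    rw [hA]
    simp only [conjTranspose_add, conjTranspose_smul, conjTranspose_conjTranspose,
      RCLike.star_def, Complex.conj_conj]
    exact add_comm _ _
  have hpsd : (-A).PosSemidef := by
    refine posSemidef_iff_dotProduct_mulVec.mpr ⟨by rw [IsHermitian, conjTranspose_neg, hherm], fun y => ?_⟩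
    rw [neg_mulVec, dotProduct_neg]
    exact neg_nonneg.mpr (hnonpos y)
  have hAx0 : star x ⬝ᵥ A.mulVec x = 0 := by
    rw [hdot, hddot, hx, hxl, mul_one, sub_self]
    simp
  have := (hpsd.dotProduct_mulVec_zero_iff x).mp (by rw [neg_mulVec, dotProduct_neg, hAx0, neg_zero])
  rw [neg_mulVec, neg_eq_zero] at this
  exact this

lemma aux_det_ne {u₁ u₂ : ℂ} (h : LinearIndependent ℝ ![u₁, u₂]) :
    (starRingEnd ℂ) u₁ * u₂ - u₁ * (starRingEnd ℂ) u₂ ≠ 0 := by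
  rw [linearIndependent_fin2] at h
  obtain ⟨h2, h12⟩ := h
  simp only [Matrix.cons_val_one, Matrix.head_cons, Matrix.cons_val_zero] at h2 h12
  intro hD
  have hw : (starRingEnd ℂ) (u₁ * (starRingEnd ℂ) u₂) = u₁ * (starRingEnd ℂ) u₂ := by
    rw [RingHom.map_mul, Complex.conj_conj]
    linear_combination hD
  have hre : ((u₁ * (starRingEnd ℂ) u₂).re : ℂ) = u₁ * (starRingEnd ℂ) u₂ :=
    Complex.conj_eq_iff_re.mp hw
  have hns : Complex.normSq u₂ ≠ 0 := (Complex.normSq_pos.mpr h2).ne'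
  apply h12 ((u₁ * (starRingEnd ℂ) u₂).re / Complex.normSq u₂)
  rw [Complex.real_smul]
  push_cast
  rw [hre]
  have : (Complex.normSq u₂ : ℂ) = (starRingEnd ℂ) u₂ * u₂ := Complex.normSq_eq_conj_mul_self
  field_simp
  rw [this]
  ring

/-- A corner of the numerical range `W(c) = W₁(c)` is a reducing eigenvalue of `c`. -/
theorem corner_is_reducing_eigenvalue (n : ℕ) (hn : 0 < n)
    (c : Matrix (Fin n) (Fin n) ℂ) (l : ℂ)
    (hcorner : CornerPt (kNumRange n 1 c) l) :
    ∃ x : Fin n → ℂ, star x ⬝ᵥ x = 1 ∧ c.mulVec x = l • x ∧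
      cᴴ.mulVec x = (starRingEnd ℂ) l • x := by
  obtain ⟨hl, u₁, u₂, hli, hu₁, hu₂⟩ := hcorner
  obtain ⟨xf, horth, hw⟩ := hl
  set x : Fin n → ℂ := xf 0 with hxdef
  have hx : star x ⬝ᵥ x = 1 := by simpa using horth 0 0
  have hxl : star x ⬝ᵥ c.mulVec x = l := by
    simp only [Nat.cast_one, ne_eq, one_ne_zero, not_false_iff, div_self,
      Fin.sum_univ_one, one_mul] at hw
    simp [hw, hxdef]
  have e₁ := aux_key c l u₁ hu₁ x hx hxl
  have e₂ := aux_key c l u₂ hu₂ x hx hxl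
  rw [add_mulVec, smul_mulVec, smul_mulVec] at e₁ e₂
  have hD := aux_det_ne hli
  have hcomp : ∀ i : Fin n, ((c - l • 1).mulVec x) i = 0 ∧ ((c - l • 1)ᴴ.mulVec x) i = 0 := by
    intro i
    have h1 : (starRingEnd ℂ) u₁ * ((c - l • 1).mulVec x) i
        + u₁ * ((c - l • 1)ᴴ.mulVec x) i = 0 := by
      have := congrFun e₁ i
      simpa only [Pi.add_apply, Pi.smul_apply, smul_eq_mul, Pi.zero_apply] using this
    have h2 : (starRingEnd ℂ) u₂ * ((c - l • 1).mulVec x) i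
        + u₂ * ((c - l • 1)ᴴ.mulVec x) i = 0 := by
      have := congrFun e₂ i
      simpa only [Pi.add_apply, Pi.smul_apply, smul_eq_mul, Pi.zero_apply] using this
    constructor
    · have hz : ((starRingEnd ℂ) u₁ * u₂ - u₁ * (starRingEnd ℂ) u₂)
          * ((c - l • 1).mulVec x) i = 0 := by
        linear_combination u₂ * h1 - u₁ * h2
      exact (mul_eq_zero.mp hz).resolve_left hD
    · have hz : ((starRingEnd ℂ) u₁ * u₂ - u₁ * (starRingEnd ℂ) u₂)
          * ((c - l • 1)ᴴ.mulVec x) i = 0 := by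
        linear_combination (starRingEnd ℂ) u₁ * h2 - (starRingEnd ℂ) u₂ * h1
      exact (mul_eq_zero.mp hz).resolve_left hD
  refine ⟨x, hx, ?_, ?_⟩
  · have hv : (c - l • 1).mulVec x = 0 := funext fun i => (hcomp i).1
    rw [sub_mulVec, smul_mulVec, one_mulVec, sub_eq_zero] at hv
    exact hv
  · have hv : (c - l • 1)ᴴ.mulVec x = 0 := funext fun i => (hcomp i).2
    rw [conjTranspose_sub, conjTranspose_smul, conjTranspose_one, sub_mulVec,
      smul_mulVec, one_mulVec, sub_eq_zero, RCLike.star_def] at hv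
    exact hv
end

section
/- Fix 0 < t < 1 and let a be an extreme point of the convex set {a ∈ N : 0 ≤ a ≤ 1 and τ(a) = t}. Then either a is an orthogonal projection in N, or there exist orthogonal projections p and q in N with p q = 0 and a real number α with 0 < α < 1 such that a = p + α·q and the compression q N q = {q x q : x ∈ N} is one-dimensional (equal to ℂ·q). -/
open Matrix Polynomial
open scoped ComplexOrder


variable {n : ℕ} {A : Matrix (Fin n) (Fin n) ℂ}

noncomputable def fm (hA : A.IsHermitian) (f : ℝ → ℝ) : Matrix (Fin n) (Fin n) ℂ :=
  (hA.eigenvectorUnitary : Matrix (Fin n) (Fin n) ℂ) *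
    diagonal (fun i => (f (hA.eigenvalues i) : ℂ)) *
    star (hA.eigenvectorUnitary : Matrix (Fin n) (Fin n) ℂ)

lemma fm_id (hA : A.IsHermitian) : fm hA (fun x => x) = A := by
  rw [fm]
  conv_rhs => rw [hA.spectral_theorem]
  rfl

lemma fm_const (hA : A.IsHermitian) (r : ℝ) : fm hA (fun _ => r) = (r : ℂ) • 1 := by
  rw [fm, ← smul_one_eq_diagonal, Matrix.mul_smul, Matrix.mul_one, Matrix.smul_mul,
    (Matrix.mem_unitaryGroup_iff).mp hA.eigenvectorUnitary.2]

lemma fm_one (hA : A.IsHermitian) : fm hA (fun _ => 1) = 1 := by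
  rw [fm_const]; simp

lemma fm_mul (hA : A.IsHermitian) (f g : ℝ → ℝ) :
    fm hA f * fm hA g = fm hA (fun x => f x * g x) := by
  rw [fm, fm, fm]
  simp only [Matrix.mul_assoc]
  rw [← Matrix.mul_assoc (star (hA.eigenvectorUnitary : Matrix (Fin n) (Fin n) ℂ))
    (hA.eigenvectorUnitary : Matrix (Fin n) (Fin n) ℂ), Unitary.coe_star_mul_self,
    Matrix.one_mul, ← Matrix.mul_assoc (diagonal _) (diagonal _), diagonal_mul_diagonal]
  congr 2
  funext i
  push_cast
  ring

lemma fm_add (hA : A.IsHermitian) (f g : ℝ → ℝ) :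
    fm hA f + fm hA g = fm hA (fun x => f x + g x) := by
  rw [fm, fm, fm, ← Matrix.add_mul, ← Matrix.mul_add, diagonal_add]
  congr 2
  funext i
  push_cast
  ring

lemma fm_smul (hA : A.IsHermitian) (r : ℝ) (f : ℝ → ℝ) :
    (r : ℂ) • fm hA f = fm hA (fun x => r * f x) := by
  have h1 : ((r:ℂ) • fun i => (f (hA.eigenvalues i) : ℂ)) =
      fun i => ((r * f (hA.eigenvalues i) : ℝ) : ℂ) := by
    funext i
    simp [Pi.smul_apply]
  rw [fm, fm, ← Matrix.smul_mul, ← Matrix.mul_smul, ← diagonal_smul, h1]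

lemma fm_sub (hA : A.IsHermitian) (f g : ℝ → ℝ) :
    fm hA f - fm hA g = fm hA (fun x => f x - g x) := by
  have := fm_add hA (fun x => f x - g x) g
  simp only [sub_add_cancel] at this
  rw [← this, add_sub_cancel_right]

lemma fm_herm (hA : A.IsHermitian) (f : ℝ → ℝ) : (fm hA f).IsHermitian := by
  rw [fm, Matrix.IsHermitian, conjTranspose_mul, conjTranspose_mul, diagonal_conjTranspose]
  have h1 : star (fun i => (f (hA.eigenvalues i) : ℂ)) = fun i => (f (hA.eigenvalues i) : ℂ) := by
    funext i
    simp [Pi.star_apply, RCLike.star_def, Complex.conj_ofReal]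
  rw [h1, ← Matrix.star_eq_conjTranspose, ← Matrix.star_eq_conjTranspose, star_star,
    Matrix.mul_assoc]

lemma fm_psd (hA : A.IsHermitian) (f : ℝ → ℝ) (hf : ∀ i, 0 ≤ f (hA.eigenvalues i)) :
    (fm hA f).PosSemidef := by
  have hd : (diagonal (fun i => (f (hA.eigenvalues i) : ℂ))).PosSemidef := by
    rw [posSemidef_diagonal_iff]
    intro i
    rw [Complex.zero_le_real]
    exact hf i
  have := hd.mul_mul_conjTranspose_same
    (hA.eigenvectorUnitary : Matrix (Fin n) (Fin n) ℂ)
  rwa [← Matrix.star_eq_conjTranspose] at this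

lemma fm_trace (hA : A.IsHermitian) (f : ℝ → ℝ) :
    (fm hA f).trace = ((∑ i, f (hA.eigenvalues i) : ℝ) : ℂ) := by
  rw [fm, Matrix.trace_mul_cycle, Unitary.coe_star_mul_self,
    Matrix.one_mul, trace_diagonal]
  push_cast
  rfl

lemma fm_congr (hA : A.IsHermitian) {f g : ℝ → ℝ}
    (h : ∀ i, f (hA.eigenvalues i) = g (hA.eigenvalues i)) : fm hA f = fm hA g := by
  have h1 : (fun i => (f (hA.eigenvalues i) : ℂ)) = fun i => (g (hA.eigenvalues i) : ℂ) := by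
    funext i; rw [h i]
  rw [fm, fm, h1]


lemma aeval_conj (U V D : Matrix (Fin n) (Fin n) ℂ) (hUV : U * V = 1) (hVU : V * U = 1)
    (P : Polynomial ℂ) :
    Polynomial.aeval (U * D * V) P = U * Polynomial.aeval D P * V := by
  induction P using Polynomial.induction_on with
  | C r =>
    simp only [Polynomial.aeval_C, Algebra.algebraMap_eq_smul_one, Matrix.mul_smul,
      Matrix.smul_mul, Matrix.mul_one, hUV]
  | add p q hp hq =>
    simp only [map_add, hp, hq, Matrix.mul_add, Matrix.add_mul]
  | monomial k r ih =>
    have h1 : (Polynomial.C r * Polynomial.X ^ (k + 1)) =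
        (Polynomial.C r * Polynomial.X ^ k) * Polynomial.X := by ring
    rw [h1, _root_.map_mul (Polynomial.aeval (U * D * V)) (Polynomial.C r * Polynomial.X ^ k)
      Polynomial.X, _root_.map_mul (Polynomial.aeval D) (Polynomial.C r * Polynomial.X ^ k)
      Polynomial.X, Polynomial.aeval_X, Polynomial.aeval_X, ih]
    rw [Matrix.mul_assoc (U * aeval D (Polynomial.C r * Polynomial.X ^ k)) V,
      ← Matrix.mul_assoc V (U * D) V, ← Matrix.mul_assoc V U D, hVU, Matrix.one_mul]
    simp only [Matrix.mul_assoc]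

lemma aeval_diagonal (d : Fin n → ℂ) (P : Polynomial ℂ) :
    Polynomial.aeval (diagonal d) P = diagonal (fun i => P.eval (d i)) := by
  have h1 : diagonal d = Matrix.diagonalAlgHom ℂ d := rfl
  rw [h1, Polynomial.aeval_algHom_apply]
  have h2 : (Polynomial.aeval d P : Fin n → ℂ) = fun i => P.eval (d i) := by
    funext i
    have h3 : (Polynomial.aeval d) P i =
        (Pi.evalAlgHom ℂ (fun _ : Fin n => ℂ) i) ((Polynomial.aeval d) P) := rfl
    rw [h3, ← Polynomial.aeval_algHom_apply (Pi.evalAlgHom ℂ (fun _ : Fin n => ℂ) i) d P,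
      Polynomial.coe_aeval_eq_eval]
    rfl
  rw [h2]
  rfl



section Part3
variable {n : ℕ} {A K : Matrix (Fin n) (Fin n) ℂ}

lemma fm_mem {S : StarSubalgebra ℂ (Matrix (Fin n) (Fin n) ℂ)} (hA : A.IsHermitian)
    (hAS : A ∈ S) (f : ℝ → ℝ) : fm hA f ∈ S := by
  classical
  set s : Finset ℂ := Finset.image (fun i => (hA.eigenvalues i : ℂ)) Finset.univ with hs
  set P : Polynomial ℂ := Lagrange.interpolate s id (fun z => (f z.re : ℂ)) with hP
  have hev : ∀ i, P.eval ((hA.eigenvalues i : ℂ)) = (f (hA.eigenvalues i) : ℂ) := by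
    intro i
    have hmem : ((hA.eigenvalues i : ℂ)) ∈ s := by
      rw [hs]; exact Finset.mem_image_of_mem _ (Finset.mem_univ i)
    have := Lagrange.eval_interpolate_at_node (r := fun z => (f z.re : ℂ))
      (Set.injOn_id _) hmem
    simpa [hP] using this
  have key : Polynomial.aeval A P = fm hA f := by
    conv_lhs => rw [hA.spectral_theorem, Unitary.conjStarAlgAut_apply]
    rw [_root_.aeval_conj _ _ _ ((Matrix.mem_unitaryGroup_iff).mp hA.eigenvectorUnitary.2)
      (Unitary.coe_star_mul_self _), aeval_diagonal]
    have hd : (fun i => Polynomial.eval ((RCLike.ofReal ∘ hA.eigenvalues) i) P) =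
        (fun i : Fin n => ((f (hA.eigenvalues i) : ℝ) : ℂ)) := funext fun i => hev i
    rw [hd, fm]
  rw [← key]
  have hle : Algebra.adjoin ℂ ({A} : Set (Matrix (Fin n) (Fin n) ℂ)) ≤ S.toSubalgebra :=
    Algebra.adjoin_le (by simpa using hAS)
  exact hle (Polynomial.aeval_mem_adjoin_singleton ℂ A)

lemma smul_psd {r : ℝ} (hr : 0 ≤ r) (hK : K.PosSemidef) : ((r : ℂ) • K).PosSemidef := by
  refine posSemidef_iff_dotProduct_mulVec.mpr ⟨?_, ?_⟩
  · rw [Matrix.IsHermitian, conjTranspose_smul, hK.1.eq]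
    congr 1
    simp [RCLike.star_def, Complex.conj_ofReal]
  · intro x
    rw [Matrix.smul_mulVec, dotProduct_smul, smul_eq_mul]
    exact mul_nonneg (by rw [← Complex.zero_le_real] at hr; exact_mod_cast hr) (hK.dotProduct_mulVec_nonneg x)

lemma herm_bound (hK : K.IsHermitian) :
    ∃ M : ℝ, 0 ≤ M ∧ ((M : ℂ) • 1 - K).PosSemidef ∧ ((M : ℂ) • 1 + K).PosSemidef := by
  refine ⟨∑ i, |hK.eigenvalues i|, Finset.sum_nonneg fun i _ => abs_nonneg _, ?_, ?_⟩
  · have h1 : fm hK (fun x => (∑ i, |hK.eigenvalues i|) - x) =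
        ((∑ i, |hK.eigenvalues i| : ℝ) : ℂ) • (1 : Matrix (Fin n) (Fin n) ℂ) - K := by
      rw [← fm_sub hK, fm_const, fm_id]
    rw [← h1]
    refine fm_psd hK _ fun i => ?_
    have := Finset.single_le_sum (f := fun i => |hK.eigenvalues i|)
      (fun i _ => abs_nonneg _) (Finset.mem_univ i)
    have h2 := le_abs_self (hK.eigenvalues i)
    linarith
  · have h1 : fm hK (fun x => (∑ i, |hK.eigenvalues i|) + x) =
        ((∑ i, |hK.eigenvalues i| : ℝ) : ℂ) • (1 : Matrix (Fin n) (Fin n) ℂ) + K := by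
      rw [← fm_add hK, fm_const, fm_id]
    rw [← h1]
    refine fm_psd hK _ fun i => ?_
    have := Finset.single_le_sum (f := fun i => |hK.eigenvalues i|)
      (fun i _ => abs_nonneg _) (Finset.mem_univ i)
    have h2 := neg_abs_le (hK.eigenvalues i)
    linarith

end Part3
/-- indicator of a single point -/
noncomputable def chi (w : ℝ) : ℝ → ℝ := fun x => if x = w then 1 else 0

lemma chi_self (w : ℝ) : chi w w = 1 := if_pos rfl

lemma chi_of_ne {x w : ℝ} (h : x ≠ w) : chi w x = 0 := if_neg h

lemma chi_nonneg (w x : ℝ) : 0 ≤ chi w x := by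
  rw [chi]; split_ifs <;> norm_num

lemma chi_le_one (w x : ℝ) : chi w x ≤ 1 := by
  rw [chi]; split_ifs <;> norm_num

section MainAux
variable {n : ℕ} {A : Matrix (Fin n) (Fin n) ℂ}

lemma fm_conj (hA : A.IsHermitian) (f : ℝ → ℝ) :
    star (hA.eigenvectorUnitary : Matrix (Fin n) (Fin n) ℂ) * fm hA f *
      (hA.eigenvectorUnitary : Matrix (Fin n) (Fin n) ℂ) =
    diagonal (fun i => (f (hA.eigenvalues i) : ℂ)) := by
  rw [fm]
  simp only [Matrix.mul_assoc, Unitary.coe_star_mul_self, Matrix.mul_one]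
  rw [← Matrix.mul_assoc, Unitary.coe_star_mul_self, Matrix.one_mul]

end MainAux

/-- An extreme point of `{a ∈ N : 0 ≤ a ≤ 1, τ(a) = t}` is a projection in `N`, or has
the form `p + α·q` with `p, q` orthogonal projections in `N`, `p·q = 0`, `0 < α < 1`,
and `q N q = ℂ·q` one-dimensional. -/
theorem extremePoint_structure (n : ℕ) (hn : 0 < n) (c : Matrix (Fin n) (Fin n) ℂ)
    (t : ℝ) (ht0 : 0 < t) (ht1 : t < 1)
    (N : StarSubalgebra ℂ (Matrix (Fin n) (Fin n) ℂ))
    (hN : N = StarAlgebra.adjoin ℂ ({c} : Set (Matrix (Fin n) (Fin n) ℂ)))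
    (a : Matrix (Fin n) (Fin n) ℂ)
    (ha : a ∈ Set.extremePoints ℝ
      {b : Matrix (Fin n) (Fin n) ℂ |
        b ∈ N ∧ b.PosSemidef ∧ (1 - b).PosSemidef ∧ b.trace / n = (t : ℂ)}) :
    (a ∈ N ∧ a.IsHermitian ∧ a * a = a) ∨
      ∃ (p q : Matrix (Fin n) (Fin n) ℂ) (α : ℝ),
        p ∈ N ∧ q ∈ N ∧ p.IsHermitian ∧ p * p = p ∧ q.IsHermitian ∧ q * q = q ∧
        p * q = 0 ∧ 0 < α ∧ α < 1 ∧ a = p + (α : ℂ) • q ∧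
        {y : Matrix (Fin n) (Fin n) ℂ | ∃ x ∈ N, y = q * x * q} =
          {y : Matrix (Fin n) (Fin n) ℂ | ∃ γ : ℂ, y = γ • q} := by
  classical
  rw [mem_extremePoints] at ha
  obtain ⟨haS, hext⟩ := ha
  obtain ⟨haN, hpsd, hpsd1, htr⟩ := haS
  have hA : a.IsHermitian := hpsd.1
  -- rigidity from extremality
  have key : ∀ (h : Matrix (Fin n) (Fin n) ℂ) (ε : ℝ), 0 < ε → h ∈ N → h.trace = 0 →
      (a + (ε : ℂ) • h).PosSemidef → (1 - (a + (ε : ℂ) • h)).PosSemidef →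
      (a - (ε : ℂ) • h).PosSemidef → (1 - (a - (ε : ℂ) • h)).PosSemidef → h = 0 := by
    intro h ε hε hhN hhtr hp1 hp2 hp3 hp4
    have htr' : ∀ s : ℂ, (a + s • h).trace / n = (t : ℂ) := by
      intro s
      rw [Matrix.trace_add, Matrix.trace_smul, hhtr, smul_zero, add_zero]
      exact htr
    have hxS : (a - (ε : ℂ) • h) ∈ {b : Matrix (Fin n) (Fin n) ℂ |
        b ∈ N ∧ b.PosSemidef ∧ (1 - b).PosSemidef ∧ b.trace / n = (t : ℂ)} := by
      refine ⟨N.sub_mem haN (N.smul_mem hhN _), hp3, hp4, ?_⟩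
      have := htr' (-(ε : ℂ))
      rwa [neg_smul, ← sub_eq_add_neg] at this
    have hyS : (a + (ε : ℂ) • h) ∈ {b : Matrix (Fin n) (Fin n) ℂ |
        b ∈ N ∧ b.PosSemidef ∧ (1 - b).PosSemidef ∧ b.trace / n = (t : ℂ)} :=
      ⟨N.add_mem haN (N.smul_mem hhN _), hp1, hp2, htr' _⟩
    have hseg : a ∈ openSegment ℝ (a - (ε : ℂ) • h) (a + (ε : ℂ) • h) := by
      refine ⟨1/2, 1/2, by norm_num, by norm_num, by norm_num, ?_⟩
      module
    have h0 := (hext _ hxS _ hyS hseg).1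
    rw [sub_eq_self] at h0
    rcases smul_eq_zero.mp h0 with h1 | h1
    · exact absurd h1 (by exact_mod_cast hε.ne')
    · exact h1
  -- eigenvalue bounds
  have hnn : ∀ i, 0 ≤ hA.eigenvalues i := fun i => hpsd.eigenvalues_nonneg i
  have hle1 : ∀ i, hA.eigenvalues i ≤ 1 := by
    intro i
    have h1 : fm hA (fun x => 1 - x) = 1 - a := by rw [← fm_sub hA, fm_one, fm_id]
    have h2 := hpsd1.conjTranspose_mul_mul_same
      (hA.eigenvectorUnitary : Matrix (Fin n) (Fin n) ℂ)
    rw [← h1, ← Matrix.star_eq_conjTranspose, fm_conj] at h2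
    have h3 := posSemidef_diagonal_iff.mp h2 i
    rw [Complex.zero_le_real] at h3
    linarith
  -- at most one eigenvalue strictly between 0 and 1
  have uniq : ∀ i j, 0 < hA.eigenvalues i → hA.eigenvalues i < 1 →
      0 < hA.eigenvalues j → hA.eigenvalues j < 1 →
      hA.eigenvalues i = hA.eigenvalues j := by
    by_contra hcon
    push_neg at hcon
    obtain ⟨i, j, hi0, hi1, hj0, hj1, hij⟩ := hcon
    obtain ⟨u, hu⟩ : ∃ x, hA.eigenvalues i = x := ⟨_, rfl⟩
    obtain ⟨v, hv⟩ : ∃ x, hA.eigenvalues j = x := ⟨_, rfl⟩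
    rw [hu] at hi0 hi1
    rw [hv] at hj0 hj1
    rw [hu, hv] at hij
    obtain ⟨Te, hTedef⟩ : ∃ x, x = ∑ k, chi u (hA.eigenvalues k) := ⟨_, rfl⟩
    obtain ⟨Tf, hTfdef⟩ : ∃ x, x = ∑ k, chi v (hA.eigenvalues k) := ⟨_, rfl⟩
    have hTe : 1 ≤ Te := by
      rw [hTedef]
      calc (1 : ℝ) = chi u (hA.eigenvalues i) := by rw [hu, chi_self]
        _ ≤ _ := Finset.single_le_sum (fun k _ => chi_nonneg u _) (Finset.mem_univ i)
    have hTf : 1 ≤ Tf := by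
      rw [hTfdef]
      calc (1 : ℝ) = chi v (hA.eigenvalues j) := by rw [hv, chi_self]
        _ ≤ _ := Finset.single_le_sum (fun k _ => chi_nonneg v _) (Finset.mem_univ j)
    obtain ⟨g, hg⟩ : ∃ g : ℝ → ℝ, g = fun x => Tf * chi u x - Te * chi v x := ⟨_, rfl⟩
    obtain ⟨ε, hεdef⟩ : ∃ x : ℝ, x = min (min u (1 - u)) (min v (1 - v)) / (Te + Tf) := ⟨_, rfl⟩
    have hε : 0 < ε := by
      rw [hεdef]
      exact div_pos (lt_min (lt_min hi0 (by linarith)) (lt_min hj0 (by linarith))) (by linarith)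
    have hbd : ∀ x, 0 ≤ x → x ≤ 1 → (0 ≤ x + ε * g x ∧ x + ε * g x ≤ 1) ∧
        (0 ≤ x - ε * g x ∧ x - ε * g x ≤ 1) := by
      intro x hx0 hx1
      have hεsum : ε * (Te + Tf) = min (min u (1 - u)) (min v (1 - v)) := by
        rw [hεdef]; field_simp
      by_cases hxu : x = u
      · have hxv : x ≠ v := by rw [hxu]; exact hij
        have hgx : g x = Tf := by
          rw [hg]; simp only [chi_of_ne hxv]; rw [hxu, chi_self]; ring
        rw [hgx, hxu]
        have h1 : ε * Tf ≤ min (min u (1 - u)) (min v (1 - v)) := by nlinarith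
        have h2 : min (min u (1 - u)) (min v (1 - v)) ≤ u :=
          le_trans (min_le_left _ _) (min_le_left _ _)
        have h3 : min (min u (1 - u)) (min v (1 - v)) ≤ 1 - u :=
          le_trans (min_le_left _ _) (min_le_right _ _)
        have h4 : 0 ≤ ε * Tf := by positivity
        exact ⟨⟨by linarith, by linarith⟩, ⟨by linarith, by linarith⟩⟩
      · by_cases hxv : x = v
        · have hgx : g x = -Te := by
            rw [hg]; simp only [chi_of_ne hxu]; rw [hxv, chi_self]; ring
          rw [hgx, hxv]
          have h1 : ε * Te ≤ min (min u (1 - u)) (min v (1 - v)) := by nlinarith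
          have h2 : min (min u (1 - u)) (min v (1 - v)) ≤ v :=
            le_trans (min_le_right _ _) (min_le_left _ _)
          have h3 : min (min u (1 - u)) (min v (1 - v)) ≤ 1 - v :=
            le_trans (min_le_right _ _) (min_le_right _ _)
          have h4 : 0 ≤ ε * Te := by positivity
          exact ⟨⟨by linarith, by linarith⟩, ⟨by linarith, by linarith⟩⟩
        · have hgx : g x = 0 := by
            rw [hg]; simp only [chi_of_ne hxu, chi_of_ne hxv]; ring
          rw [hgx]
          simp only [mul_zero, add_zero, sub_zero]
          exact ⟨⟨hx0, hx1⟩, ⟨hx0, hx1⟩⟩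
    have hhN : fm hA g ∈ N := fm_mem hA haN g
    have hhtr : (fm hA g).trace = 0 := by
      rw [fm_trace, Complex.ofReal_eq_zero, hg]
      have h5 : ∑ k, (Tf * chi u (hA.eigenvalues k) - Te * chi v (hA.eigenvalues k)) =
          Tf * (∑ k, chi u (hA.eigenvalues k)) - Te * (∑ k, chi v (hA.eigenvalues k)) := by
        rw [Finset.mul_sum, Finset.mul_sum, ← Finset.sum_sub_distrib]
      rw [h5, ← hTedef, ← hTfdef]
      ring
    have hfm1 : fm hA (fun x => x + ε * g x) = a + (ε : ℂ) • fm hA g := by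
      rw [← fm_add hA, fm_id, ← fm_smul]
    have hfm2 : fm hA (fun x => 1 - (x + ε * g x)) = 1 - (a + (ε : ℂ) • fm hA g) := by
      rw [← fm_sub hA, fm_one, ← fm_add hA, fm_id, ← fm_smul]
    have hfm3 : fm hA (fun x => x - ε * g x) = a - (ε : ℂ) • fm hA g := by
      rw [← fm_sub hA, fm_id, ← fm_smul]
    have hfm4 : fm hA (fun x => 1 - (x - ε * g x)) = 1 - (a - (ε : ℂ) • fm hA g) := by
      rw [← fm_sub hA, fm_one, ← fm_sub hA, fm_id, ← fm_smul]
    have hzero : fm hA g = 0 := by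
      refine key (fm hA g) ε hε hhN hhtr ?_ ?_ ?_ ?_
      · rw [← hfm1]; exact fm_psd hA _ fun k => ((hbd _ (hnn k) (hle1 k)).1).1
      · rw [← hfm2]
        exact fm_psd hA _ fun k => by have := ((hbd _ (hnn k) (hle1 k)).1).2; linarith
      · rw [← hfm3]; exact fm_psd hA _ fun k => ((hbd _ (hnn k) (hle1 k)).2).1
      · rw [← hfm4]
        exact fm_psd hA _ fun k => by have := ((hbd _ (hnn k) (hle1 k)).2).2; linarith
    have htre : (fm hA g * fm hA (chi u)).trace = ((Tf * Te : ℝ) : ℂ) := by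
      rw [fm_mul hA, fm_trace]
      congr 1
      have hpt : ∀ x, g x * chi u x = Tf * chi u x := by
        intro x
        by_cases hxu : x = u
        · have hxv : x ≠ v := by rw [hxu]; exact hij
          rw [hg]; simp only [chi_of_ne hxv]; rw [hxu, chi_self]; ring
        · rw [hg]; simp only [chi_of_ne hxu]; ring
      calc ∑ k, g (hA.eigenvalues k) * chi u (hA.eigenvalues k)
          = ∑ k, Tf * chi u (hA.eigenvalues k) := Finset.sum_congr rfl fun k _ => hpt _
        _ = Tf * Te := by rw [← Finset.mul_sum, ← hTedef]
    rw [hzero, Matrix.zero_mul, Matrix.trace_zero] at htre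
    have : Tf * Te = 0 := by exact_mod_cast htre.symm
    nlinarith
  by_cases hex : ∃ i, 0 < hA.eigenvalues i ∧ hA.eigenvalues i < 1
  · right
    obtain ⟨i0, hα0, hα1⟩ := hex
    obtain ⟨α, hαdef⟩ : ∃ x, hA.eigenvalues i0 = x := ⟨_, rfl⟩
    rw [hαdef] at hα0 hα1
    have hα1' : α ≠ 1 := ne_of_lt hα1
    have hα0' : α ≠ 0 := ne_of_gt hα0
    have hcases : ∀ k, hA.eigenvalues k = 0 ∨ hA.eigenvalues k = 1 ∨ hA.eigenvalues k = α := by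
      intro k
      rcases eq_or_lt_of_le (hnn k) with h0 | h0
      · exact Or.inl h0.symm
      · rcases eq_or_lt_of_le (hle1 k) with h1 | h1
        · exact Or.inr (Or.inl h1)
        · refine Or.inr (Or.inr ?_)
          have := uniq k i0 h0 h1 (by rw [hαdef]; exact hα0) (by rw [hαdef]; exact hα1)
          rw [this, hαdef]
    have hqH : (fm hA (chi α)).IsHermitian := fm_herm hA _
    have hqq : fm hA (chi α) * fm hA (chi α) = fm hA (chi α) := by
      rw [fm_mul hA]
      refine fm_congr hA fun k => ?_
      by_cases hk : hA.eigenvalues k = α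
      · simp only [hk, chi_self]; ring
      · simp only [chi_of_ne hk]; ring
    have hppp : fm hA (chi 1) * fm hA (chi 1) = fm hA (chi 1) := by
      rw [fm_mul hA]
      refine fm_congr hA fun k => ?_
      by_cases hk : hA.eigenvalues k = 1
      · simp only [hk, chi_self]; ring
      · simp only [chi_of_ne hk]; ring
    have hpq : fm hA (chi 1) * fm hA (chi α) = 0 := by
      rw [fm_mul hA]
      have h6 : fm hA (fun x => chi 1 x * chi α x) = fm hA (fun _ => 0) := by
        refine fm_congr hA fun k => ?_
        by_cases hk : hA.eigenvalues k = 1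
        · simp only [hk, chi_of_ne (fun hh => hα1' hh.symm : (1:ℝ) ≠ α), chi_self]; ring
        · simp only [chi_of_ne hk]; ring
      rw [h6, fm_const]
      simp
    -- key decomposition identities
    have e_a : fm hA (fun x => x * (1 - chi α x)) + (α : ℂ) • fm hA (chi α) = a := by
      rw [fm_smul hA α (chi α), fm_add hA]
      refine (fm_congr hA fun k => ?_).trans (fm_id hA)
      rcases hcases k with h | h | h
      · simp only [h, chi_of_ne (fun hh => hα0' hh.symm : (0:ℝ) ≠ α)]; ring
      · simp only [h, chi_of_ne (fun hh => hα1' hh.symm : (1:ℝ) ≠ α)]; ring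
      · simp only [h, chi_self]; ring
    have e_b : fm hA (fun x => (1 - x) * (1 - chi α x)) + ((1 - α : ℝ) : ℂ) • fm hA (chi α)
        = 1 - a := by
      rw [fm_smul hA (1 - α) (chi α), fm_add hA]
      have h7 : fm hA (fun x => 1 - x) = 1 - a := by rw [← fm_sub hA, fm_one, fm_id]
      refine (fm_congr hA fun k => ?_).trans h7
      rcases hcases k with h | h | h
      · simp only [h, chi_of_ne (fun hh => hα0' hh.symm : (0:ℝ) ≠ α)]; ring
      · simp only [h, chi_of_ne (fun hh => hα1' hh.symm : (1:ℝ) ≠ α)]; ring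
      · simp only [h, chi_self]; ring
    have hf1nn : ∀ k, 0 ≤ hA.eigenvalues k * (1 - chi α (hA.eigenvalues k)) := by
      intro k
      rcases hcases k with h | h | h
      · simp only [h, chi_of_ne (fun hh => hα0' hh.symm : (0:ℝ) ≠ α)]; norm_num
      · simp only [h, chi_of_ne (fun hh => hα1' hh.symm : (1:ℝ) ≠ α)]; norm_num
      · simp only [h, chi_self]; norm_num
    have hf2nn : ∀ k, 0 ≤ (1 - hA.eigenvalues k) * (1 - chi α (hA.eigenvalues k)) := by
      intro k
      rcases hcases k with h | h | h
      · simp only [h, chi_of_ne (fun hh => hα0' hh.symm : (0:ℝ) ≠ α)]; norm_num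
      · simp only [h, chi_of_ne (fun hh => hα1' hh.symm : (1:ℝ) ≠ α)]; norm_num
      · simp only [h, chi_self]; norm_num
    -- the compression is one-dimensional: main subclaim
    have subclaim : ∀ w : Matrix (Fin n) (Fin n) ℂ, w ∈ N → w.IsHermitian →
        fm hA (chi α) * w * fm hA (chi α) = w → ∃ γ : ℝ, w = (γ : ℂ) • fm hA (chi α) := by
      intro w hwN hwH hqwq
      obtain ⟨Tq, hTqdef⟩ : ∃ x : ℝ, x = ∑ k, chi α (hA.eigenvalues k) := ⟨_, rfl⟩
      have hTq : 1 ≤ Tq := by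
        rw [hTqdef]
        calc (1 : ℝ) = chi α (hA.eigenvalues i0) := by rw [hαdef, chi_self]
          _ ≤ _ := Finset.single_le_sum (fun k _ => chi_nonneg α _) (Finset.mem_univ i0)
      have hTq0 : Tq ≠ 0 := by linarith
      have hqtr : (fm hA (chi α)).trace = (Tq : ℂ) := by rw [fm_trace, ← hTqdef]
      have hwtr : ((w.trace.re : ℝ) : ℂ) = w.trace := by
        have h1 : (starRingEnd ℂ) w.trace = w.trace := by
          rw [← RCLike.star_def, ← Matrix.trace_conjTranspose, hwH.eq]
        exact Complex.conj_eq_iff_re.mp h1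
      obtain ⟨γ, hγdef⟩ : ∃ x : ℝ, x = w.trace.re / Tq := ⟨_, rfl⟩
      have hw'N : w - (γ : ℂ) • fm hA (chi α) ∈ N :=
        N.sub_mem hwN (N.smul_mem (fm_mem hA haN _) _)
      have hw'H : (w - (γ : ℂ) • fm hA (chi α)).IsHermitian := by
        refine IsHermitian.sub hwH ?_
        rw [Matrix.IsHermitian, conjTranspose_smul, hqH.eq]
        congr 1
        simp [RCLike.star_def, Complex.conj_ofReal]
      have hw'tr : (w - (γ : ℂ) • fm hA (chi α)).trace = 0 := by
        rw [Matrix.trace_sub, Matrix.trace_smul, hqtr, hγdef, smul_eq_mul, ← hwtr]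
        push_cast
        field_simp
        simp
      have hqw'q : fm hA (chi α) * (w - (γ : ℂ) • fm hA (chi α)) * fm hA (chi α) =
          w - (γ : ℂ) • fm hA (chi α) := by
        have e1 : fm hA (chi α) * ((γ : ℂ) • fm hA (chi α)) * fm hA (chi α) =
            (γ : ℂ) • fm hA (chi α) := by
          rw [Matrix.mul_smul, Matrix.smul_mul, hqq, hqq]
        rw [Matrix.mul_sub, Matrix.sub_mul, hqwq, e1]
      obtain ⟨M, hM0, hMm, hMp⟩ := herm_bound hw'H
      obtain ⟨ε, hεdef⟩ : ∃ x : ℝ, x = min α (1 - α) / (M + 1) := ⟨_, rfl⟩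
      have hε : 0 < ε := by
        rw [hεdef]
        exact div_pos (lt_min hα0 (by linarith)) (by linarith)
      have hεM : ε * M ≤ min α (1 - α) := by
        have hM1 : (0:ℝ) < M + 1 := by linarith
        have hminnn : (0:ℝ) ≤ min α (1 - α) := le_min hα0.le (by linarith)
        rw [hεdef, div_mul_eq_mul_div, div_le_iff₀ hM1]
        nlinarith
      have block : ∀ (β : ℝ), 0 < β → min α (1 - α) ≤ β →
          ∀ k : Matrix (Fin n) (Fin n) ℂ, ((M : ℂ) • 1 + k).PosSemidef →
          ((β : ℂ) • 1 + (ε : ℂ) • k).PosSemidef := by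
        intro β hβ hβmin k hk
        have h7 : (β : ℂ) • (1 : Matrix (Fin n) (Fin n) ℂ) + (ε : ℂ) • k =
            ((β - ε * M : ℝ) : ℂ) • (1 : Matrix (Fin n) (Fin n) ℂ) +
              (ε : ℂ) • ((M : ℂ) • 1 + k) := by
          push_cast
          module
        rw [h7]
        refine PosSemidef.add (smul_psd ?_ Matrix.PosSemidef.one) (smul_psd hε.le hk)
        have := le_trans hεM hβmin
        linarith
      have hMm' : ((M : ℂ) • 1 + -(w - (γ : ℂ) • fm hA (chi α))).PosSemidef := by
        rw [← sub_eq_add_neg]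
        exact hMm
      have bpos := block α hα0 (min_le_left _ _) _ hMp
      have bneg := block α hα0 (min_le_left _ _) _ hMm'
      have bpos' := block (1 - α) (by linarith) (min_le_right _ _) _ hMp
      have bneg' := block (1 - α) (by linarith) (min_le_right _ _) _ hMm'
      have cqc : ∀ (β : ℝ) (s : ℂ),
          fm hA (chi α) * ((β : ℂ) • 1 + s • (w - (γ : ℂ) • fm hA (chi α))) * fm hA (chi α) =
          (β : ℂ) • fm hA (chi α) + s • (w - (γ : ℂ) • fm hA (chi α)) := by
        intro β s
        rw [Matrix.mul_add, Matrix.add_mul, Matrix.mul_smul, Matrix.mul_one, Matrix.smul_mul,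
          hqq, Matrix.mul_smul, Matrix.smul_mul, hqw'q]
      have hEq1 : a + (ε : ℂ) • (w - (γ : ℂ) • fm hA (chi α)) =
          fm hA (fun x => x * (1 - chi α x)) +
          fm hA (chi α) * ((α : ℂ) • 1 + (ε : ℂ) • (w - (γ : ℂ) • fm hA (chi α))) *
            fm hA (chi α) := by
        rw [cqc, ← add_assoc, e_a]
      have hEq2 : 1 - (a + (ε : ℂ) • (w - (γ : ℂ) • fm hA (chi α))) =
          fm hA (fun x => (1 - x) * (1 - chi α x)) +
          fm hA (chi α) * (((1 - α : ℝ) : ℂ) • 1 +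
            (ε : ℂ) • -(w - (γ : ℂ) • fm hA (chi α))) * fm hA (chi α) := by
        have h8 : (ε : ℂ) • -(w - (γ : ℂ) • fm hA (chi α)) =
            (-(ε : ℂ)) • (w - (γ : ℂ) • fm hA (chi α)) := by module
        rw [h8, cqc, ← add_assoc, e_b]
        module
      have hEq3 : a - (ε : ℂ) • (w - (γ : ℂ) • fm hA (chi α)) =
          fm hA (fun x => x * (1 - chi α x)) +
          fm hA (chi α) * ((α : ℂ) • 1 + (ε : ℂ) • -(w - (γ : ℂ) • fm hA (chi α))) *
            fm hA (chi α) := by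
        have h8 : (ε : ℂ) • -(w - (γ : ℂ) • fm hA (chi α)) =
            (-(ε : ℂ)) • (w - (γ : ℂ) • fm hA (chi α)) := by module
        rw [h8, cqc, ← add_assoc, e_a]
        module
      have hEq4 : 1 - (a - (ε : ℂ) • (w - (γ : ℂ) • fm hA (chi α))) =
          fm hA (fun x => (1 - x) * (1 - chi α x)) +
          fm hA (chi α) * (((1 - α : ℝ) : ℂ) • 1 +
            (ε : ℂ) • (w - (γ : ℂ) • fm hA (chi α))) * fm hA (chi α) := by
        rw [cqc, ← add_assoc, e_b]
        module
      have hcompress : ∀ X : Matrix (Fin n) (Fin n) ℂ, X.PosSemidef →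
          (fm hA (chi α) * X * fm hA (chi α)).PosSemidef := by
        intro X hX
        have := hX.mul_mul_conjTranspose_same (fm hA (chi α))
        rwa [hqH.eq] at this
      have hw'0 : w - (γ : ℂ) • fm hA (chi α) = 0 := by
        refine key _ ε hε hw'N hw'tr ?_ ?_ ?_ ?_
        · rw [hEq1]
          exact PosSemidef.add (fm_psd hA _ hf1nn) (hcompress _ bpos)
        · rw [hEq2]
          exact PosSemidef.add (fm_psd hA _ hf2nn) (hcompress _ bneg')
        · rw [hEq3]
          exact PosSemidef.add (fm_psd hA _ hf1nn) (hcompress _ bneg)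
        · rw [hEq4]
          exact PosSemidef.add (fm_psd hA _ hf2nn) (hcompress _ bpos')
      exact ⟨γ, sub_eq_zero.mp hw'0⟩
    refine ⟨fm hA (chi 1), fm hA (chi α), α, fm_mem hA haN _, fm_mem hA haN _,
      fm_herm hA _, hppp, hqH, hqq, hpq, hα0, hα1, ?_, ?_⟩
    · -- a = p + α • q
      have h2 : fm hA (fun x => chi 1 x + α * chi α x) =
          fm hA (chi 1) + (α : ℂ) • fm hA (chi α) := by
        rw [← fm_add hA, ← fm_smul]
      refine ((fm_id hA).symm.trans ((fm_congr hA fun k => ?_).trans h2))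
      rcases hcases k with h | h | h
      · simp only [h, chi_of_ne (fun hh => hα0' hh.symm : (0:ℝ) ≠ α),
          chi_of_ne (by norm_num : (0:ℝ) ≠ 1)]; ring
      · simp only [h, chi_of_ne (fun hh => hα1' hh.symm : (1:ℝ) ≠ α), chi_self]; ring
      · simp only [h, chi_of_ne hα1', chi_self]; ring
    · -- set equality
      ext y
      simp only [Set.mem_setOf_eq]
      constructor
      · rintro ⟨x, hxN, rfl⟩
        have hmN : fm hA (chi α) * x * fm hA (chi α) ∈ N :=
          mul_mem (mul_mem (fm_mem hA haN _) hxN) (fm_mem hA haN _)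
        have hmsN : (fm hA (chi α) * x * fm hA (chi α))ᴴ ∈ N := by
          rw [← Matrix.star_eq_conjTranspose]
          exact star_mem hmN
        have hqmq : fm hA (chi α) * (fm hA (chi α) * x * fm hA (chi α)) * fm hA (chi α) =
            fm hA (chi α) * x * fm hA (chi α) := by
          have h9 : fm hA (chi α) * (fm hA (chi α) * x * fm hA (chi α)) =
              fm hA (chi α) * x * fm hA (chi α) := by
            rw [← Matrix.mul_assoc, ← Matrix.mul_assoc, hqq]
          have h10 : (fm hA (chi α) * x * fm hA (chi α)) * fm hA (chi α) =
              fm hA (chi α) * x * fm hA (chi α) := by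
            rw [Matrix.mul_assoc, hqq]
          rw [h9, h10]
        have hqmHq : fm hA (chi α) * (fm hA (chi α) * x * fm hA (chi α))ᴴ * fm hA (chi α) =
            (fm hA (chi α) * x * fm hA (chi α))ᴴ := by
          have h11 : fm hA (chi α) * (fm hA (chi α) * x * fm hA (chi α))ᴴ * fm hA (chi α) =
              (fm hA (chi α) * (fm hA (chi α) * x * fm hA (chi α)) * fm hA (chi α))ᴴ := by
            conv_rhs => rw [conjTranspose_mul, conjTranspose_mul, hqH.eq]
            rw [Matrix.mul_assoc]
          rw [h11, hqmq]
        have hstar2I : star (((2 : ℂ) * Complex.I)⁻¹) = -(((2 : ℂ) * Complex.I)⁻¹) := by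
          simp [mul_inv, Complex.inv_I]
        have hm1H : ((2 : ℂ)⁻¹ • (fm hA (chi α) * x * fm hA (chi α) +
            (fm hA (chi α) * x * fm hA (chi α))ᴴ)).IsHermitian := by
          rw [Matrix.IsHermitian, conjTranspose_smul, conjTranspose_add,
            conjTranspose_conjTranspose, add_comm]
          congr 1
          simp
        have hm2H : ((((2 : ℂ) * Complex.I)⁻¹) • (fm hA (chi α) * x * fm hA (chi α) -
            (fm hA (chi α) * x * fm hA (chi α))ᴴ)).IsHermitian := by
          rw [Matrix.IsHermitian, conjTranspose_smul, conjTranspose_sub,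
            conjTranspose_conjTranspose, hstar2I, neg_smul, ← smul_neg, neg_sub]
        have hq1 : fm hA (chi α) * ((2 : ℂ)⁻¹ • (fm hA (chi α) * x * fm hA (chi α) +
            (fm hA (chi α) * x * fm hA (chi α))ᴴ)) * fm hA (chi α) =
            (2 : ℂ)⁻¹ • (fm hA (chi α) * x * fm hA (chi α) +
            (fm hA (chi α) * x * fm hA (chi α))ᴴ) := by
          rw [Matrix.mul_smul, Matrix.smul_mul, Matrix.mul_add, Matrix.add_mul, hqmq, hqmHq]
        have hq2 : fm hA (chi α) * ((((2 : ℂ) * Complex.I)⁻¹) •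
            (fm hA (chi α) * x * fm hA (chi α) - (fm hA (chi α) * x * fm hA (chi α))ᴴ)) *
            fm hA (chi α) =
            (((2 : ℂ) * Complex.I)⁻¹) • (fm hA (chi α) * x * fm hA (chi α) -
            (fm hA (chi α) * x * fm hA (chi α))ᴴ) := by
          rw [Matrix.mul_smul, Matrix.smul_mul, Matrix.mul_sub, Matrix.sub_mul, hqmq, hqmHq]
        obtain ⟨γ1, hγ1⟩ := subclaim _ (N.smul_mem (N.add_mem hmN hmsN) _) hm1H hq1
        obtain ⟨γ2, hγ2⟩ := subclaim _ (N.smul_mem (N.sub_mem hmN hmsN) _) hm2H hq2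
        refine ⟨(γ1 : ℂ) + (γ2 : ℂ) * Complex.I, ?_⟩
        have hIinv : Complex.I * ((2 : ℂ) * Complex.I)⁻¹ = (2 : ℂ)⁻¹ := by
          rw [mul_inv, mul_comm ((2:ℂ)⁻¹), ← mul_assoc, mul_inv_cancel₀ Complex.I_ne_zero,
            one_mul]
        have hsum : fm hA (chi α) * x * fm hA (chi α) =
            (2 : ℂ)⁻¹ • (fm hA (chi α) * x * fm hA (chi α) +
              (fm hA (chi α) * x * fm hA (chi α))ᴴ) +
            Complex.I • ((((2 : ℂ) * Complex.I)⁻¹) • (fm hA (chi α) * x * fm hA (chi α) -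
              (fm hA (chi α) * x * fm hA (chi α))ᴴ)) := by
          rw [smul_smul, hIinv]
          module
        rw [hsum, hγ1, hγ2]
        module
      · rintro ⟨γ, rfl⟩
        refine ⟨γ • 1, N.smul_mem (one_mem N) γ, ?_⟩
        rw [Matrix.mul_smul, Matrix.mul_one, Matrix.smul_mul, hqq]
  · left
    refine ⟨haN, hA, ?_⟩
    push_neg at hex
    rw [← fm_id hA, fm_mul hA]
    refine fm_congr hA fun i => ?_
    rcases eq_or_lt_of_le (hnn i) with h0 | h0
    · rw [← h0]; ring
    · have := hex i h0
      have h1 : hA.eigenvalues i = 1 := le_antisymm (hle1 i) this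
      rw [h1]; ring
end

section
/- For each θ ∈ ℝ and each integer k with 1 ≤ k ≤ n, the supremum of Re(e^{−iθ}·λ) over λ ∈ W_k(c) is attained and equals β⁺_{θ,k}/k, where β⁺_{θ,k} is the sum of the k largest eigenvalues (counted with multiplicity) of the Hermitian matrix b_θ = cos θ · b₁ + sin θ · b₂. -/
open Matrix
open scoped ComplexOrder


private lemma conjT_dot {n : ℕ} (A : Matrix (Fin n) (Fin n) ℂ) (x : Fin n → ℂ) :
    star x ⬝ᵥ Aᴴ.mulVec x = starRingEnd ℂ (star x ⬝ᵥ A.mulVec x) := by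
  simp only [dotProduct, mulVec, conjTranspose_apply, Pi.star_apply, starRingEnd_apply,
    star_sum, star_mul', star_star, Finset.mul_sum]
  rw [Finset.sum_comm]
  exact Finset.sum_congr rfl fun i _ => Finset.sum_congr rfl fun j _ => by ring

private lemma key_scalar (θ : ℝ) (q : ℂ) :
    (Real.cos θ : ℂ) * ((1/2 : ℂ) * (q + starRingEnd ℂ q))
      + (Real.sin θ : ℂ) * ((1 / (2 * Complex.I)) * (q - starRingEnd ℂ q))
    = ((Complex.exp (-(θ : ℂ) * Complex.I) * q).re : ℂ) := by
  rw [show -(θ:ℂ) * Complex.I = (↑(-θ):ℂ) * Complex.I by push_cast; ring,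
    Complex.exp_mul_I]
  simp [Complex.ext_iff, Complex.div_re, Complex.div_im, Complex.normSq]
  ring
private lemma dotP_sum {n m : ℕ} (v : Fin n → ℂ) (f : Fin m → Fin n → ℂ) :
    v ⬝ᵥ (∑ j, f j) = ∑ j, v ⬝ᵥ f j := by
  simp only [dotProduct, Finset.sum_apply, Finset.mul_sum]
  exact Finset.sum_comm

private lemma star_dot_comm {n : ℕ} (x y : Fin n → ℂ) :
    star x ⬝ᵥ y = starRingEnd ℂ (star y ⬝ᵥ x) := by
  simp [dotProduct, map_sum, mul_comm]

private lemma step_lem (l : ℝ) (q : ℂ) :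
    q * ((l : ℂ) * starRingEnd ℂ q) = (l : ℂ) * (‖q‖ : ℂ) ^ 2 := by
  rw [show q * ((l : ℂ) * starRingEnd ℂ q) = (l : ℂ) * (q * starRingEnd ℂ q) by ring,
    Complex.mul_conj]
  norm_cast
  simp [Complex.normSq_eq_norm_sq]

private lemma expand_basis {n : ℕ} {b : Matrix (Fin n) (Fin n) ℂ} (hb : b.IsHermitian)
    (x : Fin n → ℂ) :
    x = ∑ j, (star ⇑(hb.eigenvectorBasis j) ⬝ᵥ x) • ⇑(hb.eigenvectorBasis j) := by
  have h := (hb.eigenvectorBasis.sum_repr ((WithLp.equiv 2 _).symm x)).symm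
  have h2 : ∀ j, hb.eigenvectorBasis.repr ((WithLp.equiv 2 _).symm x) j
      = star ⇑(hb.eigenvectorBasis j) ⬝ᵥ x := fun j => by
    rw [OrthonormalBasis.repr_apply_apply, EuclideanSpace.inner_eq_star_dotProduct]; exact dotProduct_comm _ _
  calc x = (WithLp.equiv 2 _) ((WithLp.equiv 2 _).symm x) := rfl
    _ = _ := by rw [h]; simp only [← h2]; exact WithLp.ofLp_sum (p := 2) (V := Fin n → ℂ) _ _

private lemma quad_form {n : ℕ} {b : Matrix (Fin n) (Fin n) ℂ} (hb : b.IsHermitian)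
    (x : Fin n → ℂ) :
    star x ⬝ᵥ b.mulVec x
      = ((∑ j, hb.eigenvalues j * ‖star ⇑(hb.eigenvectorBasis j) ⬝ᵥ x‖ ^ 2 : ℝ) : ℂ) := by
  rw [show b.mulVec x = ∑ j, (star ⇑(hb.eigenvectorBasis j) ⬝ᵥ x) •
      ((hb.eigenvalues j : ℂ) • ⇑(hb.eigenvectorBasis j)) by
    conv_lhs => rw [expand_basis hb x]
    rw [show b.mulVec (∑ j, (star ⇑(hb.eigenvectorBasis j) ⬝ᵥ x) • ⇑(hb.eigenvectorBasis j))
        = b.mulVecLin (∑ j, (star ⇑(hb.eigenvectorBasis j) ⬝ᵥ x) • ⇑(hb.eigenvectorBasis j))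
        from rfl, map_sum]
    refine Finset.sum_congr rfl fun j _ => ?_
    rw [_root_.map_smul, mulVecLin_apply, hb.mulVec_eigenvectorBasis]
    congr 1]
  rw [dotP_sum]
  push_cast
  refine Finset.sum_congr rfl fun j _ => ?_
  rw [dotProduct_smul, dotProduct_smul, smul_eq_mul, smul_eq_mul,
    star_dot_comm x ⇑(hb.eigenvectorBasis j)]
  exact step_lem _ _

private lemma norm_form {n : ℕ} {b : Matrix (Fin n) (Fin n) ℂ} (hb : b.IsHermitian)
    (x : Fin n → ℂ) :
    star x ⬝ᵥ x = ((∑ j, ‖star ⇑(hb.eigenvectorBasis j) ⬝ᵥ x‖ ^ 2 : ℝ) : ℂ) := by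
  have hgen : ∀ y : Fin n → ℂ, star y ⬝ᵥ x
      = ∑ j, (star ⇑(hb.eigenvectorBasis j) ⬝ᵥ x) * (star y ⬝ᵥ ⇑(hb.eigenvectorBasis j)) := by
    intro y
    conv_lhs => rw [expand_basis hb x]
    rw [dotP_sum]
    exact Finset.sum_congr rfl fun j _ => by rw [dotProduct_smul, smul_eq_mul]
  rw [hgen x]
  push_cast
  refine Finset.sum_congr rfl fun j _ => ?_
  rw [star_dot_comm x ⇑(hb.eigenvectorBasis j)]
  have := step_lem 1 (star ⇑(hb.eigenvectorBasis j) ⬝ᵥ x)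
  simpa using this
private lemma filter_sum' {n k : ℕ} (hkn : k ≤ n) (f : Fin n → ℝ) :
    ∑ j ∈ Finset.univ.filter (fun j : Fin n => (j : ℕ) < k), f j
      = ∑ i : Fin k, f (Fin.castLE hkn i) := by
  refine Finset.sum_bij' (fun j hj => (⟨j.1, (Finset.mem_filter.mp hj).2⟩ : Fin k))
    (fun i _ => Fin.castLE hkn i) ?_ ?_ ?_ ?_ ?_ <;>
    simp [Fin.castLE, Fin.ext_iff]

private lemma comb {n k : ℕ} (hk1 : 1 ≤ k) (hkn : k ≤ n) (μ s : Fin n → ℝ)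
    (hmono : Antitone μ) (h0 : ∀ j, 0 ≤ s j) (h1 : ∀ j, s j ≤ 1)
    (hsum : ∑ j, s j = k) :
    ∑ j, μ j * s j ≤ ∑ j ∈ Finset.univ.filter (fun j : Fin n => (j : ℕ) < k), μ j := by
  have hkn' : k - 1 < n := by omega
  set m := μ ⟨k - 1, hkn'⟩ with hm
  rw [Finset.sum_filter]
  have key : ∀ j : Fin n, μ j * s j - (if (j : ℕ) < k then μ j else 0)
      ≤ m * s j - (if (j : ℕ) < k then m else 0) := by
    intro j
    by_cases hj : (j : ℕ) < k
    · simp only [hj, if_true]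
      have hmj : m ≤ μ j := hmono (by rw [Fin.le_def]; simp; omega)
      nlinarith [h1 j]
    · simp only [hj, if_false]
      have hmj : μ j ≤ m := hmono (by rw [Fin.le_def]; simp; omega)
      nlinarith [h0 j]
  have hs := Finset.sum_le_sum (fun j (_ : j ∈ Finset.univ) => key j)
  rw [Finset.sum_sub_distrib, Finset.sum_sub_distrib, ← Finset.mul_sum, hsum] at hs
  have c2 : (∑ j : Fin n, if (j : ℕ) < k then m else 0) = m * k := by
    rw [← Finset.sum_filter, filter_sum' hkn (fun _ => m)]
    simp [mul_comm]
  rw [c2] at hs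
  linarith

private lemma bessel {n k : ℕ} (y : Fin k → Fin n → ℂ)
    (h : ∀ i j, star (y i) ⬝ᵥ y j = if i = j then 1 else 0)
    (v : EuclideanSpace ℂ (Fin n)) (hv : ‖v‖ = 1) :
    ∑ i, ‖star ⇑v ⬝ᵥ y i‖ ^ 2 ≤ 1 := by
  have horth : Orthonormal ℂ (fun i => ((WithLp.equiv 2 (Fin n → ℂ)).symm (y i))) := by
    rw [orthonormal_iff_ite]
    intro i j
    rw [EuclideanSpace.inner_eq_star_dotProduct]
    rw [dotProduct_comm]; exact h i j
  have hb := horth.sum_inner_products_le (s := Finset.univ) v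
  rw [hv] at hb
  calc ∑ i, ‖star ⇑v ⬝ᵥ y i‖ ^ 2
      = ∑ i, ‖(inner ℂ ((WithLp.equiv 2 (Fin n → ℂ)).symm (y i)) v : ℂ)‖ ^ 2 := by
        refine Finset.sum_congr rfl fun i _ => ?_
        rw [← inner_conj_symm]
        rw [show (inner ℂ v ((WithLp.equiv 2 (Fin n → ℂ)).symm (y i)) : ℂ)
          = star ⇑v ⬝ᵥ y i by rw [EuclideanSpace.inner_eq_star_dotProduct, dotProduct_comm]; rfl]
        rw [RCLike.norm_conj]
    _ ≤ 1 := by simpa using hb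

/-- For each `θ`, the maximum of `Re(e^{−iθ}·λ)` over `W_k(c)` is attained and equals
`β⁺_{θ,k}/k`, where `β⁺_{θ,k}` is the sum of the `k` largest eigenvalues of
`b_θ = cos θ · b₁ + sin θ · b₂`. -/
theorem support_function_eq_eigenvalue_sum (n k : ℕ) (hn : 0 < n) (hk1 : 1 ≤ k) (hkn : k ≤ n)
    (θ : ℝ) (c b₁ b₂ b : Matrix (Fin n) (Fin n) ℂ)
    (hb₁ : b₁ = (1 / 2 : ℂ) • (c + cᴴ))
    (hb₂ : b₂ = (1 / (2 * Complex.I)) • (c - cᴴ))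
    (hb : b = (Real.cos θ : ℂ) • b₁ + (Real.sin θ : ℂ) • b₂)
    (hherm : b.IsHermitian)
    (μ : Fin n → ℝ) (hmono : Antitone μ)
    (hperm : ∃ σ : Equiv.Perm (Fin n), μ = hherm.eigenvalues ∘ σ)
    (β : ℝ) (hβ : β = ∑ i ∈ Finset.univ.filter (fun i : Fin n => (i : ℕ) < k), μ i) :
    IsGreatest {r : ℝ | ∃ z ∈ kNumRange n k c,
      r = (Complex.exp (-(θ : ℂ) * Complex.I) * z).re} (β / k) := by
  obtain ⟨σ, hσ⟩ := hperm
  have hk0 : (0 : ℝ) < k := by positivity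
  -- the central identity : quadratic form of b equals Re(e^{-iθ}·quadratic form of c)
  have hqb : ∀ x : Fin n → ℂ, star x ⬝ᵥ b.mulVec x
      = ((Complex.exp (-(θ : ℂ) * Complex.I) * (star x ⬝ᵥ c.mulVec x)).re : ℂ) := by
    intro x
    rw [hb, hb₁, hb₂, ← key_scalar θ (star x ⬝ᵥ c.mulVec x), ← conjT_dot c x]
    simp only [add_mulVec, sub_mulVec, smul_mulVec, dotProduct_add, dotProduct_smul,
      smul_eq_mul, mulVec_add, mulVec_sub, dotProduct_sub]
  -- re formulation via eigenvalues
  have hre : ∀ x : Fin n → ℂ, (Complex.exp (-(θ : ℂ) * Complex.I) * (star x ⬝ᵥ c.mulVec x)).re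
      = ∑ j, hherm.eigenvalues j * ‖star ⇑(hherm.eigenvectorBasis j) ⬝ᵥ x‖ ^ 2 := by
    intro x
    have h1 := hqb x
    rw [quad_form hherm x] at h1
    exact_mod_cast h1.symm
  -- re of the average
  have havg : ∀ x : Fin k → (Fin n → ℂ),
      (Complex.exp (-(θ : ℂ) * Complex.I)
        * ((1 / (k : ℂ)) * ∑ i, star (x i) ⬝ᵥ c.mulVec (x i))).re
      = (1 / k) * ∑ i, (Complex.exp (-(θ : ℂ) * Complex.I) * (star (x i) ⬝ᵥ c.mulVec (x i))).re := by
    intro x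
    rw [show Complex.exp (-(θ : ℂ) * Complex.I)
          * ((1 / (k : ℂ)) * ∑ i, star (x i) ⬝ᵥ c.mulVec (x i))
        = (((1 / k : ℝ)) : ℂ) * (Complex.exp (-(θ : ℂ) * Complex.I)
            * ∑ i, star (x i) ⬝ᵥ c.mulVec (x i)) by push_cast; ring,
      Complex.re_ofReal_mul, Finset.mul_sum, Complex.re_sum]
  constructor
  · -- membership : realized by top eigenvectors
    set X : Fin k → (Fin n → ℂ) :=
      fun i => ⇑(hherm.eigenvectorBasis (σ (Fin.castLE hkn i))) with hX
    have horth : ∀ i j, star (X i) ⬝ᵥ X j = if i = j then 1 else 0 := by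
      intro i j
      have h1 := orthonormal_iff_ite.mp hherm.eigenvectorBasis.orthonormal
        (σ (Fin.castLE hkn i)) (σ (Fin.castLE hkn j))
      rw [EuclideanSpace.inner_eq_star_dotProduct, dotProduct_comm] at h1
      rw [show star (X i) ⬝ᵥ X j
          = star (hherm.eigenvectorBasis (σ (Fin.castLE hkn i))).ofLp
            ⬝ᵥ (hherm.eigenvectorBasis (σ (Fin.castLE hkn j))).ofLp
          from rfl, h1]
      congr 1
      simp only [eq_iff_iff]
      constructor
      · intro h
        have := σ.injective h
        exact Fin.castLE_injective hkn this
      · intro h; rw [h]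
    refine ⟨(1 / (k : ℂ)) * ∑ i, star (X i) ⬝ᵥ c.mulVec (X i), ⟨X, horth, rfl⟩, ?_⟩
    have hXval : ∀ i : Fin k,
        (Complex.exp (-(θ : ℂ) * Complex.I) * (star (X i) ⬝ᵥ c.mulVec (X i))).re
        = μ (Fin.castLE hkn i) := by
      intro i
      have h2 : star (X i) ⬝ᵥ b.mulVec (X i)
          = ((hherm.eigenvalues (σ (Fin.castLE hkn i)) : ℝ) : ℂ) := by
        rw [show b.mulVec (X i)
            = hherm.eigenvalues (σ (Fin.castLE hkn i)) • X i
            from hherm.mulVec_eigenvectorBasis (σ (Fin.castLE hkn i)),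
          dotProduct_smul, horth i i]
        simp [Complex.real_smul]
      have h1 := hqb (X i)
      rw [h2] at h1
      have h3 : hherm.eigenvalues (σ (Fin.castLE hkn i)) = μ (Fin.castLE hkn i) := by
        rw [hσ]; rfl
      rw [← h3]
      exact_mod_cast (congrArg Complex.re h1).symm
    rw [havg X]
    rw [Finset.sum_congr rfl fun i _ => hXval i]
    rw [hβ, filter_sum' hkn μ]
    ring
  · -- upper bound
    rintro r ⟨z, ⟨X, horth, hz⟩, hrz⟩
    subst hz hrz
    rw [havg X]
    set t : Fin n → ℝ := fun j => ∑ i, ‖star ⇑(hherm.eigenvectorBasis j) ⬝ᵥ X i‖ ^ 2 with ht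
    have hswap : ∑ i, (Complex.exp (-(θ : ℂ) * Complex.I) * (star (X i) ⬝ᵥ c.mulVec (X i))).re
        = ∑ j, hherm.eigenvalues j * t j := by
      rw [Finset.sum_congr rfl fun i _ => hre (X i), Finset.sum_comm]
      exact Finset.sum_congr rfl fun j _ => by rw [ht, Finset.mul_sum]
    rw [hswap]
    -- constraints on t
    have ht0 : ∀ j, 0 ≤ t j := fun j => Finset.sum_nonneg fun i _ => by positivity
    have ht1 : ∀ j, t j ≤ 1 := by
      intro j
      exact bessel X horth (hherm.eigenvectorBasis j)
        (hherm.eigenvectorBasis.orthonormal.1 j)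
    have htsum : ∑ j, t j = k := by
      have h1 : ∀ i : Fin k, ∑ j, ‖star ⇑(hherm.eigenvectorBasis j) ⬝ᵥ X i‖ ^ 2 = 1 := by
        intro i
        have h2 := norm_form hherm (X i)
        rw [horth i i, if_pos rfl] at h2
        exact_mod_cast h2.symm
      rw [ht, Finset.sum_comm, Finset.sum_congr rfl fun i (_ : i ∈ Finset.univ) => h1 i]
      simp
    -- reorder via σ and apply the combinatorial bound
    have hμt : ∑ j, hherm.eigenvalues j * t j = ∑ j, μ j * t (σ j) := by
      rw [hσ]
      exact (Equiv.sum_comp σ (fun j => hherm.eigenvalues j * t j)).symm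
    rw [hμt]
    have hcomb := comb hk1 hkn μ (t ∘ σ) hmono (fun j => ht0 _) (fun j => ht1 _)
      (by rw [show ∑ j, (t ∘ σ) j = ∑ j, t j from Equiv.sum_comp σ t, htsum])
    rw [← hβ] at hcomb
    calc (1 / (k:ℝ)) * ∑ j, μ j * t (σ j) ≤ (1 / (k:ℝ)) * β := by
          apply mul_le_mul_of_nonneg_left _ (by positivity)
          exact hcomb
      _ = β / k := by ring
end

section
/- There exist a positive integer d and a finite set Θ ⊆ [0, 2π) such that for every θ ∈ [0, 2π) \ Θ the Hermitian matrix b_θ = cos θ · b₁ + sin θ · b₂ has exactly d distinct eigenvalues, and for every θ ∈ Θ it has strictly fewer than d distinct eigenvalues. -/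
open Matrix
open scoped ComplexOrder
open Polynomial

/-- Abstract Hankel moments lemma: the `k×k` Hankel matrix of power sums of a real tuple
has nonzero determinant iff the tuple has at least `k` distinct values. -/
lemma hankel_det_ne_zero_iff {n k : ℕ} (μ : Fin n → ℝ) :
    (Matrix.of fun i j : Fin k => ∑ a, ((μ a : ℂ)) ^ ((i : ℕ) + (j : ℕ))).det ≠ 0 ↔
      k ≤ (Set.range μ).ncard := by
  classical
  set V : Matrix (Fin n) (Fin k) ℂ := Matrix.of fun a i => ((μ a : ℂ)) ^ (i : ℕ) with hV
  have hHV : (Matrix.of fun i j : Fin k => ∑ a, ((μ a : ℂ)) ^ ((i : ℕ) + (j : ℕ)))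
      = Vᴴ * V := by
    ext i j
    simp only [Matrix.mul_apply, Matrix.conjTranspose_apply, hV, Matrix.of_apply]
    refine Finset.sum_congr rfl fun a _ => ?_
    simp [← Complex.ofReal_pow, Complex.star_def, Complex.conj_ofReal, ← pow_add]
    push_cast
    rw [← pow_add]
  rw [hHV]
  have hfin : (Set.range μ).Finite := Set.finite_range μ
  set s : Finset ℝ := hfin.toFinset with hs
  have hcard : s.card = (Set.range μ).ncard := (Set.ncard_eq_toFinset_card _ hfin).symm
  constructor
  · intro hdet
    by_contra hk
    push_neg at hk
    apply hdet
    rw [← Matrix.exists_mulVec_eq_zero_iff]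
    set q : Polynomial ℂ := ∏ r ∈ s, (Polynomial.X - Polynomial.C (r : ℂ)) with hq
    have hmonic : q.Monic := monic_prod_of_monic _ _ fun r _ => monic_X_sub_C _
    have hdeg : q.natDegree = s.card := by
      rw [hq, natDegree_prod_of_monic _ _ fun r _ => monic_X_sub_C _]
      simp
    have hdeglt : q.natDegree < k := by rw [hdeg, hcard]; exact hk
    refine ⟨fun j => q.coeff j, ?_, ?_⟩
    · intro h0
      have := congrFun h0 ⟨q.natDegree, hdeglt⟩
      simp only [Pi.zero_apply] at this
      rw [hmonic.coeff_natDegree] at this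
      exact one_ne_zero this
    · have hVv : V.mulVec (fun j => q.coeff j) = 0 := by
        funext a
        have heval : q.eval ((μ a : ℂ)) = 0 := by
          rw [hq, Polynomial.eval_prod]
          refine Finset.prod_eq_zero (i := μ a) ?_ (by simp)
          simp [hs, Set.Finite.mem_toFinset]
        simp only [Matrix.mulVec, dotProduct, hV, Matrix.of_apply, Pi.zero_apply]
        rw [← heval, Polynomial.eval_eq_sum_range' hdeglt, ← Fin.sum_univ_eq_sum_range]
        exact Finset.sum_congr rfl fun j _ => mul_comm _ _
      rw [← Matrix.mulVec_mulVec, hVv, Matrix.mulVec_zero]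
  · intro hm hdet
    obtain ⟨v, hv, hvm⟩ := (Matrix.exists_mulVec_eq_zero_iff).mpr hdet
    rw [Matrix.conjTranspose_mul_self_mulVec_eq_zero] at hvm
    -- pick k distinct values among the μ's
    obtain ⟨t, hts, htcard⟩ := Finset.exists_subset_card_eq (hcard ▸ hm)
    let e : t ≃ Fin k := t.equivFinOfCardEq htcard
    set f : Fin k → ℂ := fun i => ((e.symm i : ℝ) : ℂ) with hf
    have hfinj : Function.Injective f := by
      intro i j hij
      apply e.symm.injective
      exact Subtype.ext (Complex.ofReal_injective hij)
    have hroot : ∀ j : Fin k, ∑ i : Fin k, v i * f j ^ (i : ℕ) = 0 := by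
      intro j
      have hmem : ((e.symm j : ℝ)) ∈ Set.range μ := by
        have := (e.symm j).2
        have := hts this
        rwa [hs, Set.Finite.mem_toFinset] at this
      obtain ⟨a, ha⟩ := hmem
      have := congrFun hvm a
      simp only [Matrix.mulVec, dotProduct, hV, Matrix.of_apply, Pi.zero_apply] at this
      rw [hf]
      simp only [← ha]
      rw [← this]
      exact Finset.sum_congr rfl fun i _ => mul_comm _ _
    exact hv (eq_zero_of_forall_index_sum_mul_pow_eq_zero hfinj hroot)

/-- For a Hermitian matrix: powers' traces are power sums of real eigenvalues, and the
spectrum is the (complexified) range of the eigenvalues. -/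
lemma herm_package {n : ℕ} (A : Matrix (Fin n) (Fin n) ℂ) (hA : A.IsHermitian) :
    ∃ μ : Fin n → ℝ, (∀ p : ℕ, (A ^ p).trace = ∑ a, ((μ a : ℂ)) ^ p) ∧
      spectrum ℂ A = Complex.ofReal '' Set.range μ := by
  classical
  refine ⟨hA.eigenvalues, ?_, ?_⟩
  · intro p
    set U : Matrix (Fin n) (Fin n) ℂ := (hA.eigenvectorUnitary : Matrix (Fin n) (Fin n) ℂ)
      with hU
    set D : Matrix (Fin n) (Fin n) ℂ := Matrix.diagonal (RCLike.ofReal ∘ hA.eigenvalues) with hD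
    have hsU : star U * U = 1 := Unitary.coe_star_mul_self _
    have hspec : A = U * D * star U := hA.spectral_theorem
    have hpow : A ^ p = U * D ^ p * star U := by
      induction p with
      | zero =>
        simp only [pow_zero, mul_one]
        rw [← Unitary.coe_mul_star_self hA.eigenvectorUnitary]
        rfl
      | succ m ih =>
        rw [pow_succ, ih, hspec, pow_succ]
        calc U * D ^ m * star U * (U * D * star U)
            = U * D ^ m * (star U * U) * (D * star U) := by
              simp only [Matrix.mul_assoc]
          _ = U * (D ^ m * D) * star U := by
              rw [hsU, Matrix.mul_one]
              simp only [Matrix.mul_assoc]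
    rw [hpow, Matrix.trace_mul_cycle, hsU, Matrix.one_mul, hD,
      Matrix.diagonal_pow, Matrix.trace_diagonal]
    simp
  · have hspec : A = (hA.eigenvectorUnitary : Matrix (Fin n) (Fin n) ℂ)
        * Matrix.diagonal (RCLike.ofReal ∘ hA.eigenvalues)
        * star (hA.eigenvectorUnitary : Matrix (Fin n) (Fin n) ℂ) := hA.spectral_theorem
    conv_lhs => rw [hspec]
    rw [Unitary.spectrum_star_right_conjugate, spectrum_diagonal, Set.range_comp]
    rfl

lemma herm_key {n : ℕ} (A : Matrix (Fin n) (Fin n) ℂ) (hA : A.IsHermitian) (k : ℕ) :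
    (Matrix.of fun i j : Fin k => (A ^ ((i : ℕ) + (j : ℕ))).trace).det ≠ 0 ↔
      k ≤ (spectrum ℂ A).ncard := by
  obtain ⟨μ, htr, hsp⟩ := herm_package A hA
  have h1 : (Matrix.of fun i j : Fin k => (A ^ ((i : ℕ) + (j : ℕ))).trace)
      = Matrix.of fun i j : Fin k => ∑ a, ((μ a : ℂ)) ^ ((i : ℕ) + (j : ℕ)) := by
    ext i j
    simp only [Matrix.of_apply]
    exact htr _
  have h2 : (spectrum ℂ A).ncard = (Set.range μ).ncard := by
    rw [hsp, Set.ncard_image_of_injective _ Complex.ofReal_injective]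
  rw [h1, h2, hankel_det_ne_zero_iff]

lemma spectrum_ncard_le {n : ℕ} (A : Matrix (Fin n) (Fin n) ℂ) (hA : A.IsHermitian) :
    (spectrum ℂ A).ncard ≤ n := by
  obtain ⟨μ, -, hsp⟩ := herm_package A hA
  rw [hsp, Set.ncard_image_of_injective _ Complex.ofReal_injective]
  calc (Set.range μ).ncard ≤ (Set.univ : Set (Fin n)).ncard := by
        rw [← Set.image_univ]
        exact Set.ncard_image_le Set.finite_univ
    _ = n := by rw [Set.ncard_univ]; simp

lemma exp_injOn_Ico : Set.InjOn (fun θ : ℝ => Complex.exp (θ * Complex.I))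
    (Set.Ico 0 (2 * Real.pi)) := by
  intro x hx y hy h
  simp only at h
  rw [Complex.exp_eq_exp_iff_exists_int] at h
  obtain ⟨m, hm⟩ := h
  have hI : (x : ℂ) = y + m * (2 * Real.pi) := by
    have h2 : (x : ℂ) * Complex.I = ((y : ℂ) + m * (2 * Real.pi)) * Complex.I := by
      rw [hm]; push_cast; ring
    exact mul_right_cancel₀ Complex.I_ne_zero h2
  have hr : x = y + m * (2 * Real.pi) := by exact_mod_cast hI

  have hpi := Real.pi_pos
  have hm0 : m = 0 := by
    rcases hx with ⟨hx0, hx1⟩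
    rcases hy with ⟨hy0, hy1⟩
    have h1 : ((m : ℝ)) * (2 * Real.pi) < 2 * Real.pi := by nlinarith
    have h2 : (-(2 * Real.pi)) < ((m : ℝ)) * (2 * Real.pi) := by nlinarith
    have hlt : (m : ℝ) < 1 := by nlinarith
    have hgt : (-1 : ℝ) < m := by nlinarith
    have hlt' : m < 1 := by exact_mod_cast hlt
    have hgt' : (-1 : ℤ) < m := by exact_mod_cast hgt
    omega
  rw [hm0] at hr
  simpa using hr

/-- There is `d > 0` and a finite set `Θ ⊆ [0, 2π)` such that `b_θ` has exactly `d`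
distinct eigenvalues when `θ ∉ Θ` and strictly fewer when `θ ∈ Θ`. -/
theorem generic_number_of_eigenvalues (n : ℕ) (hn : 0 < n)
    (c b₁ b₂ : Matrix (Fin n) (Fin n) ℂ)
    (hb₁ : b₁ = (1 / 2 : ℂ) • (c + cᴴ))
    (hb₂ : b₂ = (1 / (2 * Complex.I)) • (c - cᴴ)) :
    ∃ d : ℕ, 0 < d ∧ ∃ Θ : Finset ℝ, (↑Θ : Set ℝ) ⊆ Set.Ico 0 (2 * Real.pi) ∧
      (∀ θ ∈ Set.Ico 0 (2 * Real.pi) \ (↑Θ : Set ℝ),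
        (spectrum ℂ ((Real.cos θ : ℂ) • b₁ + (Real.sin θ : ℂ) • b₂)).ncard = d) ∧
      ∀ θ ∈ Θ,
        (spectrum ℂ ((Real.cos θ : ℂ) • b₁ + (Real.sin θ : ℂ) • b₂)).ncard < d := by
  classical
  set B : Matrix (Fin n) (Fin n) (Polynomial ℂ) :=
    c.map Polynomial.C + (Polynomial.X ^ 2 : Polynomial ℂ) • cᴴ.map Polynomial.C with hB
  set g : ℕ → Polynomial ℂ := fun k =>
    (Matrix.of fun i j : Fin k => (B ^ ((i : ℕ) + (j : ℕ))).trace).det with hg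
  -- Hermitian-ness of b_θ
  have hherm : ∀ θ : ℝ,
      ((Real.cos θ : ℂ) • b₁ + (Real.sin θ : ℂ) • b₂).IsHermitian := by
    intro θ
    have h1 : b₁.IsHermitian := by
      rw [hb₁, Matrix.IsHermitian, Matrix.conjTranspose_smul, Matrix.conjTranspose_add,
        Matrix.conjTranspose_conjTranspose, add_comm]
      congr 1
      simp
    have h2 : b₂.IsHermitian := by
      rw [hb₂, Matrix.IsHermitian, Matrix.conjTranspose_smul, Matrix.conjTranspose_sub,
        Matrix.conjTranspose_conjTranspose]
      have hs : star (1 / (2 * Complex.I)) = -(1 / (2 * Complex.I)) := by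
        simp only [star_div₀, star_one, star_mul', Complex.star_def, Complex.conj_I,
          map_ofNat]
        ring
      rw [hs, neg_smul, ← smul_neg, neg_sub]
    rw [Matrix.IsHermitian, Matrix.conjTranspose_add, Matrix.conjTranspose_smul,
      Matrix.conjTranspose_smul, Complex.star_def, Complex.conj_ofReal, Complex.conj_ofReal,
      h1.eq, h2.eq]
  -- the key equivalence
  have key : ∀ (θ : ℝ) (k : ℕ),
      ((g k).eval (Complex.exp (θ * Complex.I)) ≠ 0 ↔
        k ≤ (spectrum ℂ ((Real.cos θ : ℂ) • b₁ + (Real.sin θ : ℂ) • b₂)).ncard) := by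
    intro θ k
    set w : ℂ := Complex.exp (θ * Complex.I) with hw
    have hw0 : w ≠ 0 := Complex.exp_ne_zero _
    set e : ℂ := w⁻¹ * (1 / 2) with he
    have he0 : e ≠ 0 := by
      rw [he]
      exact mul_ne_zero (inv_ne_zero hw0) (by norm_num)
    set M : Matrix (Fin n) (Fin n) ℂ := c + (w ^ 2) • cᴴ with hM
    -- scalar identities
    have hwe : w = (Real.cos θ : ℂ) + (Real.sin θ : ℂ) * Complex.I := by
      rw [hw, Complex.exp_mul_I, ← Complex.ofReal_cos, ← Complex.ofReal_sin]
    have hwinv : w⁻¹ = (Real.cos θ : ℂ) - (Real.sin θ : ℂ) * Complex.I := by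
      rw [hw, ← Complex.exp_neg]
      have hneg : -((θ : ℂ) * Complex.I) = ((-θ : ℝ) : ℂ) * Complex.I := by
        push_cast; ring
      rw [hneg, Complex.exp_mul_I, ← Complex.ofReal_cos, ← Complex.ofReal_sin,
        Real.cos_neg, Real.sin_neg]
      push_cast
      ring
    have h2I : (1 : ℂ) / (2 * Complex.I) = -Complex.I / 2 := by
      rw [div_eq_div_iff (by simp [Complex.I_ne_zero]) (by norm_num)]
      have := Complex.I_mul_I
      linear_combination 2 * this
    have hc1 : (Real.cos θ : ℂ) * (1 / 2) + (Real.sin θ : ℂ) * (1 / (2 * Complex.I)) = e := by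
      rw [h2I, he, hwinv]; ring
    have hew2 : e * w ^ 2 = w * (1 / 2) := by
      rw [he]
      field_simp
    have hc2 : (Real.cos θ : ℂ) * (1 / 2) - (Real.sin θ : ℂ) * (1 / (2 * Complex.I))
        = e * w ^ 2 := by
      rw [h2I, hew2, hwe]; ring
    -- b_θ = e • M
    have hbθ : (Real.cos θ : ℂ) • b₁ + (Real.sin θ : ℂ) • b₂ = e • M := by
      rw [hb₁, hb₂]
      ext i j
      simp only [Matrix.add_apply, Matrix.smul_apply, Matrix.sub_apply, smul_eq_mul, hM,
        Matrix.conjTranspose_apply]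
      linear_combination (c i j) * hc1 + (star (c j i)) * hc2
    -- evaluation of the polynomial entries
    have heval : ∀ p : ℕ, ((B ^ p).trace).eval w = (M ^ p).trace := by
      intro p
      have hmap : (Polynomial.evalRingHom w).mapMatrix B = M := by
        ext i j
        simp only [hB, hM, RingHom.mapMatrix_apply, Matrix.map_apply, Matrix.add_apply,
          Matrix.smul_apply, smul_eq_mul, Polynomial.eval_add, Polynomial.eval_mul,
          Polynomial.eval_pow, Polynomial.eval_X, Polynomial.eval_C,
          Polynomial.coe_evalRingHom]
      calc ((B ^ p).trace).eval w
          = (Polynomial.evalRingHom w) ((B ^ p).trace) := rfl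
        _ = (((Polynomial.evalRingHom w).mapMatrix) (B ^ p)).trace := by
            simp [Matrix.trace, RingHom.mapMatrix_apply, Matrix.diag, Matrix.map_apply,
              map_sum]
        _ = (M ^ p).trace := by rw [map_pow, hmap]
    -- determinant factorization
    have htr : ∀ p : ℕ, ((e • M) ^ p).trace = e ^ p * (M ^ p).trace := by
      intro p
      rw [_root_.smul_pow, Matrix.trace_smul, smul_eq_mul]
    have hdet : (Matrix.of fun i j : Fin k => (((e • M)) ^ ((i : ℕ) + (j : ℕ))).trace).det
        = ((∏ i : Fin k, e ^ (i : ℕ)) * (∏ i : Fin k, e ^ (i : ℕ))) * ((g k).eval w) := by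
      have hstep : (Matrix.of fun i j : Fin k => (((e • M)) ^ ((i : ℕ) + (j : ℕ))).trace)
          = Matrix.of fun i j : Fin k => e ^ (i : ℕ) *
              ((Matrix.of fun i' j' : Fin k => e ^ (j' : ℕ) *
                ((M ^ ((i' : ℕ) + (j' : ℕ))).trace)) i j) := by
        ext i j
        simp only [Matrix.of_apply]
        rw [htr, pow_add]
        ring
      have hstep2 : (Matrix.of fun i' j' : Fin k => e ^ (j' : ℕ) *
            ((M ^ ((i' : ℕ) + (j' : ℕ))).trace))
          = Matrix.of fun i' j' : Fin k => e ^ (j' : ℕ) *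
              ((Matrix.of fun i'' j'' : Fin k => (M ^ ((i'' : ℕ) + (j'' : ℕ))).trace) i' j') := by
        ext i j
        simp
      have hgk : (g k).eval w
          = (Matrix.of fun i j : Fin k => (M ^ ((i : ℕ) + (j : ℕ))).trace).det := by
        rw [hg]
        calc (Matrix.of fun i j : Fin k => (B ^ ((i : ℕ) + (j : ℕ))).trace).det.eval w
            = (Polynomial.evalRingHom w)
                (Matrix.of fun i j : Fin k => (B ^ ((i : ℕ) + (j : ℕ))).trace).det := rfl
          _ = ((Matrix.of fun i j : Fin k => (B ^ ((i : ℕ) + (j : ℕ))).trace).map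
                (Polynomial.evalRingHom w)).det := by
                rw [RingHom.map_det, RingHom.mapMatrix_apply]
          _ = (Matrix.of fun i j : Fin k => (M ^ ((i : ℕ) + (j : ℕ))).trace).det := by
              congr 1
              ext i j
              simp only [Matrix.map_apply, Matrix.of_apply]
              exact heval _
      rw [hstep, Matrix.det_mul_column, hstep2, Matrix.det_mul_row, hgk]
      ring
    have hprod : (∏ i : Fin k, e ^ (i : ℕ)) ≠ 0 :=
      Finset.prod_ne_zero_iff.mpr fun i _ => pow_ne_zero _ he0
    rw [← herm_key _ (hherm θ) k, hbθ, hdet]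
    constructor
    · intro h
      exact mul_ne_zero (mul_ne_zero hprod hprod) h
    · intro h h0
      rw [h0, mul_zero] at h
      exact h rfl
  -- upper bound on the number of eigenvalues
  have hbnd : ∀ θ : ℝ,
      (spectrum ℂ ((Real.cos θ : ℂ) • b₁ + (Real.sin θ : ℂ) • b₂)).ncard ≤ n :=
    fun θ => spectrum_ncard_le _ (hherm θ)
  -- g 1 is a nonzero polynomial
  have hg1 : g 1 ≠ 0 := by
    have h1 : g 1 = ((n : Polynomial ℂ)) := by
      show (Matrix.of fun i j : Fin 1 => (B ^ ((i : ℕ) + (j : ℕ))).trace).det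
        = ((n : Polynomial ℂ))
      rw [Matrix.det_fin_one]
      simp [Matrix.trace_one]
    rw [h1]
    exact Nat.cast_ne_zero.mpr hn.ne'
  -- the generic count d
  set S : Finset ℕ := (Finset.range (n + 1)).filter (fun k => g k ≠ 0) with hS
  have h1S : (1 : ℕ) ∈ S :=
    Finset.mem_filter.mpr ⟨Finset.mem_range.mpr (by omega), hg1⟩
  have hSne : S.Nonempty := ⟨1, h1S⟩
  set d : ℕ := S.max' hSne with hd
  have hgd : g d ≠ 0 := (Finset.mem_filter.mp (S.max'_mem hSne)).2
  have hd1 : 1 ≤ d := S.le_max' 1 h1S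
  have hmax : ∀ k, k ≤ n → g k ≠ 0 → k ≤ d := fun k hk hgk =>
    S.le_max' k (Finset.mem_filter.mpr ⟨Finset.mem_range.mpr (by omega), hgk⟩)
  -- the exceptional set
  set Θs : Set ℝ := {θ : ℝ | θ ∈ Set.Ico 0 (2 * Real.pi) ∧
    (g d).eval (Complex.exp (θ * Complex.I)) = 0} with hΘs
  have hfinΘ : Θs.Finite := by
    apply Set.Finite.of_finite_image (f := fun θ : ℝ => Complex.exp (θ * Complex.I))
    · apply Set.Finite.subset (Polynomial.finite_setOf_isRoot hgd)
      rintro z ⟨θ, hθ, rfl⟩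
      exact hθ.2
    · exact exp_injOn_Ico.mono (fun θ hθ => hθ.1)
  refine ⟨d, by omega, hfinΘ.toFinset, ?_, ?_, ?_⟩
  · rw [Set.Finite.coe_toFinset]
    exact fun θ hθ => hθ.1
  · intro θ hθ
    obtain ⟨hIco, hnot⟩ := hθ
    rw [Set.Finite.coe_toFinset] at hnot
    have hne : (g d).eval (Complex.exp (θ * Complex.I)) ≠ 0 := fun h0 => hnot ⟨hIco, h0⟩
    have hge := (key θ d).mp hne
    have hle : (spectrum ℂ ((Real.cos θ : ℂ) • b₁ + (Real.sin θ : ℂ) • b₂)).ncard ≤ d := by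
      by_contra hlt
      push_neg at hlt
      have h2 : d + 1 ≤ (spectrum ℂ ((Real.cos θ : ℂ) • b₁ + (Real.sin θ : ℂ) • b₂)).ncard :=
        hlt
      have h3 := (key θ (d + 1)).mpr h2
      have hg2 : g (d + 1) ≠ 0 := fun h0 => h3 (by rw [h0]; simp)
      have := hmax (d + 1) (le_trans h2 (hbnd θ)) hg2
      omega
    omega
  · intro θ hθ
    rw [Set.Finite.mem_toFinset] at hθ
    have h0 := hθ.2
    have hnle : ¬ d ≤ (spectrum ℂ ((Real.cos θ : ℂ) • b₁ + (Real.sin θ : ℂ) • b₂)).ncard :=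
      fun hge => ((key θ d).mpr hge) h0
    omega
end

section
/- The spectral scale is the convex hull of its isotrace slices at the heights k/n: B = convexHull(⋃_{k=0}^{n} I_{k/n}). -/
open Matrix
open scoped ComplexOrder

lemma psd_real_smul {n : ℕ} {M : Matrix (Fin n) (Fin n) ℂ} (hM : M.PosSemidef)
    {r : ℝ} (hr : 0 ≤ r) : (r • M).PosSemidef := by
  rw [Matrix.posSemidef_iff_dotProduct_mulVec]
  constructor
  · unfold Matrix.IsHermitian
    rw [conjTranspose_smul, hM.1.eq, star_trivial]
  · intro x
    have h := hM.dotProduct_mulVec_nonneg x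
    rw [smul_mulVec, dotProduct_smul]
    rw [Complex.real_smul]
    exact mul_nonneg (by exact_mod_cast Complex.zero_le_real.2 hr) h

lemma specScale_convex (n : ℕ) (c : Matrix (Fin n) (Fin n) ℂ) :
    Convex ℝ (specScale n c) := by
  rintro x ⟨a, ha1, ha2, rfl⟩ y ⟨b, hb1, hb2, rfl⟩ p q hp hq hpq
  refine ⟨p • a + q • b, (psd_real_smul ha1 hp).add (psd_real_smul hb1 hq), ?_, ?_⟩
  · have : (1 : Matrix (Fin n) (Fin n) ℂ) - (p • a + q • b)
        = p • (1 - a) + q • (1 - b) := by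
      rw [smul_sub, smul_sub, ← add_sub_assoc]
      rw [show p • (1 : Matrix (Fin n) (Fin n) ℂ) - p • a + q • (1 : Matrix (Fin n) (Fin n) ℂ)
          = (p + q) • (1 : Matrix (Fin n) (Fin n) ℂ) - p • a by rw [add_smul]; abel]
      rw [hpq, one_smul]
      abel
    rw [this]
    exact (psd_real_smul ha2 hp).add (psd_real_smul hb2 hq)
  · have h1 : ∀ (r : ℝ) (M : Matrix (Fin n) (Fin n) ℂ), (r • M).trace = (r : ℂ) * M.trace := by
      intro r M; rw [trace_smul, Complex.real_smul]
    ext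
    · simp only [Prod.smul_fst, Prod.fst_add, trace_add, h1, smul_eq_mul]
      rw [add_div, mul_div_assoc, mul_div_assoc, Complex.add_re, Complex.re_ofReal_mul,
        Complex.re_ofReal_mul]
    · simp only [Prod.smul_snd, Prod.snd_add, mul_add, Matrix.mul_smul, trace_add, h1,
        smul_eq_mul, Complex.real_smul]
      ring

/-- The spectral scale is the convex hull of its isotrace slices at heights `k/n`,
`k = 0, 1, …, n`. -/
theorem specScale_eq_convexHull_isotraces (n : ℕ) (hn : 0 < n)
    (c : Matrix (Fin n) (Fin n) ℂ) :
    specScale n c = convexHull ℝ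
      (⋃ k ∈ Finset.range (n + 1), {x ∈ specScale n c | x.1 = (k : ℝ) / n}) := by
  apply Set.Subset.antisymm
  · -- hard direction
    rintro x ⟨a, ha1, ha2, rfl⟩
    have hA : a.IsHermitian := ha1.1
    set U : Matrix (Fin n) (Fin n) ℂ := (hA.eigenvectorUnitary : Matrix (Fin n) (Fin n) ℂ)
      with hUdef
    have hU1 : U * star U = 1 := Matrix.mem_unitaryGroup_iff.mp hA.eigenvectorUnitary.2
    have hU2 : star U * U = 1 := Matrix.mem_unitaryGroup_iff'.mp hA.eigenvectorUnitary.2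
    set f : (Fin n → ℝ) → ℝ × ℂ := fun v =>
      (((U * diagonal (fun i => (v i : ℂ)) * star U).trace / n).re,
        (c * (U * diagonal (fun i => (v i : ℂ)) * star U)).trace / n) with hfdef
    have hlin : IsLinearMap ℝ f := by
      constructor
      · intro v w
        have hd : (diagonal (fun i => ((v + w) i : ℂ)) : Matrix (Fin n) (Fin n) ℂ)
            = diagonal (fun i => (v i : ℂ)) + diagonal (fun i => (w i : ℂ)) := by
          ext i j
          rcases eq_or_ne i j with rfl | h
          · simp
          · simp [Matrix.diagonal_apply_ne _ h]
        simp only [hfdef, hd, mul_add, add_mul, trace_add, add_div, Complex.add_re,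
          Prod.mk_add_mk]
      · intro r v
        have hd : (diagonal (fun i => ((r • v) i : ℂ)) : Matrix (Fin n) (Fin n) ℂ)
            = (r : ℂ) • diagonal (fun i => (v i : ℂ)) := by
          ext i j
          rcases eq_or_ne i j with rfl | h
          · simp
          · simp [Matrix.diagonal_apply_ne _ h]
        simp only [hfdef, hd, Matrix.mul_smul, Matrix.smul_mul, trace_smul, smul_eq_mul,
          mul_div_assoc, Prod.smul_mk, Complex.re_ofReal_mul, Complex.real_smul]
    -- eigenvalues in [0,1]
    have hnn : ∀ i, 0 ≤ hA.eigenvalues i := fun i => ha1.eigenvalues_nonneg i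
    have hvnorm : ∀ i, (star (⇑(hA.eigenvectorBasis i)) ⬝ᵥ ⇑(hA.eigenvectorBasis i)) = 1 := by
      intro i
      have h := hA.eigenvectorBasis.orthonormal.1 i
      have h2 : (inner ℂ (hA.eigenvectorBasis i) (hA.eigenvectorBasis i) : ℂ)
          = star (⇑(hA.eigenvectorBasis i)) ⬝ᵥ ⇑(hA.eigenvectorBasis i) :=
        (EuclideanSpace.inner_eq_star_dotProduct _ _).trans (dotProduct_comm _ _)
      rw [← h2, inner_self_eq_norm_sq_to_K, h]
      norm_num
    have hle : ∀ i, hA.eigenvalues i ≤ 1 := by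
      intro i
      have h := ha2.dotProduct_mulVec_nonneg (⇑(hA.eigenvectorBasis i))
      rw [sub_mulVec, one_mulVec, dotProduct_sub, hA.mulVec_eigenvectorBasis,
        dotProduct_smul, hvnorm] at h
      rw [Complex.real_smul, mul_one] at h
      have h' : ((1 - hA.eigenvalues i : ℝ) : ℂ) = 1 - (hA.eigenvalues i : ℂ) := by push_cast; ring
      rw [← h'] at h
      have := Complex.zero_le_real.mp h
      linarith
    -- eigenvalue vector in convex hull of 0/1 vectors
    set S : Set (Fin n → ℝ) := Set.pi Set.univ (fun _ : Fin n => ({0, 1} : Set ℝ)) with hSdef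
    have hmem : hA.eigenvalues ∈ convexHull ℝ S := by
      apply mem_convexHull_pi
      intro i _
      rw [convexHull_pair, segment_eq_Icc zero_le_one]
      exact ⟨hnn i, hle i⟩
    have hkey : f hA.eigenvalues = ((a.trace / n).re, (c * a).trace / n) := by
      have : (fun i => (hA.eigenvalues i : ℂ)) = RCLike.ofReal ∘ hA.eigenvalues := rfl
      rw [hfdef]
      dsimp only
      have e := hA.spectral_theorem
      rw [Unitary.conjStarAlgAut_apply] at e
      rw [this, hUdef, ← e]
    have himg : f '' S ⊆ ⋃ k ∈ Finset.range (n + 1),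
        {x ∈ specScale n c | x.1 = (k : ℝ) / n} := by
      rintro _ ⟨v, hv, rfl⟩
      set k : ℕ := (Finset.univ.filter (fun i => v i = 1)).card with hkdef
      have hsum : ∑ i, v i = (k : ℝ) := by
        rw [hkdef, ← Finset.sum_boole]
        apply Finset.sum_congr rfl
        intro i _
        have h01 : v i = 0 ∨ v i = 1 := by simpa using hv i (Set.mem_univ i)
        rcases h01 with h | h <;> simp [h]
      set Q : Matrix (Fin n) (Fin n) ℂ := U * diagonal (fun i => (v i : ℂ)) * star U with hQdef
      have hQtr : Q.trace = ((k : ℝ) : ℂ) := by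
        rw [hQdef, trace_mul_cycle, hU2, one_mul, trace_diagonal]
        rw [← Complex.ofReal_sum, hsum]
      have hdnn : (0 : Fin n → ℂ) ≤ fun i => (v i : ℂ) := by
        intro i
        have h01 : v i = 0 ∨ v i = 1 := by simpa using hv i (Set.mem_univ i)
        rcases h01 with h | h <;> simp [h]
      have hQpsd : Q.PosSemidef := by
        rw [hQdef, Matrix.star_eq_conjTranspose]
        exact (Matrix.PosSemidef.diagonal hdnn).mul_mul_conjTranspose_same U
      have hQ1psd : (1 - Q).PosSemidef := by
        have h1 : (1 : Matrix (Fin n) (Fin n) ℂ) - Q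
            = U * diagonal (fun i => ((1 - v i : ℝ) : ℂ)) * star U := by
          have hd : (diagonal (fun i => ((1 - v i : ℝ) : ℂ)) : Matrix (Fin n) (Fin n) ℂ)
              = 1 - diagonal (fun i => (v i : ℂ)) := by
            ext i j
            rcases eq_or_ne i j with rfl | h
            · push_cast [Matrix.diagonal_apply_eq, Matrix.one_apply_eq, Matrix.sub_apply]; ring
            · simp [Matrix.diagonal_apply_ne _ h, Matrix.one_apply_ne h]
          rw [hd, Matrix.mul_sub, Matrix.sub_mul, mul_one, hU1, hQdef]
        have hdnn' : (0 : Fin n → ℂ) ≤ fun i => ((1 - v i : ℝ) : ℂ) := by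
          intro i
          have h01 : v i = 0 ∨ v i = 1 := by simpa using hv i (Set.mem_univ i)
          rcases h01 with h | h <;> simp [h]
        rw [h1, Matrix.star_eq_conjTranspose]
        exact (Matrix.PosSemidef.diagonal hdnn').mul_mul_conjTranspose_same U
      have hfv : f v = ((Q.trace / n).re, (c * Q).trace / n) := rfl
      have hcoord : (f v).1 = (k : ℝ) / n := by
        rw [hfv, hQtr]
        have : (((k : ℝ) : ℂ) / (n : ℂ)) = (((k : ℝ) / n : ℝ) : ℂ) := by push_cast; ring
        rw [this, Complex.ofReal_re]
      have hks : k ∈ Finset.range (n + 1) := by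
        rw [Finset.mem_range, Nat.lt_succ_iff, hkdef]
        calc (Finset.univ.filter (fun i => v i = 1)).card ≤ Finset.univ.card :=
              Finset.card_filter_le _ _
          _ = n := by simp
      apply Set.mem_biUnion hks
      exact ⟨⟨Q, hQpsd, hQ1psd, hfv⟩, hcoord⟩
    have : f hA.eigenvalues ∈ convexHull ℝ (f '' S) := by
      rw [← hlin.image_convexHull]
      exact Set.mem_image_of_mem f hmem
    rw [← hkey]
    exact convexHull_mono himg this
  · apply convexHull_min _ (specScale_convex n c)
    intro x hx
    simp only [Set.mem_iUnion] at hx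
    obtain ⟨k, _, hxk, _⟩ := hx
    exact hxk
end

section
/- There exist a positive integer d and a finite set C ⊆ ℂ such that for every z ∈ ℂ \ C the matrix pencil b₁ + z·b₂ has exactly d distinct eigenvalues (i.e., the cardinality of the spectrum of b₁ + z·b₂ equals d for all z outside the finite set C). -/
open Matrix
open scoped ComplexOrder

open Polynomial

lemma spectrum_eq_roots' {m : ℕ} (A : Matrix (Fin m) (Fin m) ℂ) :
    spectrum ℂ A = ↑(A.charpoly.roots.toFinset) := by
  ext μ
  have hev : A.charpoly.eval μ = (algebraMap ℂ (Matrix (Fin m) (Fin m) ℂ) μ - A).det := by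
    rw [Matrix.charpoly, ← Polynomial.coe_evalRingHom, RingHom.map_det]
    congr 1
    ext i j
    by_cases h : i = j
    · subst h; simp [charmatrix_apply_eq, Matrix.algebraMap_eq_diagonal]
    · simp [charmatrix_apply_ne _ _ _ h, Matrix.algebraMap_eq_diagonal,
        Matrix.diagonal_apply_ne _ h]
  rw [spectrum.mem_iff, Matrix.isUnit_iff_isUnit_det]
  simp only [Finset.coe_sort_coe, Multiset.mem_toFinset, Finset.mem_coe]
  rw [Polynomial.mem_roots (A.charpoly_monic.ne_zero), Polynomial.IsRoot, hev,
    isUnit_iff_ne_zero]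
  tauto

lemma card_roots_eq' (p : ℂ[X]) (hp : p ≠ 0) (hd : p.natDegree ≠ 0) :
    p.roots.toFinset.card
      = p.natDegree - (EuclideanDomain.gcd p (derivative p)).natDegree := by
  set g := EuclideanDomain.gcd p (derivative p) with hg
  have hp' : derivative p ≠ 0 := by
    intro h
    have := natDegree_eq_zero_of_derivative_eq_zero h
    exact hd this
  have hg0 : g ≠ 0 := by
    rw [hg, Ne, EuclideanDomain.gcd_eq_zero_iff]
    tauto
  have hgp : g ∣ p := EuclideanDomain.gcd_dvd_left _ _
  have hgp' : g ∣ derivative p := EuclideanDomain.gcd_dvd_right _ _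
  set T := p.roots.toFinset with hT
  have hmult : ∀ r ∈ T, rootMultiplicity r g = rootMultiplicity r p - 1 := by
    intro r hr
    have hroot : p.IsRoot r := by
      rw [hT, Multiset.mem_toFinset, mem_roots hp] at hr; exact hr
    have hder : (derivative p).rootMultiplicity r = p.rootMultiplicity r - 1 :=
      derivative_rootMultiplicity_of_root hroot
    apply le_antisymm
    · have h1 : (X - C r) ^ (rootMultiplicity r g) ∣ derivative p :=
        dvd_trans (pow_rootMultiplicity_dvd g r) hgp'
      have := (le_rootMultiplicity_iff hp').mpr h1
      omega
    · have h1 : (X - C r) ^ (rootMultiplicity r p - 1) ∣ p := by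
        refine dvd_trans (pow_dvd_pow _ ?_) (pow_rootMultiplicity_dvd p r)
        omega
      have h2 : (X - C r) ^ (rootMultiplicity r p - 1) ∣ derivative p := by
        rw [← hder]; exact pow_rootMultiplicity_dvd _ r
      have h3 : (X - C r) ^ (rootMultiplicity r p - 1) ∣ g :=
        EuclideanDomain.dvd_gcd h1 h2
      exact (le_rootMultiplicity_iff hg0).mpr h3
  have hsub : g.roots.toFinset ⊆ T := by
    intro r hr
    rw [Multiset.mem_toFinset, mem_roots hg0] at hr
    rw [hT, Multiset.mem_toFinset, mem_roots hp]
    exact hr.dvd hgp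
  have hgdeg : g.natDegree = g.roots.card :=
    ((splits_iff_card_roots).mp (IsAlgClosed.splits g)).symm
  have hpdeg : p.natDegree = p.roots.card :=
    ((splits_iff_card_roots).mp (IsAlgClosed.splits p)).symm
  have hgsum : g.roots.card = ∑ r ∈ T, (rootMultiplicity r p - 1) := by
    rw [← Multiset.toFinset_sum_count_eq g.roots]
    rw [Finset.sum_subset hsub]
    · exact Finset.sum_congr rfl fun r hr => by rw [count_roots]; exact hmult r hr
    · intro r _ hr
      rw [Multiset.count_eq_zero_of_notMem]
      simpa using hr
  have hpsum : p.roots.card = ∑ r ∈ T, rootMultiplicity r p := by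
    rw [← Multiset.toFinset_sum_count_eq p.roots]
    exact Finset.sum_congr rfl fun r _ => by rw [count_roots]
  have hpos : ∀ r ∈ T, 1 ≤ rootMultiplicity r p := by
    intro r hr
    rw [hT, Multiset.mem_toFinset, mem_roots hp] at hr
    exact (rootMultiplicity_pos hp).mpr hr
  have hkey : g.natDegree + T.card = p.natDegree := by
    rw [hgdeg, hpdeg, hgsum, hpsum, Finset.card_eq_sum_ones, ← Finset.sum_add_distrib]
    exact Finset.sum_congr rfl fun r hr => Nat.sub_add_cancel (hpos r hr)
  omega

set_option maxHeartbeats 1000000 in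
/-- There is `d > 0` and a finite set `C ⊆ ℂ` such that the pencil `b₁ + z·b₂` has
exactly `d` distinct eigenvalues for every `z` outside `C`. -/
theorem pencil_generic_eigenvalue_count (n : ℕ) (hn : 0 < n)
    (c b₁ b₂ : Matrix (Fin n) (Fin n) ℂ)
    (hb₁ : b₁ = (1 / 2 : ℂ) • (c + cᴴ))
    (hb₂ : b₂ = (1 / (2 * Complex.I)) • (c - cᴴ)) :
    ∃ d : ℕ, 0 < d ∧ ∃ C : Finset ℂ,
      ∀ z : ℂ, z ∉ C → (spectrum ℂ (b₁ + z • b₂)).ncard = d := by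
  classical
  clear hb₁ hb₂
  set F := FractionRing (Polynomial ℂ) with hF
  set ι : Polynomial ℂ →+* F := algebraMap (Polynomial ℂ) F with hιdef
  have hι : Function.Injective ι := IsFractionRing.injective (Polynomial ℂ) F
  haveI : CharZero F := charZero_of_injective_algebraMap hι
  set N : Matrix (Fin n) (Fin n) (Polynomial ℂ) := b₁.map C + (X : ℂ[X]) • b₂.map C with hN
  set P : Polynomial (Polynomial ℂ) := N.charpoly with hP
  have hPmonic : P.Monic := N.charpoly_monic
  have hPdeg : P.natDegree = n := by
    rw [hP, N.charpoly_natDegree_eq_dim, Fintype.card_fin]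
  have hspec : ∀ z : ℂ, (b₁ + z • b₂).charpoly = P.map (evalRingHom z) := by
    intro z
    rw [hP, ← Matrix.charpoly_map]
    congr 1
    ext i j
    simp only [hN, Matrix.map_apply, Matrix.add_apply, Matrix.smul_apply, eval_add,
      coe_evalRingHom, eval_mul, eval_C, eval_X, smul_eq_mul]
  -- scalar-multiplication as C-multiplication
  have smulC : ∀ (r : Polynomial ℂ) (q : Polynomial F), r • q = C (ι r) * q := by
    intro r q
    rw [Algebra.smul_def, Polynomial.algebraMap_apply]
  -- the pencil over the rational function field
  set PF : Polynomial F := P.map ι with hPF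
  have hPFmonic : PF.Monic := hPmonic.map ι
  have hPFdeg : PF.natDegree = n := by
    rw [hPF, hPmonic.natDegree_map, hPdeg]
  have hPF0 : PF ≠ 0 := hPFmonic.ne_zero
  have hPF'0 : derivative PF ≠ 0 := by
    intro h
    have := natDegree_eq_zero_of_derivative_eq_zero h
    omega
  set G : Polynomial F := EuclideanDomain.gcd PF (derivative PF) with hGdef
  have hG0 : G ≠ 0 := by
    rw [hGdef, Ne, EuclideanDomain.gcd_eq_zero_iff]
    tauto
  set g : ℕ := G.natDegree with hgdef
  have hglt : g < n := by
    have h1 : g ≤ (derivative PF).natDegree :=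
      natDegree_le_of_dvd (EuclideanDomain.gcd_dvd_right _ _) hPF'0
    have h2 : (derivative PF).natDegree < PF.natDegree :=
      natDegree_derivative_lt (by omega)
    omega
  -- clear denominators
  obtain ⟨Q, hQ⟩ : G ∣ PF := EuclideanDomain.gcd_dvd_left _ _
  obtain ⟨Q', hQ'⟩ : G ∣ derivative PF := EuclideanDomain.gcd_dvd_right _ _
  set A : Polynomial F := EuclideanDomain.gcdA PF (derivative PF) with hA
  set B : Polynomial F := EuclideanDomain.gcdB PF (derivative PF) with hB
  have bez : G = PF * A + derivative PF * B := EuclideanDomain.gcd_eq_gcd_ab PF (derivative PF)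
  set M := nonZeroDivisors (Polynomial ℂ) with hM
  set G₀ := IsLocalization.integerNormalization M G with hG₀
  set Q₀ := IsLocalization.integerNormalization M Q with hQ₀
  set Q₀' := IsLocalization.integerNormalization M Q' with hQ₀'
  set A₀ := IsLocalization.integerNormalization M A with hA₀
  set B₀ := IsLocalization.integerNormalization M B with hB₀
  obtain ⟨δ, hδ⟩ := IsLocalization.integerNormalization_map_to_map M G
  obtain ⟨γ, hγ⟩ := IsLocalization.integerNormalization_map_to_map M Q
  obtain ⟨γ', hγ'⟩ := IsLocalization.integerNormalization_map_to_map M Q'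
  obtain ⟨α, hα⟩ := IsLocalization.integerNormalization_map_to_map M A
  obtain ⟨β, hβ⟩ := IsLocalization.integerNormalization_map_to_map M B
  rw [smulC] at hδ hγ hγ' hα hβ
  have hψ : Function.Injective (Polynomial.map ι) := Polynomial.map_injective ι hι
  -- the three key identities over (ℂ[z])[X]
  have e1 : G₀ * Q₀ = C ((δ : Polynomial ℂ) * γ) * P := by
    apply hψ
    rw [Polynomial.map_mul, Polynomial.map_mul, Polynomial.map_C, hδ, hγ, RingHom.map_mul ι, C_mul]
    rw [show P.map ι = G * Q from hQ]
    ring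
  have e2 : G₀ * Q₀' = C ((δ : Polynomial ℂ) * γ') * derivative P := by
    apply hψ
    rw [Polynomial.map_mul, Polynomial.map_mul, Polynomial.map_C, hδ, hγ', RingHom.map_mul ι, C_mul]
    rw [← derivative_map, show derivative PF = G * Q' from hQ']
    ring
  have e3 : C ((α : Polynomial ℂ) * β) * G₀
      = C ((β : Polynomial ℂ) * δ) * (P * A₀) + C ((α : Polynomial ℂ) * δ) * (derivative P * B₀) := by
    apply hψ
    rw [Polynomial.map_add, Polynomial.map_mul, Polynomial.map_mul, Polynomial.map_mul,
      Polynomial.map_mul, Polynomial.map_mul, Polynomial.map_C, Polynomial.map_C,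
      Polynomial.map_C, hδ, hα, hβ, bez, hPF, derivative_map]
    rw [RingHom.map_mul ι, RingHom.map_mul ι, RingHom.map_mul ι, C_mul, C_mul, C_mul]
    ring
  -- degree bookkeeping for G₀
  have hG₀map : G₀.map ι = C (ι δ) * G := hδ
  have hG₀0 : G₀ ≠ 0 := by
    intro h
    apply mul_ne_zero (C_ne_zero.mpr (fun hc => nonZeroDivisors.coe_ne_zero δ (hι (by simpa using hc)))) hG0
    rw [← hG₀map, h, Polynomial.map_zero]
  have hG₀deg : G₀.natDegree = g := by
    have h1 : (G₀.map ι).natDegree = G₀.natDegree := natDegree_map_eq_of_injective hι G₀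
    rw [hG₀map] at h1
    rw [← h1, natDegree_C_mul]
    intro hc
    exact nonZeroDivisors.coe_ne_zero δ (hι (by simpa using hc))
  -- the bad set
  set W : Polynomial ℂ := (δ : Polynomial ℂ) * α * β * γ * γ' * G₀.leadingCoeff with hW
  have hW0 : W ≠ 0 := by
    refine mul_ne_zero (mul_ne_zero (mul_ne_zero (mul_ne_zero (mul_ne_zero ?_ ?_) ?_) ?_) ?_) ?_
    · exact nonZeroDivisors.coe_ne_zero δ
    · exact nonZeroDivisors.coe_ne_zero α
    · exact nonZeroDivisors.coe_ne_zero β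
    · exact nonZeroDivisors.coe_ne_zero γ
    · exact nonZeroDivisors.coe_ne_zero γ'
    · exact leadingCoeff_ne_zero.mpr hG₀0
  refine ⟨n - g, by omega, W.roots.toFinset, ?_⟩
  intro z hz
  have hWz : W.eval z ≠ 0 := by
    intro h
    exact hz (Multiset.mem_toFinset.mpr ((mem_roots hW0).mpr h))
  rw [hW] at hWz
  simp only [eval_mul, mul_ne_zero_iff] at hWz
  obtain ⟨⟨⟨⟨⟨hδz, hαz⟩, hβz⟩, hγz⟩, hγ'z⟩, hLz⟩ := hWz
  set ev : Polynomial ℂ →+* ℂ := evalRingHom z with hev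
  set p : Polynomial ℂ := P.map ev with hpdef
  have hps : (b₁ + z • b₂).charpoly = p := hspec z
  have hpmonic : p.Monic := hPmonic.map ev
  have hpdeg : p.natDegree = n := by rw [hpdef, hPmonic.natDegree_map, hPdeg]
  have hp0 : p ≠ 0 := hpmonic.ne_zero
  have hp'0 : derivative p ≠ 0 := by
    intro h
    have := natDegree_eq_zero_of_derivative_eq_zero h
    omega
  set Gz : Polynomial ℂ := G₀.map ev with hGz
  have hGzcoeff : Gz.coeff g ≠ 0 := by
    rw [hGz, coeff_map]
    have : G₀.coeff g = G₀.leadingCoeff := by rw [Polynomial.leadingCoeff, hG₀deg]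
    rw [this]
    exact hLz
  have hGzdeg : Gz.natDegree = g := by
    refine le_antisymm ?_ (le_natDegree_of_ne_zero hGzcoeff)
    rw [← hG₀deg]
    exact natDegree_map_le
  have hGz0 : Gz ≠ 0 := fun h => hGzcoeff (by rw [h, coeff_zero])
  -- Gz divides p and its derivative
  have hdvd1 : Gz ∣ p := by
    have e1z := congrArg (Polynomial.map ev) e1
    rw [Polynomial.map_mul, Polynomial.map_mul, Polynomial.map_C] at e1z
    set e : ℂ := ev ((δ : Polynomial ℂ) * γ) with hee
    have he : e ≠ 0 := by
      rw [hee]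
      simpa [hev] using mul_ne_zero hδz hγz
    refine ⟨C e⁻¹ * Q₀.map ev, ?_⟩
    calc p = C e⁻¹ * (C e * p) := by
          rw [← mul_assoc, ← C_mul, inv_mul_cancel₀ he, C_1, one_mul]
      _ = C e⁻¹ * (Gz * Q₀.map ev) := by rw [← e1z]
      _ = Gz * (C e⁻¹ * Q₀.map ev) := by ring
  have hderiv_map : (derivative P).map ev = derivative p := (derivative_map P ev).symm
  have hdvd2 : Gz ∣ derivative p := by
    have e2z := congrArg (Polynomial.map ev) e2
    rw [Polynomial.map_mul, Polynomial.map_mul, Polynomial.map_C, hderiv_map] at e2z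
    set e : ℂ := ev ((δ : Polynomial ℂ) * γ') with hee
    have he : e ≠ 0 := by
      rw [hee]
      simpa [hev] using mul_ne_zero hδz hγ'z
    refine ⟨C e⁻¹ * Q₀'.map ev, ?_⟩
    calc derivative p = C e⁻¹ * (C e * derivative p) := by
          rw [← mul_assoc, ← C_mul, inv_mul_cancel₀ he, C_1, one_mul]
      _ = C e⁻¹ * (Gz * Q₀'.map ev) := by rw [← e2z]
      _ = Gz * (C e⁻¹ * Q₀'.map ev) := by ring
  set gcdz := EuclideanDomain.gcd p (derivative p) with hgcdz
  have hgcd0 : gcdz ≠ 0 := by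
    rw [hgcdz, Ne, EuclideanDomain.gcd_eq_zero_iff]
    tauto
  have hge : g ≤ gcdz.natDegree := by
    rw [← hGzdeg]
    exact natDegree_le_of_dvd (EuclideanDomain.dvd_gcd hdvd1 hdvd2) hgcd0
  have hle : gcdz.natDegree ≤ g := by
    have e3z := congrArg (Polynomial.map ev) e3
    rw [Polynomial.map_add, Polynomial.map_mul, Polynomial.map_mul, Polynomial.map_mul,
      Polynomial.map_mul, Polynomial.map_mul, Polynomial.map_C, Polynomial.map_C,
      Polynomial.map_C, hderiv_map] at e3z
    have hc₁ : ev ((α : Polynomial ℂ) * β) ≠ 0 := by simpa [hev] using mul_ne_zero hαz hβz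
    have hdvd3 : gcdz ∣ C (ev ((α : Polynomial ℂ) * β)) * Gz := by
      rw [e3z]
      exact dvd_add
        ((EuclideanDomain.gcd_dvd_left p (derivative p)).mul_right _ |>.mul_left _)
        ((EuclideanDomain.gcd_dvd_right p (derivative p)).mul_right _ |>.mul_left _)
    have := natDegree_le_of_dvd hdvd3
      (mul_ne_zero (C_ne_zero.mpr hc₁) hGz0)
    rwa [natDegree_C_mul hc₁, hGzdeg] at this
  have hgcddeg : gcdz.natDegree = g := le_antisymm hle hge
  rw [spectrum_eq_roots', Set.ncard_coe_finset, hps,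
    card_roots_eq' p hp0 (by omega), hpdeg, ← hgcdz, hgcddeg]
end
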